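/- arXiv:2407.14368 — 11 statements merged into one kernel-verified Lean document; each statement's English description precedes it below -/
import Mathlib

section
/- Let ℓ ≥ 1, k ≥ 0, c > 0 and real numbers x_1,...,x_ℓ, ξ_1,...,ξ_k satisfy: x_i < c for all i; x_i + x_j ≥ c for all i ≠ j; x_i + ξ_j ≥ c for all i, j; and ξ_1 + ⋯ + ξ_k < c. Then 𝔏_c(x_1,...,x_ℓ,ξ_1,...,ξ_k) = (-1)^(ℓ+k+1) (ℓ-1)! ℓ^k. -/
open scoped Classical

/-- The truncated Linnik function `𝔏_c(x)`: the sum over `j ≥ 1` of `(-1)^(j+1)/j` times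
the number of decompositions of `x` into an ordered `j`-tuple of nonempty disjoint
subvectors (equivalently, surjections of the index set onto `Fin j`) such that the sum of
components of each block is `< c`. -/
noncomputable def LinnikOn (c : ℝ) {ι : Type*} [Fintype ι] (x : ι → ℝ) : ℝ :=
  ∑ j ∈ Finset.Icc 1 (Fintype.card ι),
    ((-1 : ℝ) ^ (j + 1) / (j : ℝ)) *
      (Nat.card {π : ι → Fin j // Function.Surjective π ∧
        ∀ i : Fin j, (∑ a ∈ Finset.univ.filter (fun a => π a = i), x a) < c} : ℝ)

/-!
The `ξ`'s are nonnegative, and two `x`'s, or an `x` and a `ξ`, already sum to at least `c`;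
hence all block sums are `< c` exactly when every `x_i` is a block of its own. Such ordered
decompositions into `j` blocks number `j(j-1)⋯(j-ℓ+1) · S(k, j-ℓ)`, where `S(k, m)` counts the
surjections `[k] → [m]`, and with `j = ℓ + m` the Linnik sum becomes
`(-1)^(ℓ-1) (ℓ-1)! Σ_m (-1)^m C(ℓ-1+m, m) S(k, m)`. Classifying maps `[k] → [n]` by their image
gives `Σ_m S(k, m) C(n, m) = n^k` for all `n ∈ ℕ`, i.e. the polynomial identity
`X^k = Σ_m S(k, m) / m! · X(X-1)⋯(X-m+1)`; at `X = -ℓ` the falling factorial divided by `m!` is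
`(-1)^m C(ℓ-1+m, m)`, so the last sum is `(-ℓ)^k`.
-/

open Finset Function

noncomputable def surjCount (k m : ℕ) : ℕ :=
  Nat.card {f : Fin k → Fin m // Surjective f}

theorem card_surjective_eq_surjCount (α β : Type*) [Fintype α] [Fintype β] :
    Nat.card {f : α → β // Surjective f} = surjCount (Fintype.card α) (Fintype.card β) :=
  Nat.card_congr <| (Equiv.arrowCongr (Fintype.equivFin α) (Fintype.equivFin β)).subtypeEquiv
    fun f => ((Equiv.comp_surjective _ _).trans (Equiv.surjective_comp _ f)).symm

theorem surjCount_eq_zero_of_lt {k m : ℕ} (h : k < m) : surjCount k m = 0 := by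
  rw [surjCount, Nat.card_eq_zero]
  refine Or.inl ⟨fun f => ?_⟩
  have := Fintype.card_le_of_surjective _ f.2
  simp only [Fintype.card_fin] at this
  omega

def imageEqEquivSurjective {α β : Type*} [Fintype α] [DecidableEq β] (T : Finset β) :
    {f : α → β // univ.image f = T} ≃ {g : α → T // Surjective g} where
  toFun f := ⟨fun a => ⟨f.1 a, f.2.subset (mem_image_of_mem _ (mem_univ a))⟩, fun y => by
    obtain ⟨a, -, ha⟩ := mem_image.mp (f.2.symm.subset y.2)
    exact ⟨a, Subtype.ext ha⟩⟩
  invFun g := ⟨fun a => g.1 a, by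
    ext y
    simp only [mem_image, mem_univ, true_and]
    refine ⟨fun ⟨a, ha⟩ => ha ▸ (g.1 a).2, fun hy => ?_⟩
    obtain ⟨a, ha⟩ := g.2 ⟨y, hy⟩
    exact ⟨a, congrArg Subtype.val ha⟩⟩
  left_inv _ := rfl
  right_inv _ := rfl

theorem sum_surjCount_mul_choose' (k n : ℕ) :
    ∑ m ∈ range (n + 1), surjCount k m * n.choose m = n ^ k := by
  have hfib : ∀ T : Finset (Fin n),
      Nat.card {f : Fin k → Fin n // univ.image f = T} = surjCount k #T := fun T => by
    rw [Nat.card_congr (imageEqEquivSurjective T), card_surjective_eq_surjCount]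
    simp
  calc ∑ m ∈ range (n + 1), surjCount k m * n.choose m
      = ∑ T : Finset (Fin n), surjCount k #T := by
        rw [← powerset_univ, sum_powerset_apply_card, card_univ, Fintype.card_fin]
        simp only [smul_eq_mul, mul_comm]
    _ = Nat.card (Fin k → Fin n) := by
        rw [← Nat.card_congr (Equiv.sigmaFiberEquiv fun f : Fin k → Fin n => univ.image f),
          Nat.card_sigma]
        exact sum_congr rfl fun T _ => (hfib T).symm
    _ = n ^ k := by simp

theorem sum_surjCount_mul_choose (k n : ℕ) :
    ∑ m ∈ range (k + 1), surjCount k m * n.choose m = n ^ k := by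
  have hvanish : ∀ m ≥ min k n + 1, surjCount k m * n.choose m = 0 := fun m hm => by
    rcases min_choice k n with h | h <;> rw [h] at hm
    · rw [surjCount_eq_zero_of_lt (by omega), zero_mul]
    · rw [Nat.choose_eq_zero_of_lt (by omega), mul_zero]
  rw [← sum_surjCount_mul_choose' k n]
  exact (eventually_constant_sum hvanish (by omega)).trans
    (eventually_constant_sum hvanish (by omega)).symm

section Polynomial

open Polynomial Nat

theorem descPochhammer_eval_neg_natCast_add_one {R : Type*} [Ring R] (L m : ℕ) :
    (descPochhammer R m).eval (-(L + 1 : R)) = (-1) ^ m * (L + m).descFactorial m := by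
  have hasc : (ascPochhammer R m).eval (L + 1 : R) = (L + m).descFactorial m := by
    rw [← Nat.cast_add_one, ascPochhammer_nat_eq_natCast_descFactorial, Nat.add_right_comm,
      Nat.add_sub_cancel]
  have h := ascPochhammer_eval_neg_eq_descPochhammer R (-(L + 1 : R)) m
  rw [neg_neg, hasc] at h
  rw [h, ← mul_assoc, ← pow_add, Even.neg_one_pow ⟨m, rfl⟩, one_mul]

variable {K : Type*} [Field K] [CharZero K]

theorem X_pow_eq_sum_surjCount_descPochhammer (k : ℕ) :
    (X ^ k : K[X]) = ∑ m ∈ range (k + 1), C ((surjCount k m : K) / m !) * descPochhammer K m := by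
  refine eq_of_infinite_eval_eq _ _ ((Set.infinite_range_of_injective Nat.cast_injective).mono ?_)
  rintro _ ⟨n, rfl⟩
  simp only [Set.mem_ofPred_eq, eval_pow, eval_X, eval_finsetSum, eval_mul, eval_C,
    descPochhammer_eval_eq_descFactorial, descFactorial_eq_factorial_mul_choose]
  rw [← Nat.cast_pow, ← sum_surjCount_mul_choose k n]
  push_cast
  refine sum_congr rfl fun m _ => ?_
  have : (m ! : K) ≠ 0 := Nat.cast_ne_zero.mpr m.factorial_ne_zero
  field_simp

theorem sum_neg_one_pow_mul_choose_mul_surjCount (k L : ℕ) :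
    ∑ m ∈ range (k + 1), (-1 : K) ^ m * (L + m).choose m * surjCount k m = (-(L + 1 : K)) ^ k := by
  rw [← eval_X (R := K) (x := -(L + 1 : K)), ← eval_pow, X_pow_eq_sum_surjCount_descPochhammer,
    eval_finsetSum]
  refine sum_congr rfl fun m _ => ?_
  rw [eval_mul, eval_C, descPochhammer_eval_neg_natCast_add_one,
    descFactorial_eq_factorial_mul_choose]
  push_cast
  have : (m ! : K) ≠ 0 := Nat.cast_ne_zero.mpr m.factorial_ne_zero
  field_simp

end Polynomial

section Isolating

variable {α γ β : Type*}

def IsolatesInl (π : α ⊕ γ → β) : Prop :=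
  ∀ a e, π e = π (.inl a) → e = .inl a

def isolatesInlEquiv :
    {π : α ⊕ γ → β // Surjective π ∧ IsolatesInl π} ≃
      Σ g : α ↪ β, {h : γ → ↥(Set.range g)ᶜ // Surjective h} where
  toFun π :=
    ⟨⟨π.1 ∘ .inl, fun a a' h => Sum.inl_injective (π.2.2 a' (.inl a) h)⟩,
      fun b => ⟨π.1 (.inr b), fun ⟨a, ha⟩ => Sum.inr_ne_inl (π.2.2 a (.inr b) ha.symm)⟩,
      fun ⟨y, hy⟩ => by
        obtain ⟨e | b, he⟩ := π.2.1 y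
        · exact absurd ⟨e, he⟩ hy
        · exact ⟨b, Subtype.ext he⟩⟩
  invFun gh := by
    refine ⟨Sum.elim gh.1 fun b => (gh.2.1 b).1, fun y => ?_, fun a e he => ?_⟩
    · by_cases hy : y ∈ Set.range gh.1
      · obtain ⟨a, rfl⟩ := hy
        exact ⟨.inl a, rfl⟩
      · obtain ⟨b, hb⟩ := gh.2.2 ⟨y, hy⟩
        exact ⟨.inr b, congrArg Subtype.val hb⟩
    · cases e with
      | inl a' => exact congrArg Sum.inl (gh.1.injective he)
      | inr b => exact absurd ⟨a, he.symm⟩ (gh.2.1 b).2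
  left_inv π := Subtype.ext <| funext fun e => by cases e <;> rfl
  right_inv _ := rfl

theorem card_surjective_isolatesInl [Fintype α] [Fintype γ] [Fintype β] :
    Nat.card {π : α ⊕ γ → β // Surjective π ∧ IsolatesInl π} =
      (Fintype.card β).descFactorial (Fintype.card α) *
        surjCount (Fintype.card γ) (Fintype.card β - Fintype.card α) := by
  rw [Nat.card_congr isolatesInlEquiv, Nat.card_sigma]
  have hfib : ∀ g : α ↪ β, Nat.card {h : γ → ↥(Set.range g)ᶜ // Surjective h} =
      surjCount (Fintype.card γ) (Fintype.card β - Fintype.card α) := fun g => by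
    rw [card_surjective_eq_surjCount, Fintype.card_compl_set,
      Set.card_range_of_injective g.injective]
  simp only [hfib, sum_const, card_univ, Fintype.card_embedding_eq, smul_eq_mul]

end Isolating

section Blocks

variable {α γ β : Type*} [Fintype α] [Fintype γ] [DecidableEq β] {c : ℝ}
  {x : α → ℝ} {ξ : γ → ℝ}

theorem blockSums_lt_iff_isolatesInl (hx : ∀ a, x a < c)
    (hxx : ∀ a a', a ≠ a' → c ≤ x a + x a') (hxξ : ∀ a b, c ≤ x a + ξ b)
    (hξ₀ : ∀ b, 0 ≤ ξ b) (hξ : ∑ b, ξ b < c) (π : α ⊕ γ → β) :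
    (∀ i, ∑ e ∈ univ.filter (fun e => π e = i), Sum.elim x ξ e < c) ↔ IsolatesInl π := by
  constructor
  · intro hblock a e he
    by_contra hne
    set s := univ.filter (fun e' => π e' = π (.inl a))
    have hlow : ∀ e' ∈ s.erase (.inl a), c - x a ≤ Sum.elim x ξ e' := by
      intro e' he'
      cases e' with
      | inl a' =>
        have := hxx a a' fun h => (mem_erase.mp he').1 (h ▸ rfl)
        simp only [Sum.elim_inl]
        linarith
      | inr b =>
        have := hxξ a b
        simp only [Sum.elim_inr]
        linarith
    have hmem : e ∈ s.erase (.inl a) := mem_erase.mpr ⟨hne, by simp [s, he]⟩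
    have hge : c ≤ ∑ e' ∈ s, Sum.elim x ξ e' :=
      calc c ≤ x a + Sum.elim x ξ e := by linarith [hlow e hmem]
        _ ≤ x a + ∑ e' ∈ s.erase (.inl a), Sum.elim x ξ e' := by
          gcongr
          exact single_le_sum (fun e' he' => by linarith [hlow e' he', hx a]) hmem
        _ = ∑ e' ∈ s, Sum.elim x ξ e' :=
          add_sum_erase s (Sum.elim x ξ) (mem_filter.mpr ⟨mem_univ _, rfl⟩)
    exact (hblock _).not_ge hge
  · intro hiso i
    by_cases hi : ∃ a, π (.inl a) = i
    · obtain ⟨a, rfl⟩ := hi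
      have hblock : univ.filter (fun e => π e = π (.inl a)) = {.inl a} := by
        ext e
        simp only [mem_filter, mem_univ, true_and, mem_singleton]
        exact ⟨hiso a e, fun h => h ▸ rfl⟩
      simpa [hblock] using hx a
    · rw [not_exists] at hi
      calc ∑ e ∈ univ.filter (fun e => π e = i), Sum.elim x ξ e
          = ∑ e ∈ univ.filter (fun e => π e = i), Sum.elim 0 ξ e := sum_congr rfl fun e he => by
            cases e with
            | inl a => exact absurd (mem_filter.mp he).2 (hi a)
            | inr b => rfl
        _ ≤ ∑ e, Sum.elim 0 ξ e := sum_le_univ_sum_of_nonneg fun e => by cases e <;> simp [hξ₀]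
        _ = ∑ b, ξ b := by simp [Fintype.sum_sum_type]
        _ < c := hξ

theorem card_surjective_blockSums_lt [Fintype β] (hx : ∀ a, x a < c)
    (hxx : ∀ a a', a ≠ a' → c ≤ x a + x a') (hxξ : ∀ a b, c ≤ x a + ξ b)
    (hξ₀ : ∀ b, 0 ≤ ξ b) (hξ : ∑ b, ξ b < c) :
    Nat.card {π : α ⊕ γ → β // Surjective π ∧
        ∀ i, ∑ e ∈ univ.filter (fun e => π e = i), Sum.elim x ξ e < c} =
      (Fintype.card β).descFactorial (Fintype.card α) *
        surjCount (Fintype.card γ) (Fintype.card β - Fintype.card α) := by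
  rw [← card_surjective_isolatesInl]
  exact Nat.card_congr <| Equiv.subtypeEquivRight fun π =>
    and_congr_right' (blockSums_lt_iff_isolatesInl hx hxx hxξ hξ₀ hξ π)

end Blocks

theorem linnikOn_comp_equiv {ι κ : Type*} [Fintype ι] [Fintype κ] (c : ℝ) (e : ι ≃ κ)
    (x : κ → ℝ) : LinnikOn c (x ∘ e) = LinnikOn c x := by
  unfold LinnikOn
  rw [Fintype.card_congr e]
  refine sum_congr rfl fun j _ => ?_
  congr 2
  refine Nat.card_congr <| (Equiv.arrowCongr e (Equiv.refl _)).subtypeEquiv fun π => ?_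
  refine and_congr (Equiv.surjective_comp e.symm π).symm (forall_congr' fun i => ?_)
  rw [sum_filter, sum_filter, ← e.sum_comp]
  simp [Equiv.arrowCongr_apply]

theorem sum_Icc_alternating_descFactorial_mul_surjCount (ℓ k : ℕ) (hℓ : 1 ≤ ℓ) :
    ∑ j ∈ Icc 1 (ℓ + k),
        (-1 : ℝ) ^ (j + 1) / j * ((j.descFactorial ℓ * surjCount k (j - ℓ) : ℕ) : ℝ) =
      (-1) ^ (ℓ + k + 1) * ((ℓ - 1).factorial : ℝ) * (ℓ : ℝ) ^ k := by
  obtain ⟨L, rfl⟩ : ∃ L, ℓ = L + 1 := ⟨ℓ - 1, by omega⟩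
  set F : ℕ → ℝ := fun j =>
    (-1 : ℝ) ^ (j + 1) / j * ((j.descFactorial (L + 1) * surjCount k (j - (L + 1)) : ℕ) : ℝ)
  have hsmall : ∀ j < L + 1, F j = 0 := fun j hj => by
    simp only [F, Nat.descFactorial_eq_zero_iff_lt.mpr hj, zero_mul, Nat.cast_zero, mul_zero]
  have hterm : ∀ m, F (L + 1 + m) =
      (-1 : ℝ) ^ L * L.factorial * ((-1) ^ m * (L + m).choose m * surjCount k m) := fun m => by
    have hdesc : (L + 1 + m).descFactorial (L + 1) =
        (L + 1 + m) * (L.factorial * (L + m).choose m) := by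
      rw [show L + 1 + m = L + m + 1 by omega, Nat.succ_descFactorial_succ,
        Nat.descFactorial_eq_factorial_mul_choose, Nat.choose_symm_add]
    simp only [F, hdesc, Nat.add_sub_cancel_left]
    push_cast
    field_simp
    ring
  calc ∑ j ∈ Icc 1 (L + 1 + k), F j
      = ∑ j ∈ range (L + 1 + (k + 1)), F j := by
        refine sum_subset (fun j hj => ?_) fun j hr hj => hsmall j ?_ <;>
          simp only [mem_Icc, mem_range, not_and_or, not_le] at * <;> omega
    _ = (-1 : ℝ) ^ L * L.factorial *
          ∑ m ∈ range (k + 1), (-1 : ℝ) ^ m * (L + m).choose m * surjCount k m := by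
        rw [sum_range_add, sum_eq_zero fun j hj => hsmall j (mem_range.mp hj), zero_add, mul_sum]
        exact sum_congr rfl fun m _ => hterm m
    _ = _ := by
        rw [sum_neg_one_pow_mul_choose_mul_surjCount, neg_pow (L + 1 : ℝ), Nat.add_sub_cancel]
        push_cast
        ring

theorem linnik_special_eval_general (ℓ k : ℕ) (hℓ : 1 ≤ ℓ) (c : ℝ)
    (x : Fin ℓ → ℝ) (ξ : Fin k → ℝ)
    (hx : ∀ i, x i < c)
    (hxx : ∀ i j, i ≠ j → c ≤ x i + x j)
    (hxξ : ∀ i j, c ≤ x i + ξ j)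
    (hξ : ∑ j, ξ j < c) :
    LinnikOn c (Fin.append x ξ) =
      (-1 : ℝ) ^ (ℓ + k + 1) * ((ℓ - 1).factorial : ℝ) * (ℓ : ℝ) ^ k := by
  have hξ₀ : ∀ b, 0 ≤ ξ b := fun b => by linarith [hx ⟨0, hℓ⟩, hxξ ⟨0, hℓ⟩ b]
  have hsum : LinnikOn c (Fin.append x ξ) = LinnikOn c (Sum.elim x ξ) := by
    rw [← linnikOn_comp_equiv c finSumFinEquiv, ← Fin.append_comp_sumElim]
    rfl
  rw [hsum, LinnikOn]
  simp only [card_surjective_blockSums_lt hx hxx hxξ hξ₀ hξ, Fintype.card_sum, Fintype.card_fin]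
  exact sum_Icc_alternating_descFactorial_mul_surjCount ℓ k hℓ

/-- If `ℓ ≥ 1`, `k ≥ 0`, `c > 0` and `x₁,…,x_ℓ, ξ₁,…,ξ_k` satisfy
`x i < c`, `x i + x j ≥ c` for `i ≠ j`, `x i + ξ j ≥ c` for all `i,j`, and
`ξ₁ + ⋯ + ξ_k < c`, then `𝔏_c(x₁,…,x_ℓ,ξ₁,…,ξ_k) = (-1)^(ℓ+k+1) (ℓ-1)! ℓ^k`. -/
theorem linnik_special_eval (ℓ k : ℕ) (hℓ : 1 ≤ ℓ) (c : ℝ) (hc : 0 < c)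
    (x : Fin ℓ → ℝ) (ξ : Fin k → ℝ)
    (hx : ∀ i, x i < c)
    (hxx : ∀ i j, i ≠ j → c ≤ x i + x j)
    (hxξ : ∀ i j, c ≤ x i + ξ j)
    (hξ : ∑ j, ξ j < c) :
    LinnikOn c (Fin.append x ξ) =
      (-1 : ℝ) ^ (ℓ + k + 1) * ((ℓ - 1).factorial : ℝ) * (ℓ : ℝ) ^ k :=
  linnik_special_eval_general ℓ k hℓ c x ξ hx hxx hxξ hξ
end

section
/- Let m, k be positive integers and c > 0. If x is a vector of dimension k with sum of components |x| ≥ mc, then Σ_{r=1}^{k} (m^r / r!) Σ_{u_1 ⊔ ⋯ ⊔ u_r = x} 𝔏_c(u_1) ⋯ 𝔏_c(u_r) = 0, where the inner sum runs over all r^k decompositions of x into an ordered r-tuple of (possibly empty) subvectors. -/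
open scoped Classical

/-!
Write `S_n(x)` for the number of surjections from the coordinates of `x` onto `Fin n` whose
fibres all have mass `< c`, so that `𝔏_c = ∑_j (-1)^(j+1)/j · S_j`. Splitting a surjection onto
`Σ i, Fin (g i)` along the first component gives `∑_π ∏_i S_{g i}(x|π⁻¹ i) = S_{∑ g}(x)`; hence,
for the linear functional `Φ p = ∑_n S_n(x) · coeff_n p`, the inner sum of the theorem is `Φ (ℓ^r)`
with `ℓ` a truncation of `log (1 + t)`. The outer sum is then `Φ` of a truncation of
`exp (m log (1 + t))`, which agrees with `(1 + t)^m` up to degree `k` because both solve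
`(1 + t) f' = m f` modulo `t^k`. Finally, grouping the maps `x → Fin m` with small fibres by their
image shows that `Φ ((1 + t)^m)` counts them, and there are none since `|x| ≥ m c`.
-/

open Finset Polynomial

noncomputable def logOneAddTrunc (N : ℕ) : ℝ[X] :=
  ∑ j ∈ Icc 1 N, C ((-1 : ℝ) ^ (j + 1) / j) * X ^ j

noncomputable def expMulTrunc (N : ℕ) (a : ℝ) (p : ℝ[X]) : ℝ[X] :=
  ∑ r ∈ range (N + 1), C (a ^ r / r.factorial) * p ^ r

lemma X_dvd_logOneAddTrunc (N : ℕ) : X ∣ logOneAddTrunc N :=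
  dvd_sum fun _ hj => (dvd_pow_self X (Nat.one_le_iff_ne_zero.mp (mem_Icc.mp hj).1)).mul_left _

lemma derivative_logOneAddTrunc_mul (N : ℕ) :
    derivative (logOneAddTrunc N) * (1 + X) = 1 - (-X) ^ N := by
  have hderiv : derivative (logOneAddTrunc N) = ∑ i ∈ range N, (-X) ^ i := by
    rw [logOneAddTrunc, ← Ico_add_one_right_eq_Icc, sum_Ico_eq_sum_range, add_tsub_cancel_right,
      derivative_sum]
    refine sum_congr rfl fun i _ => ?_
    have : ((1 + i : ℕ) : ℝ) ≠ 0 := by positivity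
    rw [derivative_C_mul_X_pow, add_tsub_cancel_left, div_mul_cancel₀ _ this, neg_pow (X : ℝ[X])]
    simp [pow_add]
  have hgeom := geom_sum_mul (-X : ℝ[X]) N
  rw [hderiv]
  linear_combination -hgeom

lemma derivative_expMulTrunc_succ (N : ℕ) (a : ℝ) (p : ℝ[X]) :
    derivative (expMulTrunc (N + 1) a p) = C a * derivative p * expMulTrunc N a p := by
  rw [expMulTrunc, expMulTrunc, derivative_sum, sum_range_succ', mul_sum]
  simp only [derivative_C_mul, derivative_pow, Nat.cast_zero, C_0, zero_mul, mul_zero, add_zero]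
  refine sum_congr rfl fun r _ => ?_
  have hfac : ((r + 1).factorial : ℝ) = (r + 1) * r.factorial := by
    push_cast [Nat.factorial_succ]
    ring
  have hcoeff :
      a ^ (r + 1) / (r + 1).factorial * ((r + 1 : ℕ) : ℝ) = a * (a ^ r / r.factorial) := by
    rw [hfac]
    field_simp
    push_cast
    ring
  rw [add_tsub_cancel_right, ← mul_assoc, ← mul_assoc, ← C_mul, hcoeff, C_mul]
  ring

noncomputable def binomialODE (a : ℝ) (p : ℝ[X]) : ℝ[X] :=
  (1 + X) * derivative p - C a * p

lemma binomialODE_sub (a : ℝ) (p q : ℝ[X]) :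
    binomialODE a (p - q) = binomialODE a p - binomialODE a q := by
  simp only [binomialODE, derivative_sub]
  ring

lemma binomialODE_one_add_X_pow (m : ℕ) : binomialODE m ((1 + X) ^ m) = 0 := by
  cases m with
  | zero => simp [binomialODE]
  | succ m =>
    rw [binomialODE, derivative_pow, derivative_add, derivative_one, derivative_X,
      add_tsub_cancel_right, pow_succ]
    ring

lemma X_pow_dvd_binomialODE_expMulTrunc_logOneAddTrunc (N : ℕ) (a : ℝ) :
    X ^ N ∣ binomialODE a (expMulTrunc N a (logOneAddTrunc N)) := by
  cases N with
  | zero => simp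
  | succ N =>
  set ℓ := logOneAddTrunc (N + 1)
  have hsplit : expMulTrunc (N + 1) a ℓ
      = expMulTrunc N a ℓ + C (a ^ (N + 1) / (N + 1).factorial) * ℓ ^ (N + 1) := by
    rw [expMulTrunc, sum_range_succ]; rfl
  -- `(1 + X) ℓ' = 1 - (-X) ^ (N + 1)`, so only the two truncation errors survive
  have key : binomialODE a (expMulTrunc (N + 1) a ℓ)
      = -(C a * (-X) ^ (N + 1) * expMulTrunc N a ℓ
        + C a * C (a ^ (N + 1) / (N + 1).factorial) * ℓ ^ (N + 1)) := by
    rw [binomialODE, derivative_expMulTrunc_succ, hsplit]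
    linear_combination (C a * expMulTrunc N a ℓ) * derivative_logOneAddTrunc_mul (N + 1)
  rw [key, dvd_neg]
  refine dvd_add ?_ ?_
  · exact ((pow_dvd_pow_of_dvd (dvd_neg.mpr dvd_rfl) _).mul_left _).mul_right _
  · exact (pow_dvd_pow_of_dvd (X_dvd_logOneAddTrunc _) _).mul_left _

lemma X_pow_succ_dvd_of_X_pow_dvd_binomialODE {N : ℕ} {a : ℝ} {d : ℝ[X]}
    (hode : X ^ N ∣ binomialODE a d) (h0 : d.coeff 0 = 0) : X ^ (N + 1) ∣ d := by
  rw [binomialODE, X_pow_dvd_iff] at hode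
  rw [X_pow_dvd_iff]
  intro n hn
  induction n with
  | zero => exact h0
  | succ n ih =>
    have hres := hode n (by omega)
    have hXd : (X * derivative d).coeff n = 0 := by
      cases n with
      | zero => exact coeff_X_mul_zero _
      | succ k => rw [coeff_X_mul, coeff_derivative, ih (by omega), zero_mul]
    rw [coeff_sub, coeff_C_mul, add_mul, one_mul, coeff_add, hXd, coeff_derivative,
      ih (by omega), add_zero, mul_zero, sub_zero] at hres
    exact (mul_eq_zero.mp hres).resolve_right (by positivity)

lemma coeff_zero_expMulTrunc_logOneAddTrunc (N : ℕ) (a : ℝ) :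
    (expMulTrunc N a (logOneAddTrunc N)).coeff 0 = 1 := by
  have hℓ : (logOneAddTrunc N).eval 0 = 0 := by
    rw [← coeff_zero_eq_eval_zero, ← X_dvd_iff]; exact X_dvd_logOneAddTrunc N
  simp [coeff_zero_eq_eval_zero, expMulTrunc, eval_finsetSum, hℓ, sum_range_succ']

theorem X_pow_succ_dvd_expMulTrunc_logOneAddTrunc_sub (N m : ℕ) :
    X ^ (N + 1) ∣ expMulTrunc N m (logOneAddTrunc N) - (1 + X) ^ m := by
  refine X_pow_succ_dvd_of_X_pow_dvd_binomialODE (a := m) ?_ ?_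
  · rw [binomialODE_sub, binomialODE_one_add_X_pow, sub_zero]
    exact X_pow_dvd_binomialODE_expMulTrunc_logOneAddTrunc N m
  · rw [coeff_sub, coeff_zero_expMulTrunc_logOneAddTrunc, coeff_one_add_X_pow,
      Nat.choose_zero_right, Nat.cast_one, sub_self]

section Fibres

variable {ι : Type*} [Fintype ι]

def FibresBelow (c : ℝ) (x : ι → ℝ) {β : Type*} [DecidableEq β] (γ : ι → β) : Prop :=
  ∀ b, ∑ a ∈ univ.filter (fun a => γ a = b), x a < c

abbrev SmallSurj (c : ℝ) (x : ι → ℝ) (β : Type*) [DecidableEq β] : Type _ :=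
  {γ : ι → β // Function.Surjective γ ∧ FibresBelow c x γ}

lemma sum_filter_subtype_eq {p : ι → Prop} [Fintype (Subtype p)] (x : ι → ℝ)
    (q : Subtype p → Prop) [DecidablePred q] (q' : ι → Prop) [DecidablePred q']
    (h : ∀ a, q' a ↔ ∃ ha : p a, q ⟨a, ha⟩) :
    ∑ a ∈ univ.filter q, x a = ∑ a ∈ univ.filter q', x a := by
  rw [show univ.filter q' = (univ.filter q).map (Function.Embedding.subtype p) by ext; simp [h],
    sum_map]
  rfl

lemma Sigma.eq_mk_iff_exists_cast {κ : Type*} {β : κ → Type*} (s : Σ i, β i) (i : κ)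
    (b : β i) : s = ⟨i, b⟩ ↔ ∃ h : s.1 = i, cast (congrArg β h) s.2 = b := by
  obtain ⟨j, s⟩ := s
  constructor
  · rintro ⟨⟩
    exact ⟨rfl, rfl⟩
  · rintro ⟨rfl, rfl⟩
    rfl

variable {κ : Type*} [DecidableEq κ] {β : κ → Type*} [∀ i, DecidableEq (β i)]

def smallSurjSigmaEquiv (c : ℝ) (x : ι → ℝ) :
    SmallSurj c x (Σ i, β i) ≃
      Σ π : ι → κ, ∀ i, SmallSurj c (fun a : {a // π a = i} => x a) (β i) where
  toFun γ := ⟨fun a => (γ.1 a).1, fun i =>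
    ⟨fun a => cast (congrArg β a.2) (γ.1 a).2,
      fun b => by
        obtain ⟨a, ha⟩ := γ.2.1 ⟨i, b⟩
        obtain ⟨h, hb⟩ := (Sigma.eq_mk_iff_exists_cast _ i b).mp ha
        exact ⟨⟨a, h⟩, hb⟩,
      fun b => (sum_filter_subtype_eq x _ _
        fun a => Sigma.eq_mk_iff_exists_cast (γ.1 a) i b).trans_lt (γ.2.2 ⟨i, b⟩)⟩⟩
  invFun p := ⟨fun a => ⟨p.1 a, (p.2 (p.1 a)).1 ⟨a, rfl⟩⟩,
    fun ⟨i, b⟩ => by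
      obtain ⟨⟨a, rfl⟩, ha⟩ := (p.2 i).2.1 b
      exact ⟨a, congrArg (Sigma.mk (p.1 a)) ha⟩,
    fun ⟨i, b⟩ => by
      have hfib : ∀ a, (⟨p.1 a, (p.2 (p.1 a)).1 ⟨a, rfl⟩⟩ : Σ i, β i) = ⟨i, b⟩ ↔
          ∃ ha : p.1 a = i, (p.2 i).1 ⟨a, ha⟩ = b := by
        intro a
        rw [Sigma.eq_mk_iff_exists_cast]
        constructor <;> rintro ⟨rfl, h⟩ <;> exact ⟨rfl, h⟩
      exact (sum_filter_subtype_eq x _ _ hfib).symm.trans_lt ((p.2 i).2.2 b)⟩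
  left_inv γ := rfl
  right_inv p := by
    obtain ⟨π, δ⟩ := p
    refine Sigma.ext rfl (heq_of_eq (funext fun i => Subtype.ext (funext fun a => ?_)))
    obtain ⟨a, rfl⟩ := a
    rfl

end Fibres

section Counting

variable {ι : Type*} [Fintype ι] (c : ℝ) (x : ι → ℝ)

lemma fibresBelow_comp_equiv_iff {β β' : Type*} [DecidableEq β] [DecidableEq β'] (e : β ≃ β')
    (γ : ι → β) : FibresBelow c x (e ∘ γ) ↔ FibresBelow c x γ := by
  unfold FibresBelow
  constructor
  · intro h b
    simpa using h (e b)
  · intro h b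
    simpa [← e.eq_symm_apply] using h (e.symm b)

lemma card_smallSurj_congr {β β' : Type*} [DecidableEq β] [DecidableEq β'] (e : β ≃ β') :
    Nat.card (SmallSurj c x β) = Nat.card (SmallSurj c x β') :=
  Nat.card_congr <| (Equiv.arrowCongr (Equiv.refl ι) e).subtypeEquiv fun γ =>
    and_congr (e.comp_surjective γ).symm (fibresBelow_comp_equiv_iff c x e γ).symm

lemma card_smallSurj_sigma [DecidableEq ι] {κ : Type*} [Fintype κ] [DecidableEq κ] {β : κ → Type*}
    [∀ i, Fintype (β i)] [∀ i, DecidableEq (β i)] :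
    Nat.card (SmallSurj c x (Σ i, β i)) =
      ∑ π : ι → κ, ∏ i, Nat.card (SmallSurj c (fun a : {a // π a = i} => x a) (β i)) := by
  rw [Nat.card_congr (smallSurjSigmaEquiv c x), Nat.card_sigma]
  simp_rw [Nat.card_pi]

noncomputable def smallSurjCount (n : ℕ) : ℕ :=
  Nat.card (SmallSurj c x (Fin n))

lemma smallSurjCount_eq_zero {n : ℕ} (hn : Fintype.card ι < n) : smallSurjCount c x n = 0 := by
  rw [smallSurjCount, Nat.card_eq_zero]
  left
  exact ⟨fun γ => by simpa using (Fintype.card_le_of_surjective _ γ.2.1).trans_lt hn⟩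

lemma smallSurjCount_zero [Nonempty ι] : smallSurjCount c x 0 = 0 := by
  rw [smallSurjCount, Nat.card_eq_zero]
  left
  exact ⟨fun γ => (γ.1 (Classical.arbitrary ι)).elim0⟩

lemma sum_prod_smallSurjCount [DecidableEq ι] {r : ℕ} (g : Fin r → ℕ) :
    ∑ π : ι → Fin r, ∏ i, smallSurjCount c (fun a : {a // π a = i} => x a) (g i)
      = smallSurjCount c x (∑ i, g i) := by
  rw [smallSurjCount, ← card_smallSurj_congr c x finSigmaFinEquiv, card_smallSurj_sigma]
  rfl

lemma linnikOn_eq_sum {K : ℕ} (hK : Fintype.card ι ≤ K) :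
    LinnikOn c x = ∑ j ∈ Icc 1 K, (-1 : ℝ) ^ (j + 1) / j * smallSurjCount c x j := by
  refine sum_subset (Icc_subset_Icc_right hK) fun j hj hj' => mul_eq_zero_of_right _ ?_
  exact Nat.cast_eq_zero.mpr (smallSurjCount_eq_zero c x (by simp_all))

end Counting

section Functional

variable {ι : Type*} [Fintype ι] (c : ℝ) (x : ι → ℝ)

noncomputable def smallSurjFunctional : ℝ[X] →ₗ[ℝ] ℝ :=
  ∑ n ∈ range (Fintype.card ι + 1), (smallSurjCount c x n : ℝ) • lcoeff ℝ n

lemma smallSurjFunctional_apply (p : ℝ[X]) :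
    smallSurjFunctional c x p
      = ∑ n ∈ range (Fintype.card ι + 1), smallSurjCount c x n * p.coeff n := by
  simp [smallSurjFunctional]

lemma smallSurjFunctional_C_mul_X_pow (a : ℝ) (n : ℕ) :
    smallSurjFunctional c x (C a * X ^ n) = a * smallSurjCount c x n := by
  rw [smallSurjFunctional_apply]
  simp_rw [coeff_C_mul_X_pow, mul_ite, mul_zero]
  rw [sum_ite_eq']
  split_ifs with h
  · ring
  · rw [smallSurjCount_eq_zero c x (by rw [mem_range, not_lt] at h; omega)]
    simp

lemma smallSurjFunctional_eq_of_X_pow_dvd_sub {p q : ℝ[X]}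
    (h : X ^ (Fintype.card ι + 1) ∣ p - q) :
    smallSurjFunctional c x p = smallSurjFunctional c x q := by
  rw [X_pow_dvd_iff] at h
  simp_rw [smallSurjFunctional_apply]
  refine sum_congr rfl fun n hn => ?_
  rw [← sub_eq_zero, ← mul_sub, ← coeff_sub, h n (mem_range.mp hn), mul_zero]

lemma sum_prod_linnikOn [DecidableEq ι] {K : ℕ} (hK : Fintype.card ι ≤ K) (r : ℕ) :
    ∑ π : ι → Fin r, ∏ i, LinnikOn c (fun a : {a // π a = i} => x a)
      = smallSurjFunctional c x (logOneAddTrunc K ^ r) := by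
  have hblock : ∀ (π : ι → Fin r) i, Fintype.card {a // π a = i} ≤ K :=
    fun π i => (Fintype.card_subtype_le _).trans hK
  calc ∑ π : ι → Fin r, ∏ i, LinnikOn c (fun a : {a // π a = i} => x a)
      = ∑ g ∈ Fintype.piFinset fun _ : Fin r => Icc 1 K, ∑ π : ι → Fin r,
          ∏ i, ((-1 : ℝ) ^ (g i + 1) / g i *
            smallSurjCount c (fun a : {a // π a = i} => x a) (g i)) := by
        rw [sum_comm]
        simp_rw [linnikOn_eq_sum c _ (hblock _ _), prod_univ_sum]
    _ = ∑ g ∈ Fintype.piFinset fun _ : Fin r => Icc 1 K,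
          (∏ i, (-1 : ℝ) ^ (g i + 1) / g i) * smallSurjCount c x (∑ i, g i) := by
        simp_rw [prod_mul_distrib, ← mul_sum, ← sum_prod_smallSurjCount c x]
        push_cast
        rfl
    _ = smallSurjFunctional c x (logOneAddTrunc K ^ r) := by
        rw [logOneAddTrunc, ← Fin.prod_const, prod_univ_sum, map_sum]
        simp_rw [prod_mul_distrib, ← map_prod, prod_pow_eq_pow_sum,
          smallSurjFunctional_C_mul_X_pow]

end Functional

section SmallMaps

variable {ι : Type*} [Fintype ι] {c : ℝ} (x : ι → ℝ) {β : Type*} [DecidableEq β]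

lemma fibresBelow_val_comp_iff (hc : 0 < c) {T : Finset β} (δ : ι → T) :
    FibresBelow c x (Subtype.val ∘ δ) ↔ FibresBelow c x δ := by
  constructor
  · intro h b
    convert h b using 2
    ext a
    simp only [mem_filter, mem_univ, true_and, Function.comp_apply, Subtype.ext_iff]
  · intro h b
    by_cases hb : b ∈ T
    · convert h ⟨b, hb⟩ using 2
      ext a
      simp only [mem_filter, mem_univ, true_and, Function.comp_apply, Subtype.ext_iff]
    · refine (sum_eq_zero fun a ha => ?_).trans_lt hc
      exact (hb ((mem_filter.mp ha).2 ▸ (δ a).2)).elim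

def smallMapsWithImageEquiv (hc : 0 < c) (T : Finset β) :
    {γ : {γ : ι → β // FibresBelow c x γ} // univ.image γ.1 = T} ≃ SmallSurj c x T where
  toFun γ := ⟨fun a => ⟨γ.1.1 a, (Finset.ext_iff.mp γ.2 _).mp (mem_image_of_mem _ (mem_univ a))⟩,
    fun b => by
      obtain ⟨a, -, ha⟩ := mem_image.mp ((Finset.ext_iff.mp γ.2 _).mpr b.2)
      exact ⟨a, Subtype.ext ha⟩,
    (fibresBelow_val_comp_iff x hc _).mp γ.1.2⟩
  invFun δ := ⟨⟨Subtype.val ∘ δ.1, (fibresBelow_val_comp_iff x hc _).mpr δ.2.2⟩, by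
    ext b
    simp only [mem_image, mem_univ, true_and, Function.comp_apply]
    exact ⟨fun ⟨a, ha⟩ => ha ▸ (δ.1 a).2, fun hb => (δ.2.1 ⟨b, hb⟩).imp fun a ha => by rw [ha]⟩⟩
  left_inv γ := rfl
  right_inv δ := rfl

variable [Fintype β]

lemma card_fibresBelow (hc : 0 < c) :
    (Nat.card {γ : ι → β // FibresBelow c x γ} : ℝ)
      = smallSurjFunctional c x ((1 + X) ^ Fintype.card β) := by
  rw [← Nat.card_congr (Equiv.sigmaFiberEquiv fun γ : {γ : ι → β // FibresBelow c x γ} =>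
    univ.image γ.1), Nat.card_sigma, add_comm, ← Fintype.sum_pow_mul_eq_add_pow, map_sum]
  push_cast
  refine sum_congr rfl fun T _ => ?_
  rw [Nat.card_congr (smallMapsWithImageEquiv x hc T), card_smallSurj_congr c x T.equivFin]
  rw [one_pow, mul_one, ← one_mul (X ^ _), ← C_1, smallSurjFunctional_C_mul_X_pow, one_mul]
  rfl

lemma isEmpty_fibresBelow [Nonempty β] (hx : Fintype.card β * c ≤ ∑ a, x a) :
    IsEmpty {γ : ι → β // FibresBelow c x γ} := by
  refine ⟨fun γ => (hx.trans_lt ?_).false⟩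
  calc ∑ a, x a = ∑ b, ∑ a ∈ univ.filter (fun a => γ.1 a = b), x a :=
        (sum_fiberwise univ γ.1 x).symm
    _ < ∑ _b : β, c := sum_lt_sum_of_nonempty univ_nonempty fun b _ => γ.2 b
    _ = Fintype.card β * c := by simp

end SmallMaps

/-- For positive integers `m, k` and `c > 0`: if `x` has dimension `k` and
`|x| ≥ m·c`, then `Σ_{r=1}^{k} (m^r/r!) Σ_{u₁ ⊔ ⋯ ⊔ u_r = x} 𝔏_c(u₁)⋯𝔏_c(u_r) = 0`,
the inner sum being over all `r^k` decompositions of `x` into an ordered `r`-tuple of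
possibly empty subvectors (i.e. over all maps `π : Fin k → Fin r`). -/
theorem linnik_decomposition_identity (m k : ℕ) (hm : 0 < m) (hk : 0 < k)
    (c : ℝ) (hc : 0 < c) (x : Fin k → ℝ) (hx : (m : ℝ) * c ≤ ∑ i, x i) :
    ∑ r ∈ Finset.Icc 1 k, ((m : ℝ) ^ r / (r.factorial : ℝ)) *
      ∑ π : Fin k → Fin r, ∏ i : Fin r,
        LinnikOn c (fun a : {a : Fin k // π a = i} => x a.1) = 0 := by
  have : Nonempty (Fin k) := ⟨⟨0, hk⟩⟩
  have : Nonempty (Fin m) := ⟨⟨0, hm⟩⟩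
  set Φ := smallSurjFunctional c x
  have hΦ₁ : Φ 1 = 0 := by
    simpa [smallSurjCount_zero] using smallSurjFunctional_C_mul_X_pow c x 1 0
  calc _ = ∑ r ∈ range (k + 1), (m : ℝ) ^ r / r.factorial * Φ (logOneAddTrunc k ^ r) := by
        rw [range_eq_Ico, sum_eq_sum_Ico_succ_bot (by omega : 0 < k + 1), zero_add,
          Ico_add_one_right_eq_Icc]
        simp only [pow_zero, hΦ₁, mul_zero, zero_add]
        refine sum_congr rfl fun r _ => ?_
        rw [sum_prod_linnikOn c x (Fintype.card_fin k).le]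
    _ = Φ (expMulTrunc k m (logOneAddTrunc k)) := by
        simp [expMulTrunc, map_sum, ← smul_eq_C_mul]
    _ = Φ ((1 + X) ^ m) := smallSurjFunctional_eq_of_X_pow_dvd_sub c x
        (by simpa using X_pow_succ_dvd_expMulTrunc_logOneAddTrunc_sub k m)
    _ = Nat.card {γ : Fin k → Fin m // FibresBelow c x γ} := by
        rw [card_fibresBelow x hc, Fintype.card_fin]
    _ = 0 := by
        have := isEmpty_fibresBelow (β := Fin m) x (by simpa using hx)
        simp
end

section
/- Let 0 < γ < 1 and 0 ≤ θ ≤ θ+ν ≤ 1, and suppose y ∈ ℛ(γ,θ,ν). Then (i) ν < 1-γ and y has a component bigger than ν; and (ii) the sum of all components y_i of y with y_i ≤ ν is at most 1 - γ - ν. -/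
open scoped Classical
open Finset

/-- Membership in the fundamental region `ℛ(γ,θ,ν)`: all components in `(0, 1-γ)`,
components summing to `1`, and no proper subsum in `[θ, θ+ν]`. -/
def MemR (γ θ ν : ℝ) {n : ℕ} (y : Fin n → ℝ) : Prop :=
  (∀ i, 0 < y i ∧ y i < 1 - γ) ∧ (∑ i, y i = 1) ∧
    ∀ A : Finset (Fin n), A.Nonempty → A ≠ Finset.univ →
      (∑ i ∈ A, y i) ∉ Set.Icc θ (θ + ν)

/-- Climbing lemma: adding elements of size `≤ ν` one at a time cannot cross the
forbidden interval `[θ, θ+ν]`, so starting below `θ` one stays below `θ`. -/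
lemma climb {n : ℕ} (θ ν : ℝ) (y : Fin n → ℝ)
    (havoid : ∀ A : Finset (Fin n), A.Nonempty → A ≠ Finset.univ →
      (∑ i ∈ A, y i) ∉ Set.Icc θ (θ + ν))
    (C S : Finset (Fin n)) (hS : ∀ i ∈ S, y i ≤ ν)
    (hdisj : Disjoint C S) (hproper : C ∪ S ≠ Finset.univ)
    (hC : ∑ i ∈ C, y i < θ) :
    ∀ B ⊆ S, ∑ i ∈ C ∪ B, y i < θ := by
  intro B
  induction B using Finset.strongInduction with
  | _ B ih =>
    intro hBS
    rcases B.eq_empty_or_nonempty with rfl | hBne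
    · simpa using hC
    by_contra h
    push_neg at h
    obtain ⟨j, hj⟩ := hBne
    have hjS : j ∈ S := hBS hj
    have hjC : j ∉ C := fun hc => (Finset.disjoint_left.1 hdisj hc) hjS
    have hne : (C ∪ B).Nonempty := ⟨j, Finset.mem_union_right _ hj⟩
    have hnu : C ∪ B ≠ Finset.univ := by
      intro he
      exact hproper (Finset.univ_subset_iff.1
        (he ▸ Finset.union_subset_union_right hBS))
    have hout := havoid _ hne hnu
    have hgt : θ + ν < ∑ i ∈ C ∪ B, y i := by
      rcases lt_or_ge (θ + ν) (∑ i ∈ C ∪ B, y i) with h' | h'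
      · exact h'
      · exact absurd ⟨h, h'⟩ hout
    have hsub : B.erase j ⊂ B := Finset.erase_ssubset hj
    have hih := ih _ hsub ((Finset.erase_subset _ _).trans hBS)
    have hjCE : j ∉ C ∪ B.erase j := by simp [hjC]
    have hins : insert j (C ∪ B.erase j) = C ∪ B := by
      rw [Finset.union_comm C, Finset.union_comm C, ← Finset.insert_union,
        Finset.insert_erase hj]
    have hsum : ∑ i ∈ C ∪ B, y i = y j + ∑ i ∈ C ∪ B.erase j, y i := by
      rw [← hins, Finset.sum_insert hjCE]
    have := hS j hjS
    linarith

/-- Let `0 < γ < 1` and `0 ≤ θ ≤ θ+ν ≤ 1`, and suppose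
`y ∈ ℛ(γ,θ,ν)`.  Then (i) `ν < 1-γ` and `y` has a component bigger than `ν`; and
(ii) the sum of all components `y i ≤ ν` is at most `1 - γ - ν`. -/
theorem R_element_properties (γ θ ν : ℝ) (hγ0 : 0 < γ) (hγ1 : γ < 1)
    (hθ : 0 ≤ θ) (hν : 0 ≤ ν) (hθν : θ + ν ≤ 1)
    (n : ℕ) (y : Fin n → ℝ) (hy : MemR γ θ ν y) :
    (ν < 1 - γ ∧ ∃ i, ν < y i) ∧
      (∑ i ∈ Finset.univ.filter (fun i => y i ≤ ν), y i) ≤ 1 - γ - ν := by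
  obtain ⟨hcomp, hsum, havoid⟩ := hy
  -- n ≥ 2
  have hn2 : 2 ≤ n := by
    by_contra hn
    push_neg at hn
    interval_cases n
    · simp at hsum
    · rw [Fin.sum_univ_one] at hsum
      have := (hcomp 0).2
      linarith
  let j0 : Fin n := ⟨0, by omega⟩
  let j1 : Fin n := ⟨1, by omega⟩
  have hj01 : j1 ≠ j0 := by simp [j0, j1, Fin.ext_iff]
  -- existence of a big component
  have hex : ∃ i, ν < y i := by
    by_contra hall
    push_neg at hall
    rcases eq_or_lt_of_le hθ with hθ0 | hθpos
    · -- θ = 0 : a singleton lies in [θ, θ+ν]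
      have hne : ({j0} : Finset (Fin n)).Nonempty := ⟨j0, Finset.mem_singleton_self _⟩
      have hnu : ({j0} : Finset (Fin n)) ≠ Finset.univ := by
        intro h
        have : j1 ∈ ({j0} : Finset (Fin n)) := h ▸ Finset.mem_univ j1
        exact hj01 (Finset.mem_singleton.1 this)
      refine havoid _ hne hnu ?_
      rw [Finset.sum_singleton]
      exact ⟨by linarith [(hcomp j0).1], by linarith [hall j0]⟩
    · -- θ > 0 : climb up through all but one component
      have hprop : (∅ : Finset (Fin n)) ∪ Finset.univ.erase j0 ≠ Finset.univ := by
        rw [Finset.empty_union]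
        intro h
        have : j0 ∈ Finset.univ.erase j0 := by rw [h]; exact Finset.mem_univ j0
        exact (Finset.mem_erase.1 this).1 rfl
      have hcl := climb θ ν y havoid ∅ (Finset.univ.erase j0)
        (fun i _ => hall i) (Finset.disjoint_left.2 (by simp)) hprop
        (by simpa using hθpos) (Finset.univ.erase j0) subset_rfl
      rw [Finset.empty_union] at hcl
      have hesum : ∑ i ∈ Finset.univ.erase j0, y i = 1 - y j0 := by
        have := Finset.sum_erase_add Finset.univ y (Finset.mem_univ j0)
        rw [hsum] at this
        linarith
      rw [hesum] at hcl
      have := hall j0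
      linarith
  obtain ⟨i₀, hi₀⟩ := hex
  have hνγ : ν < 1 - γ := lt_trans hi₀ (hcomp i₀).2
  refine ⟨⟨hνγ, ⟨i₀, hi₀⟩⟩, ?_⟩
  set T := Finset.univ.filter (fun i => y i ≤ ν) with hT
  have hi₀T : i₀ ∉ T := by simp [hT, not_le.2 hi₀]
  rcases T.eq_empty_or_nonempty with hTe | ⟨t, ht⟩
  · rw [hTe, Finset.sum_empty]; linarith
  have hytν : y t ≤ ν := (Finset.mem_filter.1 ht).2
  have hti₀ : t ≠ i₀ := fun h => hi₀T (h ▸ ht)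
  have hTnu : T ≠ Finset.univ := fun h => hi₀T (h ▸ Finset.mem_univ i₀)
  rcases eq_or_lt_of_le hθ with hθ0 | hθpos
  · -- θ = 0 : singleton {t} would be a forbidden subsum
    exfalso
    have hne : ({t} : Finset (Fin n)).Nonempty := ⟨t, Finset.mem_singleton_self _⟩
    have hnu : ({t} : Finset (Fin n)) ≠ Finset.univ := by
      intro h
      have : i₀ ∈ ({t} : Finset (Fin n)) := h ▸ Finset.mem_univ i₀
      exact hti₀ ((Finset.mem_singleton.1 this).symm)
    refine havoid _ hne hnu ?_
    rw [Finset.sum_singleton]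
    exact ⟨by linarith [(hcomp t).1], by linarith⟩
  -- θ > 0
  have hTmem : ∀ i ∈ T, y i ≤ ν := fun i hi => (Finset.mem_filter.1 hi).2
  have hsumT : ∑ i ∈ T, y i < θ := by
    have := climb θ ν y havoid ∅ T hTmem (Finset.disjoint_left.2 (by simp))
      (by rwa [Finset.empty_union]) (by simpa using hθpos) T subset_rfl
    rwa [Finset.empty_union] at this
  -- family of extensions staying below θ
  set F := Tᶜ.powerset.filter (fun V => ∑ i ∈ T ∪ V, y i < θ) with hF
  have hFne : F.Nonempty := by
    refine ⟨∅, Finset.mem_filter.2 ⟨Finset.mem_powerset.2 (Finset.empty_subset _), ?_⟩⟩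
    rwa [Finset.union_empty]
  obtain ⟨V, hVF, hVmax⟩ := Finset.exists_max_image F Finset.card hFne
  have hVU : V ⊆ Tᶜ := Finset.mem_powerset.1 (Finset.mem_filter.1 hVF).1
  have hVsum : ∑ i ∈ T ∪ V, y i < θ := (Finset.mem_filter.1 hVF).2
  have hθ1 : θ ≤ 1 := by linarith
  have hVne : V ≠ Tᶜ := by
    intro h
    have : T ∪ V = Finset.univ := by rw [h]; simp
    rw [this, hsum] at hVsum
    linarith
  obtain ⟨j, hjU, hjV⟩ := Finset.exists_of_ssubset (lt_of_le_of_ne hVU hVne)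
  have hjT : j ∉ T := Finset.mem_compl.1 hjU
  set W := insert j V with hW
  have hWU : W ⊆ Tᶜ := Finset.insert_subset hjU hVU
  have hWne : W.Nonempty := ⟨j, Finset.mem_insert_self _ _⟩
  have htW : t ∉ W := fun h => (Finset.mem_compl.1 (hWU h)) ht
  have hWnu : W ≠ Finset.univ := fun h => htW (h ▸ Finset.mem_univ t)
  have hdisjWT : Disjoint W T :=
    Finset.disjoint_left.2 (fun a ha => Finset.mem_compl.1 (hWU ha))
  have hsumW : ∑ i ∈ W, y i = y j + ∑ i ∈ V, y i := Finset.sum_insert hjV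
  have hWgt : θ + ν < ∑ i ∈ W, y i := by
    have hnotin := havoid W hWne hWnu
    by_contra hle
    push_neg at hle
    have hWlt : ∑ i ∈ W, y i < θ := by
      rcases lt_or_ge (∑ i ∈ W, y i) θ with h' | h'
      · exact h'
      · exact absurd ⟨h', hle⟩ hnotin
    by_cases hU : T ∪ W = Finset.univ
    · -- then W ∪ (T \ {t}) = univ \ {t}, whose sum is ≥ θ : contradiction
      have hprop : W ∪ T.erase t ≠ Finset.univ := by
        intro h
        have : t ∈ W ∪ T.erase t := h ▸ Finset.mem_univ t
        rcases Finset.mem_union.1 this with h' | h'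
        · exact htW h'
        · exact (Finset.mem_erase.1 h').1 rfl
      have hcl := climb θ ν y havoid W (T.erase t)
        (fun i hi => hTmem i (Finset.mem_of_mem_erase hi))
        (hdisjWT.mono_right (Finset.erase_subset _ _)) hprop hWlt
        (T.erase t) subset_rfl
      have hins : insert t (W ∪ T.erase t) = T ∪ W := by
        rw [Finset.union_comm W, ← Finset.insert_union, Finset.insert_erase ht]
      have htWE : t ∉ W ∪ T.erase t := by
        simp only [Finset.mem_union, Finset.mem_erase]
        push_neg
        exact ⟨htW, fun h => absurd rfl h⟩
      have hsplit : ∑ i ∈ T ∪ W, y i = y t + ∑ i ∈ W ∪ T.erase t, y i := by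
        rw [← hins, Finset.sum_insert htWE]
      rw [hU, hsum] at hsplit
      linarith
    · -- otherwise W extends V, contradicting maximality
      have hcl := climb θ ν y havoid W T hTmem hdisjWT (by rw [Finset.union_comm]; exact hU) hWlt T subset_rfl
      have hWF : W ∈ F := by
        refine Finset.mem_filter.2 ⟨Finset.mem_powerset.2 hWU, ?_⟩
        rwa [Finset.union_comm] at hcl
      have hcard : V.card + 1 ≤ V.card := by
        have := hVmax W hWF
        rwa [hW, Finset.card_insert_of_notMem hjV] at this
      omega
  have hdisjTV : Disjoint T V :=
    Finset.disjoint_left.2 (fun a ha hb => Finset.mem_compl.1 (hVU hb) ha)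
  have hTV : ∑ i ∈ T ∪ V, y i = ∑ i ∈ T, y i + ∑ i ∈ V, y i :=
    Finset.sum_union hdisjTV
  have hyj : y j < 1 - γ := (hcomp j).2
  rw [hTV] at hVsum
  rw [hsumW] at hWgt
  linarith
end

section
/- For k ≥ 1, ε > 0 and y ≥ ε, define m_k(y,ε) = ∫ over {ε ≤ ξ_1 ≤ ⋯ ≤ ξ_k, ξ_1+⋯+ξ_k = y} of dξ/(ξ_1⋯ξ_k). Then m_k(y,ε) ≤ (log(y/ε))^(k-1) / ((k-1)! · y). Moreover, for any fixed A ≥ 1, uniformly for y ≥ 100A²ε > 0 and 1 ≤ k ≤ A·log(y/ε), one has m_k(y,ε) ≫_A (log(y/ε))^(k-1) / ((k-1)! · y). -/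
/-!
Write `n = k - 1` for the number of free coordinates and `m_n(y, ε)` for the integral as a lower
Lebesgue integral. Integrating out the smallest coordinate `t` gives the recursion
`m_{n+1}(y, ε) = ∫_{t ≥ ε} m_n(y - t, t) dt / t`, in which `m_n(y - t, t) = 0` for `t > y / 2`.
The upper bound follows by induction, `-(log ((y - t) / t))^{n+1} / ((n+1)! y)` being an
antiderivative of the bound obtained for the integrand.

For the lower bound take `T = y / (32 A)` and the box `[ε, T]^n` cut down to `∑ ξᵢ ≤ y / 2`.
There the integrand is at least `y⁻¹ ∏ ξᵢ⁻¹`, and every point can be sorted into the simplex, so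
`n! m_n(y, ε) ≥ y⁻¹ ∫ ∏ ξᵢ⁻¹`. Over the whole box this integral is `log (T / ε)^n`, and by
Markov's inequality the part where `∑ ξᵢ > y / 2` is at most half of it as long as
`n ≤ A log (y / ε)`. Finally `log (T / ε) = log (y / ε) - log (32 A)` with
`log (32 A) ≤ (7/8) log (y / ε)`, whence `log (T / ε)^n ≥ e^{-8 A log (32 A)} log (y / ε)^n`.
-/

open scoped Classical

/-- `m_k(y,ε) = ∫_{ε ≤ ξ₁ ≤ ⋯ ≤ ξ_k, ξ₁+⋯+ξ_k = y} dξ/(ξ₁⋯ξ_k)`, the integral over the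
simplex being taken with respect to the projection measure onto the first `k-1`
coordinates (the last coordinate being `ξ_k = y - (ξ₁+⋯+ξ_{k-1})`). -/
noncomputable def mSimplex (k : ℕ) (y ε : ℝ) : ℝ :=
  ∫ b in {b : Fin (k - 1) → ℝ |
      (∀ i j : Fin (k - 1), i ≤ j → b i ≤ b j) ∧
      (∀ i, ε ≤ b i) ∧ (∀ i, b i ≤ y - ∑ j, b j) ∧ ε ≤ y - ∑ j, b j},
    ((∏ i, b i) * (y - ∑ j, b j))⁻¹

open scoped ENNReal Nat
open MeasureTheory Set Real

section Fubini

variable {α : Type*} [MeasurableSpace α] {n : ℕ}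

theorem lintegral_fin_cons (μ : Fin (n + 1) → Measure α) [∀ i, SigmaFinite (μ i)]
    {f : (Fin (n + 1) → α) → ℝ≥0∞} (hf : Measurable f) :
    ∫⁻ b, f b ∂Measure.pi μ =
      ∫⁻ t, ∫⁻ c, f (Fin.cons t c) ∂Measure.pi (fun i => μ i.succ) ∂μ 0 := by
  set e := (MeasurableEquiv.piFinSuccAbove (fun _ => α) 0).symm
  rw [← (measurePreserving_piFinSuccAbove μ 0).symm.lintegral_comp hf,
    lintegral_prod (fun p => f (e p)) (hf.comp e.measurable).aemeasurable]
  simp [e, MeasurableEquiv.piFinSuccAbove_symm_apply, Fin.insertNthEquiv, Fin.insertNth_zero']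

theorem lintegral_fin_prod (μ : Fin n → Measure α) [∀ i, SigmaFinite (μ i)]
    {g : Fin n → α → ℝ≥0∞} (hg : ∀ i, Measurable (g i)) :
    ∫⁻ b, ∏ i, g i (b i) ∂Measure.pi μ = ∏ i, ∫⁻ t, g i t ∂μ i := by
  induction n with
  | zero => simp
  | succ n ih =>
    rw [lintegral_fin_cons μ (by fun_prop)]
    simp only [Fin.prod_univ_succ, Fin.cons_zero, Fin.cons_succ]
    simp_rw [lintegral_const_mul _
      (by fun_prop : Measurable fun c : Fin n → α => ∏ i, g i.succ (c i)),
      ih (fun i => μ i.succ) fun i => hg i.succ]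
    rw [lintegral_mul_const _ (hg 0)]

theorem setLIntegral_univ_pi_prod (μ : Fin n → Measure α) [∀ i, SigmaFinite (μ i)]
    (s : Fin n → Set α) {g : Fin n → α → ℝ≥0∞} (hg : ∀ i, Measurable (g i)) :
    ∫⁻ b in univ.pi s, ∏ i, g i (b i) ∂Measure.pi μ = ∏ i, ∫⁻ t in s i, g i t ∂μ i := by
  rw [Measure.restrict_pi_pi, lintegral_fin_prod _ hg]

end Fubini

section Perm

variable {α : Type*} [MeasureSpace α] [SigmaFinite (volume : Measure α)] {n : ℕ}

theorem lintegral_comp_perm (σ : Equiv.Perm (Fin n)) {f : (Fin n → α) → ℝ≥0∞}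
    (hf : Measurable f) : ∫⁻ b, f (b ∘ σ) = ∫⁻ b, f b := by
  rw [← (volume_measurePreserving_piCongrLeft (fun _ => α) σ.symm).lintegral_comp hf]
  congr 1 with b
  congr 1 with i
  simp [MeasurableEquiv.piCongrLeft, Equiv.piCongrLeft_apply]

theorem setLIntegral_le_factorial_mul {f : (Fin n → α) → ℝ≥0∞} (hf : Measurable f)
    (hf_perm : ∀ (σ : Equiv.Perm (Fin n)) b, f (b ∘ σ) = f b) {R S : Set (Fin n → α)}
    (hS : MeasurableSet S) (hRS : ∀ b ∈ R, ∃ σ : Equiv.Perm (Fin n), b ∘ σ ∈ S) :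
    ∫⁻ b in R, f b ≤ n ! * ∫⁻ b in S, f b := by
  have h_perm (σ : Equiv.Perm (Fin n)) : ∫⁻ b in (· ∘ σ) ⁻¹' S, f b = ∫⁻ b in S, f b := by
    have h_meas : Measurable fun b : Fin n → α => b ∘ σ := by fun_prop
    rw [← lintegral_indicator (h_meas hS), ← lintegral_indicator hS,
      ← lintegral_comp_perm σ (hf.indicator hS)]
    congr 1 with b
    simp only [indicator, hf_perm]
    rfl
  calc ∫⁻ b in R, f b ≤ ∫⁻ b in ⋃ σ : Equiv.Perm (Fin n), (· ∘ σ) ⁻¹' S, f b :=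
        lintegral_mono_set fun b hb => mem_iUnion.mpr (hRS b hb)
    _ ≤ ∑' σ : Equiv.Perm (Fin n), ∫⁻ b in (· ∘ σ) ⁻¹' S, f b := lintegral_iUnion_le _ _
    _ = n ! * ∫⁻ b in S, f b := by
      simp [h_perm, tsum_fintype, Fintype.card_perm]

end Perm

theorem Fin.monotone_cons {β : Type*} [Preorder β] {n : ℕ} {a : β} {f : Fin n → β} :
    Monotone (Fin.cons a f : Fin (n + 1) → β) ↔ (∀ j, a ≤ f j) ∧ Monotone f := by
  simp only [monotone_iff_forall_lt]
  exact Fin.liftFun_cons (· ≤ ·)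

def sortedSimplex (n : ℕ) (y ε : ℝ) : Set (Fin n → ℝ) :=
  {b | Monotone b ∧ (∀ i, ε ≤ b i) ∧ (∀ i, b i ≤ y - ∑ j, b j) ∧ ε ≤ y - ∑ j, b j}

noncomputable def simplexKernel {n : ℕ} (y : ℝ) (b : Fin n → ℝ) : ℝ≥0∞ :=
  ENNReal.ofReal ((∏ i, b i) * (y - ∑ j, b j))⁻¹

noncomputable def simplexLIntegral (n : ℕ) (y ε : ℝ) : ℝ≥0∞ :=
  ∫⁻ b in sortedSimplex n y ε, simplexKernel y b

theorem isClosed_sortedSimplex (n : ℕ) (y ε : ℝ) : IsClosed (sortedSimplex n y ε) := by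
  simp only [sortedSimplex, ofPred_and, ofPred_forall]
  refine isClosed_monotone.inter <| (isClosed_iInter fun i => isClosed_le ?_ ?_).inter <|
    (isClosed_iInter fun i => isClosed_le ?_ ?_).inter (isClosed_le ?_ ?_) <;> fun_prop

theorem measurableSet_sortedSimplex (n : ℕ) (y ε : ℝ) : MeasurableSet (sortedSimplex n y ε) :=
  (isClosed_sortedSimplex n y ε).measurableSet

@[fun_prop]
theorem measurable_simplexKernel (n : ℕ) (y : ℝ) :
    Measurable (simplexKernel y : (Fin n → ℝ) → ℝ≥0∞) := by
  unfold simplexKernel; fun_prop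

theorem sortedSimplex_eq_empty {n : ℕ} {y ε : ℝ} (hε : 0 ≤ ε) (hy : y < ε) :
    sortedSimplex n y ε = ∅ := by
  refine eq_empty_of_forall_notMem fun b ⟨_, hb, _, hlast⟩ => ?_
  have : 0 ≤ ∑ j, b j := Finset.sum_nonneg fun j _ => hε.trans (hb j)
  linarith

theorem simplexLIntegral_eq_zero {n : ℕ} {y ε : ℝ} (hε : 0 ≤ ε) (hy : y < ε) :
    simplexLIntegral n y ε = 0 := by
  simp [simplexLIntegral, sortedSimplex_eq_empty hε hy]

theorem simplexLIntegral_zero {y ε : ℝ} (h : ε ≤ y) :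
    simplexLIntegral 0 y ε = ENNReal.ofReal y⁻¹ := by
  have : sortedSimplex 0 y ε = univ := by
    ext b; simp [sortedSimplex, h, Subsingleton.monotone b]
  simp [simplexLIntegral, this, simplexKernel, volume_pi]

theorem cons_mem_sortedSimplex {n : ℕ} {y ε t : ℝ} {c : Fin n → ℝ} :
    (Fin.cons t c : Fin (n + 1) → ℝ) ∈ sortedSimplex (n + 1) y ε ↔
      ε ≤ t ∧ c ∈ sortedSimplex n (y - t) t := by
  simp only [sortedSimplex, mem_ofPred_eq, Fin.monotone_cons, Fin.forall_fin_succ, Fin.cons_zero,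
    Fin.cons_succ, Fin.sum_cons, sub_sub]
  constructor
  · rintro ⟨⟨hmin, hmono⟩, ⟨hεt, -⟩, ⟨hfirst, hle⟩, -⟩
    exact ⟨hεt, hmono, hmin, hle, hfirst⟩
  · rintro ⟨hεt, hmono, hmin, hle, hlast⟩
    exact ⟨⟨hmin, hmono⟩, ⟨hεt, fun i => hεt.trans (hmin i)⟩, ⟨hlast, hle⟩, hεt.trans hlast⟩

theorem simplexKernel_cons {n : ℕ} {y t : ℝ} (ht : 0 ≤ t) (c : Fin n → ℝ) :
    simplexKernel y (Fin.cons t c : Fin (n + 1) → ℝ) =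
      ENNReal.ofReal t⁻¹ * simplexKernel (y - t) c := by
  rw [simplexKernel, simplexKernel, Fin.prod_cons, Fin.sum_cons,
    ← ENNReal.ofReal_mul (by positivity), ← mul_inv, sub_add_eq_sub_sub, mul_assoc]

theorem simplexLIntegral_succ (n : ℕ) (y : ℝ) {ε : ℝ} (hε : 0 ≤ ε) :
    simplexLIntegral (n + 1) y ε =
      ∫⁻ t in Ici ε, ENNReal.ofReal t⁻¹ * simplexLIntegral n (y - t) t := by
  have hS := measurableSet_sortedSimplex (n + 1) y ε
  rw [simplexLIntegral, ← lintegral_indicator hS, volume_pi,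
    lintegral_fin_cons _ ((measurable_simplexKernel _ y).indicator hS),
    ← lintegral_indicator measurableSet_Ici]
  congr 1 with t
  by_cases ht : ε ≤ t
  · have h_slice (c : Fin n → ℝ) :
        (sortedSimplex (n + 1) y ε).indicator (simplexKernel y) (Fin.cons t c) =
          (sortedSimplex n (y - t) t).indicator
            (fun c => ENNReal.ofReal t⁻¹ * simplexKernel (y - t) c) c := by
      by_cases hc : c ∈ sortedSimplex n (y - t) t
      · rw [indicator_of_mem (cons_mem_sortedSimplex.2 ⟨ht, hc⟩), indicator_of_mem hc,
          simplexKernel_cons (hε.trans ht)]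
      · rw [indicator_of_notMem (fun h => hc (cons_mem_sortedSimplex.1 h).2),
          indicator_of_notMem hc]
    simp only [h_slice]
    rw [lintegral_indicator (measurableSet_sortedSimplex n _ t),
      lintegral_const_mul _ (by fun_prop), indicator_of_mem (mem_Ici.2 ht)]
    rfl
  · have h_slice (c : Fin n → ℝ) :
        (sortedSimplex (n + 1) y ε).indicator (simplexKernel y) (Fin.cons t c) = 0 :=
      indicator_of_notMem (fun h => ht (cons_mem_sortedSimplex.1 h).1) _
    simp only [h_slice, lintegral_zero, indicator_of_notMem (notMem_Ici.2 (not_le.1 ht))]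

theorem continuousOn_inv_mul_log_div_pow (n : ℕ) {y ε : ℝ} (hε : 0 < ε) :
    ContinuousOn (fun t => t⁻¹ * (log ((y - t) / t) ^ n / (n ! * (y - t)))) (Icc ε (y / 2)) := by
  have h_pos {t} (ht : t ∈ Icc ε (y / 2)) : 0 < t ∧ 0 < y - t :=
    ⟨hε.trans_le ht.1, by linarith [ht.1, ht.2]⟩
  refine (continuousOn_inv₀.mono fun t ht => (h_pos ht).1.ne').mul <|
    ContinuousOn.div (ContinuousOn.pow (ContinuousOn.log ?_ fun t ht => ?_) n) (by fun_prop)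
      fun t ht => ?_
  · exact ContinuousOn.div (by fun_prop) (by fun_prop) fun t ht => (h_pos ht).1.ne'
  · exact (div_pos (h_pos ht).2 (h_pos ht).1).ne'
  · have := (h_pos ht).2; positivity

theorem integral_inv_mul_log_div_pow (n : ℕ) {y ε : ℝ} (hε : 0 < ε) (hεy : ε ≤ y / 2) :
    ∫ t in ε..y / 2, t⁻¹ * (log ((y - t) / t) ^ n / (n ! * (y - t))) =
      log ((y - ε) / ε) ^ (n + 1) / ((n + 1)! * y) := by
  have h_deriv (t) (ht : t ∈ uIcc ε (y / 2)) : HasDerivAt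
      (fun s => -log ((y - s) / s) ^ (n + 1) / ((n + 1)! * y))
      (t⁻¹ * (log ((y - t) / t) ^ n / (n ! * (y - t)))) t := by
    rw [uIcc_of_le hεy] at ht
    have ht0 : 0 < t := hε.trans_le ht.1
    have hyt : 0 < y - t := by linarith [ht.2]
    have hy : 0 < y := by linarith
    have h_ratio := ((hasDerivAt_id' t).const_sub y).div (hasDerivAt_id' t) ht0.ne'
    have := ((h_ratio.log (div_pos hyt ht0).ne').fun_pow (n + 1)).fun_neg.div_const ((n + 1)! * y)
    refine this.congr_deriv ?_
    simp only [Pi.div_apply, Nat.factorial_succ, Nat.add_sub_cancel]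
    push_cast
    field_simp
    ring
  have h_int := (continuousOn_inv_mul_log_div_pow n hε).intervalIntegrable_of_Icc (μ := volume) hεy
  rw [intervalIntegral.integral_eq_sub_of_hasDerivAt h_deriv h_int]
  have : (y - y / 2) / (y / 2) = 1 := by
    have : 0 < y := by linarith
    field_simp; ring
  simp [this]
  ring

theorem setLIntegral_Icc_ofReal_inv_mul_log_div_pow (n : ℕ) {y ε : ℝ} (hε : 0 < ε)
    (hεy : ε ≤ y / 2) :
    ∫⁻ t in Icc ε (y / 2), ENNReal.ofReal (t⁻¹ * (log ((y - t) / t) ^ n / (n ! * (y - t)))) =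
      ENNReal.ofReal (log ((y - ε) / ε) ^ (n + 1) / ((n + 1)! * y)) := by
  have h_nonneg : ∀ t ∈ Icc ε (y / 2), 0 ≤ t⁻¹ * (log ((y - t) / t) ^ n / (n ! * (y - t))) :=
    fun t ⟨hεt, hty⟩ => by
      have ht : 0 < t := hε.trans_le hεt
      have hyt : 0 < y - t := by linarith
      have : 0 ≤ log ((y - t) / t) := log_nonneg ((le_div_iff₀ ht).2 (by linarith))
      positivity
  rw [← ofReal_integral_eq_lintegral_ofReal
      ((continuousOn_inv_mul_log_div_pow n hε).integrableOn_compact isCompact_Icc)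
      ((ae_restrict_iff' measurableSet_Icc).2 (ae_of_all _ h_nonneg)),
    integral_Icc_eq_integral_Ioc, ← intervalIntegral.integral_of_le hεy,
    integral_inv_mul_log_div_pow n hε hεy]

theorem simplexLIntegral_le (n : ℕ) {y ε : ℝ} (hε : 0 < ε) (hεy : ε ≤ y) :
    simplexLIntegral n y ε ≤ ENNReal.ofReal (log (y / ε) ^ n / (n ! * y)) := by
  induction n generalizing y ε with
  | zero => simp [simplexLIntegral_zero hεy]
  | succ n ih =>
    set g : ℝ → ℝ := fun t => t⁻¹ * (log ((y - t) / t) ^ n / (n ! * (y - t)))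
    have h_pt (t : ℝ) :
        (Ici ε).indicator (fun t => ENNReal.ofReal t⁻¹ * simplexLIntegral n (y - t) t) t ≤
          (Icc ε (y / 2)).indicator (fun t => ENNReal.ofReal (g t)) t := by
      by_cases hεt : ε ≤ t
      · have ht : 0 < t := hε.trans_le hεt
        rw [indicator_of_mem (mem_Ici.2 hεt)]
        by_cases hty : t ≤ y / 2
        · rw [indicator_of_mem (mem_Icc.2 ⟨hεt, hty⟩), ENNReal.ofReal_mul (inv_nonneg.2 ht.le)]
          exact mul_le_mul_right (ih ht (by linarith)) _
        · rw [simplexLIntegral_eq_zero ht.le (by linarith), mul_zero]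
          exact zero_le
      · simp [indicator_of_notMem (notMem_Ici.2 (not_le.1 hεt))]
    rw [simplexLIntegral_succ n y hε.le, ← lintegral_indicator measurableSet_Ici]
    refine (lintegral_mono h_pt).trans ?_
    rw [lintegral_indicator measurableSet_Icc]
    rcases lt_or_ge (y / 2) ε with h | h
    · simp [Icc_eq_empty_of_lt h]
    rw [setLIntegral_Icc_ofReal_inv_mul_log_div_pow n hε h]
    have hy : 0 < y := by linarith
    have h_log : 0 ≤ log ((y - ε) / ε) := log_nonneg ((le_div_iff₀ hε).2 (by linarith))
    gcongr
    · exact div_pos (by linarith) hε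
    · linarith

theorem setLIntegral_Icc_ofReal_inv {a b : ℝ} (ha : 0 < a) (hab : a ≤ b) :
    ∫⁻ t in Icc a b, ENNReal.ofReal t⁻¹ = ENNReal.ofReal (log (b / a)) := by
  have h_int : IntegrableOn (fun t : ℝ => t⁻¹) (Icc a b) :=
    (continuousOn_inv₀.mono fun t ht => (ha.trans_le ht.1).ne').integrableOn_compact isCompact_Icc
  rw [← ofReal_integral_eq_lintegral_ofReal h_int ((ae_restrict_iff' measurableSet_Icc).2
      (ae_of_all _ fun t ht => inv_nonneg.2 (ha.trans_le ht.1).le)),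
    integral_Icc_eq_integral_Ioc, ← intervalIntegral.integral_of_le hab,
    integral_inv_of_pos ha (ha.trans_le hab)]

section Box

variable {n : ℕ} {ε T : ℝ}

theorem setLIntegral_box_prod_inv (hε : 0 < ε) (hεT : ε ≤ T) :
    ∫⁻ b in univ.pi fun _ : Fin n => Icc ε T, ∏ i, ENNReal.ofReal (b i)⁻¹ =
      ENNReal.ofReal (log (T / ε)) ^ n := by
  rw [volume_pi, setLIntegral_univ_pi_prod _ _ (g := fun _ t => ENNReal.ofReal t⁻¹)
    fun _ => by fun_prop]
  simp [setLIntegral_Icc_ofReal_inv hε hεT]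

theorem setLIntegral_box_mul_prod_inv (hε : 0 < ε) (hεT : ε ≤ T) (j : Fin n) :
    ∫⁻ b in univ.pi fun _ : Fin n => Icc ε T, ENNReal.ofReal (b j) * ∏ i, ENNReal.ofReal (b i)⁻¹ =
      ENNReal.ofReal (T - ε) * ENNReal.ofReal (log (T / ε)) ^ (n - 1) := by
  set g : Fin n → ℝ → ℝ≥0∞ := Function.update (fun _ t => ENNReal.ofReal t⁻¹) j 1
  have h_eq : EqOn (fun b : Fin n → ℝ => ENNReal.ofReal (b j) * ∏ i, ENNReal.ofReal (b i)⁻¹)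
      (fun b => ∏ i, g i (b i)) (univ.pi fun _ => Icc ε T) := fun b hb => by
    have hbj : 0 < b j := hε.trans_le (hb j trivial).1
    dsimp only
    rw [← Finset.mul_prod_erase _ _ (Finset.mem_univ j), ← mul_assoc,
      ← ENNReal.ofReal_mul hbj.le, mul_inv_cancel₀ hbj.ne', ENNReal.ofReal_one, one_mul,
      ← Finset.mul_prod_erase _ _ (Finset.mem_univ j)]
    simp only [g, Function.update_self, Pi.one_apply, one_mul]
    exact Finset.prod_congr rfl fun i hi => by
      rw [Function.update_of_ne (Finset.ne_of_mem_erase hi)]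
  rw [setLIntegral_congr_fun (MeasurableSet.univ_pi fun _ => measurableSet_Icc) h_eq, volume_pi,
    setLIntegral_univ_pi_prod _ _ fun i => ?_]
  · have h_erase : ∀ i ∈ Finset.univ.erase j,
        ∫⁻ t in Icc ε T, g i t = ENNReal.ofReal (log (T / ε)) := fun i hi => by
      simp only [g, Function.update_of_ne (Finset.ne_of_mem_erase hi)]
      exact setLIntegral_Icc_ofReal_inv hε hεT
    rw [← Finset.mul_prod_erase _ _ (Finset.mem_univ j), Finset.prod_congr rfl h_erase,
      Finset.prod_const, Finset.card_erase_of_mem (Finset.mem_univ j), Finset.card_fin]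
    simp [g]
  · rcases eq_or_ne i j with rfl | hij
    · simpa [g] using measurable_one
    · simp only [g, Function.update_of_ne hij]; fun_prop


theorem setLIntegral_box_inter_sum_gt_le (hε : 0 < ε) (hεT : ε ≤ T) {s : ℝ} (hs : 0 < s) :
    ∫⁻ b in (univ.pi fun _ : Fin n => Icc ε T) ∩ {b | s < ∑ i, b i}, ∏ i, ENNReal.ofReal (b i)⁻¹ ≤
      ENNReal.ofReal (n * (T - ε) * log (T / ε) ^ (n - 1) / s) := by
  set box := univ.pi fun _ : Fin n => Icc ε T
  have h_box : MeasurableSet box := MeasurableSet.univ_pi fun _ => measurableSet_Icc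
  have h_markov : ∀ b ∈ box ∩ {b | s < ∑ i, b i}, ∏ i, ENNReal.ofReal (b i)⁻¹ ≤
      ENNReal.ofReal s⁻¹ * ∑ j, ENNReal.ofReal (b j) * ∏ i, ENNReal.ofReal (b i)⁻¹ := by
    rintro b ⟨hb, hsum⟩
    have h_nonneg : ∀ j, 0 ≤ b j := fun j => hε.le.trans (hb j trivial).1
    have h_one : 1 ≤ ENNReal.ofReal s⁻¹ * ∑ j, ENNReal.ofReal (b j) := by
      rw [← ENNReal.ofReal_sum_of_nonneg fun j _ => h_nonneg j,
        ← ENNReal.ofReal_mul (by positivity),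
        ← ENNReal.ofReal_one]
      exact ENNReal.ofReal_le_ofReal ((le_inv_mul_iff₀ hs).2 (by simpa using hsum.le))
    calc ∏ i, ENNReal.ofReal (b i)⁻¹ ≤ (ENNReal.ofReal s⁻¹ * ∑ j, ENNReal.ofReal (b j)) *
          ∏ i, ENNReal.ofReal (b i)⁻¹ := le_mul_of_one_le_left' h_one
      _ = _ := by rw [mul_assoc, Finset.sum_mul]
  calc _ ≤ ∫⁻ b in box ∩ {b | s < ∑ i, b i},
        ENNReal.ofReal s⁻¹ * ∑ j, ENNReal.ofReal (b j) * ∏ i, ENNReal.ofReal (b i)⁻¹ :=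
        setLIntegral_mono' (h_box.inter (measurableSet_lt (by fun_prop) (by fun_prop))) h_markov
    _ ≤ ∫⁻ b in box, ENNReal.ofReal s⁻¹ * ∑ j, ENNReal.ofReal (b j) * ∏ i, ENNReal.ofReal (b i)⁻¹ :=
        lintegral_mono_set inter_subset_left
    _ = _ := by
      rw [lintegral_const_mul _ (by fun_prop), lintegral_finsetSum _ fun j _ => by fun_prop]
      simp only [box, setLIntegral_box_mul_prod_inv hε hεT, Finset.sum_const, Finset.card_univ,
        Fintype.card_fin, nsmul_eq_mul]
      have h_log : 0 ≤ log (T / ε) := log_nonneg ((le_div_iff₀ hε).2 (by linarith))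
      rw [div_eq_inv_mul _ s, ENNReal.ofReal_mul (by positivity),
        ENNReal.ofReal_mul (by nlinarith [n.cast_nonneg (α := ℝ)]),
        ENNReal.ofReal_mul n.cast_nonneg, ENNReal.ofReal_natCast, ENNReal.ofReal_pow h_log,
        mul_assoc]

theorem ofReal_half_le_setLIntegral_box_inter_sum_le (hε : 0 < ε) (hεT : ε ≤ T) {s : ℝ}
    (hs : 0 < s) (hn : 2 * n * T ≤ s * log (T / ε)) :
    ENNReal.ofReal (log (T / ε) ^ n / 2) ≤
      ∫⁻ b in (univ.pi fun _ : Fin n => Icc ε T) ∩ {b | ∑ i, b i ≤ s},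
        ∏ i, ENNReal.ofReal (b i)⁻¹ := by
  set L := log (T / ε)
  have hL : 0 ≤ L := log_nonneg ((le_div_iff₀ hε).2 (by linarith))
  have h_bad : n * (T - ε) * L ^ (n - 1) / s ≤ L ^ n / 2 := by
    rw [div_le_div_iff₀ hs two_pos]
    rcases n with _ | n
    · simp; positivity
    · push_cast at hn ⊢
      rw [pow_succ]
      have h_lin : (n + 1) * (T - ε) * 2 ≤ s * L := by nlinarith [n.cast_nonneg (α := ℝ)]
      nlinarith [mul_le_mul_of_nonneg_right h_lin (pow_nonneg hL n)]
  have h_split := lintegral_inter_add_sdiff (μ := volume)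
    (fun b : Fin n → ℝ => ∏ i, ENNReal.ofReal (b i)⁻¹)
    (univ.pi fun _ : Fin n => Icc ε T) (measurableSet_le (by fun_prop) measurable_const :
      MeasurableSet {b : Fin n → ℝ | ∑ i, b i ≤ s})
  rw [sdiff_eq, compl_ofPred, setLIntegral_box_prod_inv hε hεT] at h_split
  simp only [not_le] at h_split
  have h_le := (setLIntegral_box_inter_sum_gt_le hε hεT hs).trans (ENNReal.ofReal_le_ofReal h_bad)
  refine (ENNReal.add_le_add_iff_right (ENNReal.ofReal_ne_top (r := L ^ n / 2))).1 ?_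
  calc ENNReal.ofReal (L ^ n / 2) + ENNReal.ofReal (L ^ n / 2) = ENNReal.ofReal L ^ n := by
        rw [← ENNReal.ofReal_add (by positivity) (by positivity), add_halves,
          ENNReal.ofReal_pow hL]
    _ = _ := h_split.symm
    _ ≤ _ := by gcongr

end Box

theorem simplexKernel_comp_perm {n : ℕ} (y : ℝ) (σ : Equiv.Perm (Fin n)) (b : Fin n → ℝ) :
    simplexKernel y (b ∘ σ) = simplexKernel y b := by
  simp only [simplexKernel, Function.comp_apply, Equiv.prod_comp σ b, Equiv.sum_comp σ b]

theorem ofReal_div_le_factorial_mul_simplexLIntegral {n : ℕ} {y ε T : ℝ} (hε : 0 < ε)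
    (hεT : ε ≤ T) (hTy : T ≤ y / 2) (hn : 4 * n * T ≤ y * log (T / ε)) :
    ENNReal.ofReal (log (T / ε) ^ n / (2 * y)) ≤ n ! * simplexLIntegral n y ε := by
  have hy : 0 < y := by linarith
  set R := (univ.pi fun _ : Fin n => Icc ε T) ∩ {b | ∑ i, b i ≤ y / 2}
  have hR : MeasurableSet R := (MeasurableSet.univ_pi fun _ => measurableSet_Icc).inter
    (measurableSet_le (by fun_prop) measurable_const)
  have h_kernel :
      ∀ b ∈ R, ENNReal.ofReal y⁻¹ * ∏ i, ENNReal.ofReal (b i)⁻¹ ≤ simplexKernel y b := by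
    rintro b ⟨hb, hsum⟩
    have hb0 : ∀ i, 0 < b i := fun i => hε.trans_le (hb i trivial).1
    have hsum : ∑ i, b i ≤ y / 2 := hsum
    have h_sum : y - ∑ i, b i ≤ y := sub_le_self _ (Finset.sum_nonneg fun i _ => (hb0 i).le)
    rw [simplexKernel, ← ENNReal.ofReal_prod_of_nonneg fun i _ => inv_nonneg.2 (hb0 i).le,
      ← ENNReal.ofReal_mul (by positivity), Finset.prod_inv_distrib, mul_inv, mul_comm]
    have : 0 < ∏ i, b i := Finset.prod_pos fun i _ => hb0 i
    exact ENNReal.ofReal_le_ofReal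
      (mul_le_mul_of_nonneg_left (inv_anti₀ (by linarith) h_sum) (by positivity))
  have h_sort : ∀ b ∈ R, ∃ σ : Equiv.Perm (Fin n), b ∘ σ ∈ sortedSimplex n y ε := by
    rintro b ⟨hb, hsum⟩
    have hsum : ∑ i, b i ≤ y / 2 := hsum
    refine ⟨Tuple.sort b, Tuple.monotone_sort b, fun i => (hb _ trivial).1, fun i => ?_, ?_⟩ <;>
      simp only [Function.comp_apply, Equiv.sum_comp (Tuple.sort b) b]
    · linarith [(hb (Tuple.sort b i) trivial).2]
    · linarith
  calc ENNReal.ofReal (log (T / ε) ^ n / (2 * y))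
      = ENNReal.ofReal y⁻¹ * ENNReal.ofReal (log (T / ε) ^ n / 2) := by
        rw [← ENNReal.ofReal_mul (by positivity)]
        ring_nf
    _ ≤ ENNReal.ofReal y⁻¹ * ∫⁻ b in R, ∏ i, ENNReal.ofReal (b i)⁻¹ := by
        gcongr
        exact ofReal_half_le_setLIntegral_box_inter_sum_le hε hεT (by positivity) (by linarith)
    _ = ∫⁻ b in R, ENNReal.ofReal y⁻¹ * ∏ i, ENNReal.ofReal (b i)⁻¹ :=
        (lintegral_const_mul _ (by fun_prop)).symm
    _ ≤ ∫⁻ b in R, simplexKernel y b := setLIntegral_mono' hR h_kernel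
    _ ≤ n ! * simplexLIntegral n y ε :=
        setLIntegral_le_factorial_mul (measurable_simplexKernel n y) (simplexKernel_comp_perm y)
          (measurableSet_sortedSimplex n y ε) h_sort

theorem exp_neg_mul_pow_le_pow {L L₁ c : ℝ} (n : ℕ) (hL₁ : 0 < L₁) (hL : 0 ≤ L)
    (h : n * (L - L₁) ≤ c * L₁) : exp (-c) * L ^ n ≤ L₁ ^ n := by
  have h_lin : L ≤ L₁ * exp ((L - L₁) / L₁) := by
    have := add_one_le_exp ((L - L₁) / L₁)
    rw [div_add_one hL₁.ne', sub_add_cancel, div_le_iff₀ hL₁] at this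
    linarith
  have h_pow : L ^ n ≤ L₁ ^ n * exp c :=
    calc L ^ n ≤ (L₁ * exp ((L - L₁) / L₁)) ^ n := pow_le_pow_left₀ hL h_lin n
      _ = L₁ ^ n * exp (n * (L - L₁) / L₁) := by rw [mul_pow, ← exp_nat_mul, mul_div_assoc]
      _ ≤ L₁ ^ n * exp c := by gcongr; exact (div_le_iff₀ hL₁).2 h
  rw [exp_neg, inv_mul_le_iff₀ (exp_pos c)]
  linarith

theorem eight_mul_log_le_seven_mul_log {A x : ℝ} (hA : 1 ≤ A) (hx : 100 * A ^ 2 ≤ x) :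
    8 * log (32 * A) ≤ 7 * log x := by
  have h_pow : (32 * A) ^ 8 ≤ x ^ 7 :=
    calc (32 * A) ^ 8 = 32 ^ 8 * A ^ 8 := by ring
      _ ≤ 100 ^ 7 * A ^ 14 :=
        mul_le_mul (by norm_num) (pow_le_pow_right₀ hA (by norm_num)) (by positivity)
          (by norm_num)
      _ = (100 * A ^ 2) ^ 7 := by ring
      _ ≤ x ^ 7 := pow_le_pow_left₀ (by positivity) hx 7
  have := log_le_log (by positivity) h_pow
  rw [log_pow, log_pow] at this
  push_cast at this
  linarith

theorem simplexLIntegral_ge {A y ε : ℝ} (n : ℕ) (hA : 1 ≤ A) (hε : 0 < ε)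
    (hy : 100 * A ^ 2 * ε ≤ y) (hn : n ≤ A * log (y / ε)) :
    ENNReal.ofReal (exp (-(8 * A * log (32 * A))) / 2 * (log (y / ε) ^ n / (n ! * y))) ≤
      simplexLIntegral n y ε := by
  set L := log (y / ε)
  set g := log (32 * A)
  have hy0 : 0 < y := lt_of_lt_of_le (by positivity) hy
  have h_ratio : 100 * A ^ 2 ≤ y / ε := (le_div_iff₀ hε).2 hy
  have hg : 0 ≤ g := log_nonneg (by linarith)
  have hgL : 8 * g ≤ 7 * L := eight_mul_log_le_seven_mul_log hA h_ratio
  have hL : 0 < L := log_pos (by nlinarith)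
  have hLg : log (y / (32 * A) / ε) = L - g := by
    rw [div_right_comm, log_div (by positivity) (by positivity)]
  have hn' : (n : ℝ) ≤ 8 * A * (L - g) := by nlinarith
  have h_main := ofReal_div_le_factorial_mul_simplexLIntegral (n := n) hε
    (T := y / (32 * A)) ((le_div_iff₀ (by positivity)).2 (by nlinarith))
    (div_le_div_of_nonneg_left hy0.le two_pos (by linarith))
    (by
      rw [hLg, show 4 * (n : ℝ) * (y / (32 * A)) = y * (n / (8 * A)) by field_simp; ring]
      exact mul_le_mul_of_nonneg_left ((div_le_iff₀ (by positivity)).2 (by linarith)) hy0.le)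
  rw [hLg] at h_main
  have h_num := exp_neg_mul_pow_le_pow n (L₁ := L - g) (c := 8 * A * g) (by linarith) hL.le
    (by nlinarith)
  have h_fact : (0 : ℝ) < n ! := by positivity
  rw [← ENNReal.mul_le_mul_iff_right (Nat.cast_ne_zero.2 n.factorial_ne_zero)
    (ENNReal.natCast_ne_top _)]
  calc (n ! : ℝ≥0∞) * ENNReal.ofReal (exp (-(8 * A * g)) / 2 * (L ^ n / (n ! * y)))
      = ENNReal.ofReal (exp (-(8 * A * g)) * L ^ n / (2 * y)) := by
        rw [← ENNReal.ofReal_natCast, ← ENNReal.ofReal_mul (by positivity)]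
        congr 1
        field_simp
    _ ≤ ENNReal.ofReal ((L - g) ^ n / (2 * y)) := by gcongr
    _ ≤ _ := h_main

theorem mSimplex_eq_toReal (k : ℕ) (y : ℝ) {ε : ℝ} (hε : 0 ≤ ε) :
    mSimplex k y ε = (simplexLIntegral (k - 1) y ε).toReal := by
  have h_nonneg : 0 ≤ᵐ[volume.restrict (sortedSimplex (k - 1) y ε)]
      fun b : Fin (k - 1) → ℝ => ((∏ i, b i) * (y - ∑ j, b j))⁻¹ :=
    (ae_restrict_iff' (measurableSet_sortedSimplex _ y ε)).2 <| ae_of_all _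
      fun b ⟨_, hb, _, hlast⟩ => inv_nonneg.2 <|
        mul_nonneg (Finset.prod_nonneg fun i _ => hε.trans (hb i)) (hε.trans hlast)
  exact integral_eq_lintegral_of_nonneg_ae h_nonneg (by fun_prop)

/-- For `k ≥ 1`, `ε > 0`, `y ≥ ε`:
`m_k(y,ε) ≤ (log(y/ε))^(k-1)/((k-1)!·y)`.  Moreover, for any fixed `A ≥ 1` there is a
constant `C > 0` (depending only on `A`) such that uniformly for `y ≥ 100A²ε > 0` and
`1 ≤ k ≤ A log(y/ε)` one has `m_k(y,ε) ≥ C (log(y/ε))^(k-1)/((k-1)!·y)`. -/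
theorem mSimplex_bounds :
    (∀ (k : ℕ) (y ε : ℝ), 1 ≤ k → 0 < ε → ε ≤ y →
      mSimplex k y ε ≤ Real.log (y / ε) ^ (k - 1) / ((k - 1).factorial * y)) ∧
    (∀ A : ℝ, 1 ≤ A → ∃ C : ℝ, 0 < C ∧
      ∀ (k : ℕ) (y ε : ℝ), 0 < ε → 100 * A ^ 2 * ε ≤ y → 1 ≤ k →
        (k : ℝ) ≤ A * Real.log (y / ε) →
        C * (Real.log (y / ε) ^ (k - 1) / ((k - 1).factorial * y)) ≤ mSimplex k y ε) := by
  refine ⟨fun k y ε _ hε hεy => ?_, fun A hA => ⟨exp (-(8 * A * log (32 * A))) / 2,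
    div_pos (exp_pos _) two_pos, fun k y ε hε hy _ hkA => ?_⟩⟩
  · have hy : 0 < y := hε.trans_le hεy
    have h_log : 0 ≤ log (y / ε) := log_nonneg ((one_le_div hε).2 hεy)
    rw [mSimplex_eq_toReal k y hε.le]
    exact ENNReal.toReal_le_of_le_ofReal (by positivity) (simplexLIntegral_le (k - 1) hε hεy)
  · have hεy : ε ≤ y := (le_mul_of_one_le_left hε.le (by nlinarith)).trans hy
    rw [mSimplex_eq_toReal k y hε.le, ← ENNReal.ofReal_le_iff_le_toReal
      (ne_top_of_le_ne_top ENNReal.ofReal_ne_top (simplexLIntegral_le (k - 1) hε hεy))]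
    exact simplexLIntegral_ge (k - 1) hA hε hy ((Nat.cast_le.2 (k.sub_le 1)).trans hkA)
end

section
/- Let 0 < ν ≤ 1/3 and P = (1/2, 0, ν). Then the set ℋ(P) of coagulations, with at least two components all of size ≥ ν, of vectors in ℛ(P), equals the set of all vectors x of dimension ≥ 2 with |x| = 1 and every component x_i ∈ (ν, 1-2ν) ∪ (2ν, 1-ν). -/
open scoped Classical

private lemma card_mul_lt_sum' {ι : Type*} (s : Finset ι) (hs : s.Nonempty) (f : ι → ℝ) (b : ℝ)
    (h : ∀ i ∈ s, b < f i) : (s.card : ℝ) * b < ∑ i ∈ s, f i := by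
  have := Finset.sum_lt_sum_of_nonempty hs h
  simpa [Finset.sum_const, nsmul_eq_mul] using this

private lemma sum_lt_card_mul' {ι : Type*} (s : Finset ι) (hs : s.Nonempty) (f : ι → ℝ) (b : ℝ)
    (h : ∀ i ∈ s, f i < b) : ∑ i ∈ s, f i < (s.card : ℝ) * b := by
  have := Finset.sum_lt_sum_of_nonempty hs h
  simpa [Finset.sum_const, nsmul_eq_mul] using this

/-- Index type used to split the components of `x`. -/
abbrev SType {n : ℕ} (x : Fin n → ℝ) : Type := (Fin n) ⊕ {i : Fin n // (1:ℝ)/2 ≤ x i}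

/-- Values of the disaggregated vector. -/
noncomputable def sg {n : ℕ} (x : Fin n → ℝ) : SType x → ℝ :=
  Sum.elim (fun i => if (1:ℝ)/2 ≤ x i then x i / 2 else x i) (fun s => x s.1 / 2)

/-- Projection to the original index. -/
def sp {n : ℕ} (x : Fin n → ℝ) : SType x → Fin n :=
  Sum.elim id Subtype.val

private lemma sp_fiber_sum {n : ℕ} (x : Fin n → ℝ) (i : Fin n) :
    ∑ t ∈ Finset.univ.filter (fun t => sp x t = i), sg x t = x i := by
  rw [Finset.sum_filter, Fintype.sum_sum_type]
  have h1 : ∑ j : Fin n, (if sp x (Sum.inl j) = i then sg x (Sum.inl j) else 0)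
      = (if (1:ℝ)/2 ≤ x i then x i / 2 else x i) := by
    simp [sp, sg, Finset.sum_ite_eq']
  rw [h1]
  by_cases hi : (1:ℝ)/2 ≤ x i
  · have h2 : ∑ s : {j : Fin n // (1:ℝ)/2 ≤ x j},
        (if sp x (Sum.inr s) = i then sg x (Sum.inr s) else 0) = x i / 2 := by
      rw [Finset.sum_eq_single_of_mem ⟨i, hi⟩ (Finset.mem_univ _)]
      · simp [sp, sg]
      · intro s _ hs
        rw [if_neg]
        intro h
        exact hs (Subtype.ext h)
    rw [h2, if_pos hi]; ring
  · have h2 : ∑ s : {j : Fin n // (1:ℝ)/2 ≤ x j},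
        (if sp x (Sum.inr s) = i then sg x (Sum.inr s) else 0) = 0 := by
      apply Finset.sum_eq_zero
      intro s _
      rw [if_neg]
      intro h
      have h' : s.1 = i := h
      exact hi (h' ▸ s.2)
    rw [h2, if_neg hi]; ring

/-- Let `0 < ν ≤ 1/3` and `P = (1/2, 0, ν)`.  A vector `x` lies in
`ℋ(P)` — i.e. `x` has at least two components, all components `≥ ν`, and `x` is a
coagulation of some vector of `ℛ(P)` — if and only if `x` has dimension `≥ 2`,
`|x| = 1`, and every component lies in `(ν, 1-2ν) ∪ (2ν, 1-ν)`. -/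
theorem H_characterization_gamma_half (ν : ℝ) (hν : 0 < ν) (hν3 : ν ≤ 1 / 3)
    (n : ℕ) (x : Fin n → ℝ) :
    (2 ≤ n ∧ (∀ i, ν ≤ x i) ∧
      ∃ (m : ℕ) (y : Fin m → ℝ) (π : Fin m → Fin n), Function.Surjective π ∧
        MemR (1 / 2) 0 ν y ∧
        ∀ i, x i = ∑ a ∈ Finset.univ.filter (fun a => π a = i), y a)
    ↔ (2 ≤ n ∧ (∑ i, x i) = 1 ∧
        ∀ i, x i ∈ Set.Ioo ν (1 - 2 * ν) ∪ Set.Ioo (2 * ν) (1 - ν)) := by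
  constructor
  · rintro ⟨hn, -, m, y, π, hπ, ⟨hy01, hysum, hyA⟩, hfib⟩
    have hm2 : 2 ≤ m := by
      by_contra h
      push_neg at h
      interval_cases m
      · simp at hysum
      · rw [Fin.sum_univ_one] at hysum
        have := (hy01 0).2
        norm_num at this
        linarith
    have hyν : ∀ a : Fin m, ν < y a := by
      intro a
      have hne : ({a} : Finset (Fin m)) ≠ Finset.univ := by
        intro h
        have h1 : (({a} : Finset (Fin m)).card) = m := by
          rw [h, Finset.card_univ, Fintype.card_fin]
        simp at h1; omega
      have := hyA {a} (Finset.singleton_nonempty a) hne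
      simp only [Set.mem_Icc, Finset.sum_singleton, zero_add, not_and, not_le] at this
      exact this (hy01 a).1.le
    have hy12 : ∀ a : Fin m, y a < 1/2 := by
      intro a
      have := (hy01 a).2
      norm_num at this
      linarith
    refine ⟨hn, ?_, ?_⟩
    · rw [Finset.sum_congr rfl fun i _ => hfib i, Finset.sum_fiberwise]
      exact hysum
    · intro i
      set B := Finset.univ.filter (fun a => π a = i) with hB
      obtain ⟨a, ha⟩ := hπ i
      have haB : a ∈ B := by simp [hB, ha]
      have hBne : B.Nonempty := ⟨a, haB⟩
      have hxB : x i = ∑ a ∈ B, y a := hfib i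
      have hcompl : ∑ a ∈ Bᶜ, y a = 1 - x i := by
        have h := Finset.sum_add_sum_compl B y
        rw [hysum] at h
        linarith [hxB]
      have hBcne : Bᶜ.Nonempty := by
        have hnt : Nontrivial (Fin n) := Fin.nontrivial_iff_two_le.mpr hn
        obtain ⟨j, hj⟩ := exists_ne i
        obtain ⟨b, hb⟩ := hπ j
        refine ⟨b, ?_⟩
        simp only [Finset.mem_compl, hB, Finset.mem_filter, Finset.mem_univ, true_and]
        rw [hb]; exact hj
      have hlow : (B.card : ℝ) * ν < x i := by
        rw [hxB]; exact card_mul_lt_sum' B hBne y ν (fun a _ => hyν a)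
      have hup : x i < (B.card : ℝ) * (1/2) := by
        rw [hxB]; exact sum_lt_card_mul' B hBne y (1/2) (fun a _ => hy12 a)
      have hclow : (Bᶜ.card : ℝ) * ν < 1 - x i := by
        rw [← hcompl]; exact card_mul_lt_sum' _ hBcne y ν (fun a _ => hyν a)
      have hcup : 1 - x i < (Bᶜ.card : ℝ) * (1/2) := by
        rw [← hcompl]; exact sum_lt_card_mul' _ hBcne y (1/2) (fun a _ => hy12 a)
      have hB1 : 1 ≤ B.card := Finset.card_pos.mpr hBne
      have hBc1 : 1 ≤ Bᶜ.card := Finset.card_pos.mpr hBcne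
      by_cases h2 : 2 ≤ B.card
      · right
        have hc2 : (2:ℝ) ≤ (B.card : ℝ) := by exact_mod_cast h2
        have hcc1 : (1:ℝ) ≤ (Bᶜ.card : ℝ) := by exact_mod_cast hBc1
        constructor
        · nlinarith
        · nlinarith
      · have hBcard : B.card = 1 := by omega
        by_cases h2c : 2 ≤ Bᶜ.card
        · left
          have hc1 : (1:ℝ) ≤ (B.card : ℝ) := by exact_mod_cast hB1
          have hcc2 : (2:ℝ) ≤ (Bᶜ.card : ℝ) := by exact_mod_cast h2c
          constructor
          · nlinarith
          · nlinarith
        · exfalso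
          have hBccard : Bᶜ.card = 1 := by omega
          rw [hBcard] at hup
          rw [hBccard] at hcup
          norm_num at hup hcup
          linarith
  · rintro ⟨hn, hsum, hmem⟩
    have hxν : ∀ i, ν < x i := by
      intro i
      rcases hmem i with h | h
      · exact h.1
      · have := h.1; linarith
    have hxlt : ∀ i, x i < 1 - ν := by
      intro i
      rcases hmem i with h | h
      · have := h.2; linarith
      · exact h.2
    have hbig : ∀ i, (1:ℝ)/2 ≤ x i → 2 * ν < x i := by
      intro i h
      rcases hmem i with hh | hh
      · have := hh.2; linarith
      · exact hh.1
    have hgν : ∀ t : SType x, ν < sg x t := by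
      intro t
      match t with
      | Sum.inl i =>
        by_cases hi : (1:ℝ)/2 ≤ x i
        · simp only [sg, Sum.elim_inl, if_pos hi]
          have := hbig i hi; linarith
        · simp only [sg, Sum.elim_inl, if_neg hi]
          exact hxν i
      | Sum.inr s =>
        simp only [sg, Sum.elim_inr]
        have := hbig s.1 s.2; linarith
    have hg12 : ∀ t : SType x, sg x t < 1/2 := by
      intro t
      match t with
      | Sum.inl i =>
        by_cases hi : (1:ℝ)/2 ≤ x i
        · simp only [sg, Sum.elim_inl, if_pos hi]
          have := hxlt i; linarith
        · simp only [sg, Sum.elim_inl, if_neg hi]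
          linarith [not_le.mp hi]
      | Sum.inr s =>
        simp only [sg, Sum.elim_inr]
        have := hxlt s.1; linarith
    set e := Fintype.equivFin (SType x) with he
    refine ⟨hn, fun i => (hxν i).le, Fintype.card (SType x), sg x ∘ e.symm, sp x ∘ e.symm,
      ?_, ⟨?_, ?_, ?_⟩, ?_⟩
    · intro i
      exact ⟨e (Sum.inl i), by simp [sp]⟩
    · intro a
      simp only [Function.comp_apply]
      refine ⟨by linarith [hgν (e.symm a)], ?_⟩
      have := hg12 (e.symm a)
      norm_num
      linarith
    · simp only [Function.comp_apply]
      rw [show (∑ a, sg x (e.symm a)) = ∑ t, sg x t from Equiv.sum_comp e.symm (sg x)]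
      rw [← Finset.sum_fiberwise Finset.univ (sp x) (sg x)]
      rw [Finset.sum_congr rfl fun i _ => sp_fiber_sum x i]
      exact hsum
    · intro A hA _
      obtain ⟨a, ha⟩ := hA
      have h1 : ν < ∑ b ∈ A, (sg x ∘ e.symm) b := by
        calc ν < (sg x ∘ e.symm) a := hgν (e.symm a)
        _ ≤ ∑ b ∈ A, (sg x ∘ e.symm) b :=
          Finset.single_le_sum (fun b _ => by
            simp only [Function.comp_apply]; linarith [hgν (e.symm b), hν]) ha
      simp only [Set.mem_Icc, zero_add, not_and, not_le]
      intro _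
      exact h1
    · intro i
      have := sp_fiber_sum x i
      rw [← this]
      refine Finset.sum_equiv e ?_ ?_
      · intro t
        simp
      · intro t _
        simp
end

section
/- Suppose (γ,θ,ν) satisfies 0 < γ < 1, 0 ≤ θ < 1/2, 0 < ν ≤ 1-θ, with additionally 1-γ ≥ θ+ν and 1/2 ≤ γ. Let M = ⌊1/(1-γ)⌋. Then condition (A1) — for every integer n ≥ M+1 there exists a positive integer a with a/n ∈ [θ,θ+ν] — holds if and only if [θ,θ+ν] contains one of the intervals [1/(2M+1), 1/(M+1)], [1/(2M), 2/(2M+1)], or [1/(2M-1), 1/M] (the last case possible only if 1-γ = θ+ν = 1/M). -/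
set_option maxHeartbeats 1000000

/-- Helper: if `b*q ≤ n` and `n ≤ b*p` with `b,n` positive, then `1/p ≤ b/n ≤ 1/q` in ℝ. -/
lemma frac_mem_of_nat (b n p q : ℕ) (hb : 0 < b) (hn : 0 < n)
    (hp : 0 < p) (hq : 0 < q) (h1 : b * q ≤ n) (h2 : n ≤ b * p) :
    1 / (p : ℝ) ≤ (b : ℝ) / n ∧ (b : ℝ) / n ≤ 1 / q := by
  have hnR : (0:ℝ) < n := by exact_mod_cast hn
  have hpR : (0:ℝ) < p := by exact_mod_cast hp
  have hqR : (0:ℝ) < q := by exact_mod_cast hq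
  constructor
  · rw [div_le_div_iff₀ hpR hnR]
    have : (n:ℝ) ≤ (b:ℝ) * p := by exact_mod_cast h2
    linarith
  · rw [div_le_div_iff₀ hnR hqR]
    have : (b:ℝ) * q ≤ n := by exact_mod_cast h1
    linarith

lemma nat_lt_succ_div_mul (n b : ℕ) (hb : 0 < b) : n < (n / b + 1) * b := by
  have h := Nat.div_add_mod n b
  have h2 := Nat.mod_lt n hb
  calc n = b * (n / b) + n % b := h.symm
    _ < b * (n / b) + b := Nat.add_lt_add_left h2 _
    _ = (n / b + 1) * b := by ring

/-- Suppose `(γ,θ,ν)` satisfies `0 < γ < 1`, `0 ≤ θ < 1/2`,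
`0 < ν ≤ 1-θ`, with additionally `1-γ ≥ θ+ν` and `1/2 ≤ γ`, and let
`M = ⌊1/(1-γ)⌋`.  Then condition (A1) — for every integer `n ≥ M+1` there is a positive
integer `a` with `a/n ∈ [θ, θ+ν]` — holds if and only if `[θ, θ+ν]` contains one of the
intervals `[1/(2M+1), 1/(M+1)]`, `[1/(2M), 2/(2M+1)]`, or `[1/(2M-1), 1/M]` (the last
case possible only if `1-γ = θ+ν = 1/M`). -/
theorem A1_iff_contains_interval (γ θ ν : ℝ) (M : ℕ) (hM : M = ⌊1 / (1 - γ)⌋₊)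
    (hγ0 : 0 < γ) (hγ1 : γ < 1) (hγ : 1 / 2 ≤ γ)
    (hθ0 : 0 ≤ θ) (hθ2 : θ < 1 / 2) (hν0 : 0 < ν) (hν1 : ν ≤ 1 - θ)
    (hQ : θ + ν ≤ 1 - γ) :
    (∀ n : ℕ, M + 1 ≤ n →
        ∃ a : ℕ, 0 < a ∧ θ ≤ (a : ℝ) / n ∧ (a : ℝ) / n ≤ θ + ν)
    ↔ (Set.Icc (1 / (2 * (M : ℝ) + 1)) (1 / ((M : ℝ) + 1)) ⊆ Set.Icc θ (θ + ν) ∨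
       Set.Icc (1 / (2 * (M : ℝ))) (2 / (2 * (M : ℝ) + 1)) ⊆ Set.Icc θ (θ + ν) ∨
       (1 - γ = θ + ν ∧ θ + ν = 1 / (M : ℝ) ∧
         Set.Icc (1 / (2 * (M : ℝ) - 1)) (1 / (M : ℝ)) ⊆ Set.Icc θ (θ + ν))) := by
  have hγ' : (0:ℝ) < 1 - γ := by linarith
  have hM2 : 2 ≤ M := by
    rw [hM]
    apply Nat.le_floor
    rw [le_div_iff₀ hγ']
    push_cast
    linarith
  have hMR : (2:ℝ) ≤ (M:ℝ) := by exact_mod_cast hM2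
  have hMpos : (0:ℝ) < M := by linarith
  have hMle : (M:ℝ) ≤ 1 / (1 - γ) := by
    rw [hM]; exact Nat.floor_le (by positivity)
  have h1M : 1 - γ ≤ 1 / (M:ℝ) := by
    rw [le_div_iff₀ hMpos]
    rw [le_div_iff₀ hγ'] at hMle
    linarith
  have hub : θ + ν ≤ 1 / (M:ℝ) := le_trans hQ h1M
  constructor
  · intro hA1
    -- n = M + 1 forces a = 1
    obtain ⟨a1, ha1pos, ha1l, ha1r⟩ := hA1 (M + 1) le_rfl
    have hcast1 : ((M + 1 : ℕ) : ℝ) = (M:ℝ) + 1 := by push_cast; ring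
    have ha1le : (a1:ℝ) * M ≤ (M:ℝ) + 1 := by
      have h := le_trans ha1r hub
      rw [hcast1, div_le_div_iff₀ (by linarith) hMpos] at h
      linarith
    have ha1eq : a1 = 1 := by
      by_contra h
      have : 2 ≤ a1 := by omega
      have : (2:ℝ) ≤ (a1:ℝ) := by exact_mod_cast this
      nlinarith
    subst ha1eq
    rw [hcast1] at ha1l ha1r
    simp only [Nat.cast_one] at ha1l ha1r
    -- n = 2M + 1 : a = 1 or 2
    obtain ⟨a2, ha2pos, ha2l, ha2r⟩ := hA1 (2 * M + 1) (by omega)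
    have hcast2 : ((2 * M + 1 : ℕ) : ℝ) = 2 * (M:ℝ) + 1 := by push_cast; ring
    have ha2le : (a2:ℝ) * M ≤ 2 * (M:ℝ) + 1 := by
      have h := le_trans ha2r hub
      rw [hcast2, div_le_div_iff₀ (by linarith) hMpos] at h
      linarith
    have ha2eq : a2 = 1 ∨ a2 = 2 := by
      by_contra h
      have : 3 ≤ a2 := by omega
      have : (3:ℝ) ≤ (a2:ℝ) := by exact_mod_cast this
      nlinarith
    rw [hcast2] at ha2l ha2r
    rcases ha2eq with rfl | rfl
    · -- case 1
      left
      simp only [Nat.cast_one] at ha2l ha2r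
      exact Set.Icc_subset_Icc ha2l ha1r
    · -- a2 = 2 : θ ≤ 2/(2M+1) ≤ θ+ν ; look at n = 2M
      simp only [Nat.cast_ofNat] at ha2l ha2r
      obtain ⟨a3, ha3pos, ha3l, ha3r⟩ := hA1 (2 * M) (by omega)
      have hcast3 : ((2 * M : ℕ) : ℝ) = 2 * (M:ℝ) := by push_cast; ring
      have ha3le : (a3:ℝ) * M ≤ 2 * (M:ℝ) := by
        have h := le_trans ha3r hub
        rw [hcast3, div_le_div_iff₀ (by linarith) hMpos] at h
        linarith
      have ha3eq : a3 = 1 ∨ a3 = 2 := by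
        by_contra h
        have : 3 ≤ a3 := by omega
        have : (3:ℝ) ≤ (a3:ℝ) := by exact_mod_cast this
        nlinarith
      rw [hcast3] at ha3l ha3r
      rcases ha3eq with rfl | rfl
      · -- case 2
        right; left
        simp only [Nat.cast_one] at ha3l ha3r
        exact Set.Icc_subset_Icc ha3l ha2r
      · -- a3 = 2 : 1/M ≤ θ+ν, so θ+ν = 1/M = 1-γ ; look at n = 2M-1
        right; right
        simp only [Nat.cast_ofNat] at ha3l ha3r
        have h1Mle : 1 / (M:ℝ) ≤ θ + ν := by
          have he : (2:ℝ) / (2 * (M:ℝ)) = 1 / (M:ℝ) := by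
            have hMne : (M:ℝ) ≠ 0 := ne_of_gt hMpos
            field_simp
          rw [he] at ha3r
          exact ha3r
        have heq2 : θ + ν = 1 / (M:ℝ) := le_antisymm hub h1Mle
        have heq1 : 1 - γ = θ + ν := by
          rw [heq2] at hQ ⊢
          exact le_antisymm h1M hQ
        obtain ⟨a4, ha4pos, ha4l, ha4r⟩ := hA1 (2 * M - 1) (by omega)
        have hcast4 : ((2 * M - 1 : ℕ) : ℝ) = 2 * (M:ℝ) - 1 := by
          have : (2 * M - 1 : ℕ) = 2 * M - 1 := rfl
          push_cast [Nat.cast_sub (by omega : 1 ≤ 2 * M)]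
          ring
        have ha4le : (a4:ℝ) * M ≤ 2 * (M:ℝ) - 1 := by
          have h := le_trans ha4r hub
          rw [hcast4, div_le_div_iff₀ (by linarith) hMpos] at h
          linarith
        have ha4eq : a4 = 1 := by
          by_contra h
          have : 2 ≤ a4 := by omega
          have : (2:ℝ) ≤ (a4:ℝ) := by exact_mod_cast this
          nlinarith
        subst ha4eq
        rw [hcast4] at ha4l ha4r
        simp only [Nat.cast_one] at ha4l ha4r
        exact ⟨heq1, heq2, Set.Icc_subset_Icc ha4l (le_of_eq heq2.symm)⟩
  · rintro (h | h | ⟨heq1, heq2, h⟩) n hn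
    all_goals have hnpos : 0 < n := by omega
    · -- [1/(2M+1), 1/(M+1)] : a = n / (M+1)
      have hsub := (Set.Icc_subset_Icc_iff (show 1 / (2 * (M:ℝ) + 1) ≤ 1 / ((M:ℝ) + 1) by
        rw [div_le_div_iff₀ (by linarith) (by linarith)]; linarith)).mp h
      obtain ⟨hc, hd⟩ := hsub
      set a := n / (M + 1) with ha
      have hapos : 0 < a := Nat.one_le_div_iff (by omega) |>.mpr hn
      have h1 : a * (M + 1) ≤ n := Nat.div_mul_le_self n (M + 1)
      have h2 : n < (a + 1) * (M + 1) := nat_lt_succ_div_mul n (M + 1) (by omega)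
      have h3 : n ≤ a * (2 * M + 1) := by nlinarith [hapos, h1, h2]
      obtain ⟨hl, hr⟩ := frac_mem_of_nat a n (2 * M + 1) (M + 1) hapos hnpos
        (by omega) (by omega) (by omega) h3
      refine ⟨a, hapos, ?_, ?_⟩
      · refine le_trans (le_trans hc ?_) hl
        push_cast; rfl
      · refine le_trans (le_trans hr ?_) hd
        push_cast; rfl
    · -- [1/(2M), 2/(2M+1)]
      have hsub := (Set.Icc_subset_Icc_iff (show 1 / (2 * (M:ℝ)) ≤ 2 / (2 * (M:ℝ) + 1) by
        rw [div_le_div_iff₀ (by linarith) (by linarith)]; linarith)).mp h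
      obtain ⟨hc, hd⟩ := hsub
      by_cases hcase : n ≤ 2 * M
      · -- a = 1
        refine ⟨1, one_pos, ?_, ?_⟩
        · have h1 : (n:ℝ) ≤ 2 * M := by exact_mod_cast hcase
          have : θ ≤ 1 / (n:ℝ) := by
            refine le_trans hc ?_
            rw [div_le_div_iff₀ (by linarith) (by exact_mod_cast hnpos)]
            linarith
          simpa using this
        · have h1 : 2 * M + 1 ≤ 2 * n := by omega
          have h1R : 2 * (M:ℝ) + 1 ≤ 2 * n := by exact_mod_cast h1
          have : (1:ℝ) / n ≤ 2 / (2 * (M:ℝ) + 1) := by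
            rw [div_le_div_iff₀ (by exact_mod_cast hnpos) (by linarith)]
            linarith
          refine le_trans ?_ (le_trans this hd)
          simp
      · -- n ≥ 2M+1, a = 2n/(2M+1)
        set a := 2 * n / (2 * M + 1) with ha
        have hapos2 : 2 ≤ a := Nat.le_div_iff_mul_le (by omega) |>.mpr (by omega)
        have h1 : a * (2 * M + 1) ≤ 2 * n := Nat.div_mul_le_self _ _
        have h2 : 2 * n < (a + 1) * (2 * M + 1) := nat_lt_succ_div_mul (2 * n) (2 * M + 1) (by omega)
        have h3 : n ≤ a * (2 * M) := by nlinarith [hM2, hapos2, h1, h2]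
        -- want: 1/(2M) ≤ a/n ≤ 2/(2M+1)
        have hnR : (0:ℝ) < n := by exact_mod_cast hnpos
        have haR : (2:ℝ) ≤ (a:ℝ) := by exact_mod_cast hapos2
        have h1R : (a:ℝ) * (2 * M + 1) ≤ 2 * n := by exact_mod_cast h1
        have h3R : (n:ℝ) ≤ (a:ℝ) * (2 * M) := by exact_mod_cast h3
        refine ⟨a, by omega, ?_, ?_⟩
        · refine le_trans hc ?_
          rw [div_le_div_iff₀ (by linarith) hnR]
          linarith
        · refine le_trans ?_ hd
          rw [div_le_div_iff₀ hnR (by linarith)]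
          linarith
    · -- [1/(2M-1), 1/M] : a = n / M
      have hsub := (Set.Icc_subset_Icc_iff (show 1 / (2 * (M:ℝ) - 1) ≤ 1 / (M:ℝ) by
        rw [div_le_div_iff₀ (by linarith) (by linarith)]; linarith)).mp h
      obtain ⟨hc, hd⟩ := hsub
      set a := n / M with ha
      have hapos : 0 < a := Nat.one_le_div_iff (by omega) |>.mpr (by omega)
      have h1 : a * M ≤ n := Nat.div_mul_le_self _ _
      have h2 : n < (a + 1) * M := nat_lt_succ_div_mul n M (by omega)
      have hnR : (0:ℝ) < n := by exact_mod_cast hnpos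
      have hapR : (1:ℝ) ≤ (a:ℝ) := by exact_mod_cast hapos
      have h1R : (a:ℝ) * M ≤ n := by exact_mod_cast h1
      have h2R : (n:ℝ) + 1 ≤ ((a:ℝ) + 1) * M := by exact_mod_cast h2
      have h3R : (n:ℝ) ≤ (a:ℝ) * (2 * M - 1) := by
        nlinarith [mul_nonneg (sub_nonneg.mpr hapR) (sub_nonneg.mpr (show (1:ℝ) ≤ M by linarith))]
      refine ⟨a, hapos, ?_, ?_⟩
      · refine le_trans hc ?_
        rw [div_le_div_iff₀ (by linarith) hnR]
        linarith
      · refine le_trans ?_ hd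
        rw [div_le_div_iff₀ hnR hMpos]
        linarith
end

section
/- Let (γ,θ,ν) with 1/2 < γ < 1, 0 < θ < 1/2, 0 < ν, satisfying: (A1) for all integers n ≥ ⌊1/(1-γ)⌋+1 there exists a positive integer a with a/n ∈ [θ,θ+ν]; and (A2) for some positive integer h, h(1-γ) ∈ [θ,θ+ν] ∪ [1-θ-ν, 1-θ]. Assume additionally that (γ,θ,ν) lies in the admissible set 𝒬 (i.e., 1/2 ≤ γ ≤ 1-θ-ν or 1-θ ≤ γ < 1, and 0 ≤ θ < θ+ν ≤ 1/2 or θ+ν = 1-θ). Then 1-γ ≤ 3ν, with equality only for the triples (γ,θ,ν) = (3/5, 1/5, 2/15) and (7/10, 2/5, 1/10). -/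
set_option maxHeartbeats 4000000 in
/-- Let `(γ,θ,ν)` with `1/2 < γ < 1`, `0 < θ < 1/2`, `0 < ν`, lying in
the admissible set `𝒬` and satisfying (A1) and (A2).  Then `1-γ ≤ 3ν`, with equality
only for the triples `(3/5, 1/5, 2/15)` and `(7/10, 2/5, 1/10)`. -/
theorem gamma_nu_inequality (γ θ ν : ℝ)
    (hγ : 1 / 2 < γ) (hγ1 : γ < 1) (hθ : 0 < θ) (hθ2 : θ < 1 / 2) (hν : 0 < ν)
    (hQ1 : (1 / 2 ≤ γ ∧ γ ≤ 1 - θ - ν) ∨ (1 - θ ≤ γ ∧ γ < 1))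
    (hQ2 : (0 ≤ θ ∧ θ < θ + ν ∧ θ + ν ≤ 1 / 2) ∨ (0 ≤ θ ∧ θ < 1 / 2 ∧ θ + ν = 1 - θ))
    (hA1 : ∀ n : ℕ, ⌊1 / (1 - γ)⌋₊ + 1 ≤ n →
        ∃ a : ℕ, 0 < a ∧ θ ≤ (a : ℝ) / n ∧ (a : ℝ) / n ≤ θ + ν)
    (hA2 : ∃ h : ℕ, 0 < h ∧
        (h : ℝ) * (1 - γ) ∈ Set.Icc θ (θ + ν) ∪ Set.Icc (1 - θ - ν) (1 - θ)) :
    1 - γ ≤ 3 * ν ∧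
      (1 - γ = 3 * ν →
        (γ = 3 / 5 ∧ θ = 1 / 5 ∧ ν = 2 / 15) ∨
        (γ = 7 / 10 ∧ θ = 2 / 5 ∧ ν = 1 / 10)) := by
  suffices key : 3 * ν ≤ 1 - γ →
      (1 - γ = 3 * ν ∧ ((γ = 3 / 5 ∧ θ = 1 / 5 ∧ ν = 2 / 15) ∨
        (γ = 7 / 10 ∧ θ = 2 / 5 ∧ ν = 1 / 10))) by
    constructor
    · by_contra hlt
      push_neg at hlt
      obtain ⟨he, -⟩ := key (by linarith)
      linarith
    · intro he
      exact (key (le_of_eq he.symm)).2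
  intro hk
  have hδ0 : (0:ℝ) < 1 - γ := by linarith
  have hδh : 1 - γ < 1/2 := by linarith
  set M := ⌊1/(1-γ)⌋₊ with hMdef
  have hM2 : 2 ≤ M := by
    apply Nat.le_floor
    rw [le_div_iff₀ hδ0]
    push_cast
    linarith
  have hMle : (M:ℝ) * (1 - γ) ≤ 1 := by
    have h := Nat.floor_le (le_of_lt (show (0:ℝ) < 1/(1-γ) by positivity))
    rw [← hMdef] at h
    have := mul_le_mul_of_nonneg_right h (le_of_lt hδ0)
    calc (M:ℝ) * (1-γ) ≤ (1/(1-γ)) * (1-γ) := this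
      _ = 1 := by field_simp
  have hMgt : 1 < ((M:ℝ)+1) * (1-γ) := by
    have h := Nat.lt_floor_add_one (1/(1-γ))
    rw [← hMdef] at h
    have := (div_lt_iff₀ hδ0).mp h
    linarith
  have hmR : (2:ℝ) ≤ (M:ℝ) := by exact_mod_cast hM2
  have hν3 : 3*(M:ℝ)*ν ≤ 1 := by nlinarith
  have getA : ∀ n : ℕ, M + 1 ≤ n → ∃ a : ℕ, 1 ≤ a ∧ θ * n ≤ a ∧ (a:ℝ) ≤ (θ+ν) * n := by
    intro n hn
    obtain ⟨a, ha, h1, h2⟩ := hA1 n hn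
    have hn0 : (0:ℝ) < n := by
      have : 0 < n := by omega
      exact_mod_cast this
    exact ⟨a, ha, (le_div_iff₀ hn0).mp h1, (div_le_iff₀ hn0).mp h2⟩
  rcases hQ2 with ⟨-, -, hhalf⟩ | ⟨-, -, hsym⟩
  · -- θ + ν ≤ 1/2
    rcases hQ1 with ⟨-, hQA⟩ | ⟨hQB, -⟩
    · -- Case A : θ + ν ≤ 1 - γ
      have hsum : θ + ν ≤ 1 - γ := by linarith
      obtain ⟨a1, ha1pos, ha11, ha12⟩ := getA (M+1) le_rfl
      push_cast at ha11 ha12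
      have ha1eq : a1 = 1 := by
        by_contra hne
        have h2a : (2:ℝ) ≤ a1 := by exact_mod_cast (by omega : 2 ≤ a1)
        have p1 : (θ+ν)*((M:ℝ)+1) ≤ (1-γ)*((M:ℝ)+1) :=
          mul_le_mul_of_nonneg_right hsum (by linarith)
        linarith
      subst ha1eq
      norm_num at ha11 ha12
      -- ha11 : θ*(M+1) ≤ 1, ha12 : 1 ≤ (θ+ν)*(M+1)
      obtain ⟨a2, ha2pos, h21, h22⟩ := getA (2*M+1) (by omega)
      push_cast at h21 h22
      have ha2le : a2 ≤ 2 := by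
        by_contra hne
        have h3a : (3:ℝ) ≤ a2 := by exact_mod_cast (by omega : 3 ≤ a2)
        have p1 : (θ+ν)*(2*(M:ℝ)+1) ≤ (1-γ)*(2*(M:ℝ)+1) :=
          mul_le_mul_of_nonneg_right hsum (by linarith)
        have p2 : (3:ℝ) ≤ (1-γ)*(2*(M:ℝ)+1) := by linarith
        linarith [mul_le_mul_of_nonneg_left p2 (by linarith : (0:ℝ) ≤ (M:ℝ)),
          mul_le_mul_of_nonneg_right hMle (by linarith : (0:ℝ) ≤ 2*(M:ℝ)+1)]
      rcases (by omega : a2 = 1 ∨ a2 = 2) with he2 | he2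
      · -- a2 = 1
        subst he2
        norm_num at h21 h22
        by_cases hM4 : 4 ≤ M
        · exfalso
          have hm4 : (4:ℝ) ≤ (M:ℝ) := by exact_mod_cast hM4
          have p1 : (2*(M:ℝ)+1) ≤ (θ+ν)*((M:ℝ)+1)*(2*(M:ℝ)+1) := by
            linarith [mul_le_mul_of_nonneg_right ha12 (by linarith : (0:ℝ) ≤ 2*(M:ℝ)+1)]
          have p2 : θ*(2*(M:ℝ)+1)*((M:ℝ)+1) ≤ ((M:ℝ)+1) := by
            linarith [mul_le_mul_of_nonneg_right h21 (by linarith : (0:ℝ) ≤ (M:ℝ)+1)]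
          have p3 : (M:ℝ) ≤ ν*(((M:ℝ)+1)*(2*(M:ℝ)+1)) := by linarith
          have p4 : 3*(M:ℝ)*(ν*(((M:ℝ)+1)*(2*(M:ℝ)+1))) ≤ ((M:ℝ)+1)*(2*(M:ℝ)+1) := by
            linarith [mul_le_mul_of_nonneg_right hν3 (by positivity : (0:ℝ) ≤ ((M:ℝ)+1)*(2*(M:ℝ)+1))]
          linarith [mul_le_mul_of_nonneg_left p3 (by linarith : (0:ℝ) ≤ 3*(M:ℝ)), p4,
            mul_nonneg (by linarith : (0:ℝ) ≤ (M:ℝ)-4) (by linarith : (0:ℝ) ≤ (M:ℝ))]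
        · obtain ⟨j, hjpos, hjmem⟩ := hA2
          have hjR : (1:ℝ) ≤ (j:ℝ) := by exact_mod_cast hjpos
          have hj1 : (1-γ) ≤ (j:ℝ)*(1-γ) := by
            linarith [mul_le_mul_of_nonneg_right hjR (le_of_lt hδ0)]
          rcases (by omega : M = 2 ∨ M = 3) with hMv | hMv
          · -- M = 2
            have hm : (M:ℝ) = 2 := by rw [hMv]; norm_num
            rw [hm] at h21 ha11 ha12 hMle hMgt
            norm_num at h21 ha11 ha12 hMle hMgt
            rcases hjmem with ⟨hx1, hx2⟩ | ⟨hx1, hx2⟩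
            · exfalso
              have heq : θ + ν = 1 - γ := le_antisymm hsum (by linarith)
              linarith
            · have hjle : j ≤ 2 := by
                by_contra hc
                have h3j : (3:ℝ) ≤ (j:ℝ) := by exact_mod_cast (by omega : 3 ≤ j)
                linarith [mul_le_mul_of_nonneg_right h3j (le_of_lt hδ0)]
              rcases (by omega : j = 1 ∨ j = 2) with hjv | hjv
              · exfalso
                rw [hjv] at hx1 hx2; norm_num at hx1 hx2
                linarith
              · rw [hjv] at hx1 hx2; norm_num at hx1 hx2
                have hθe : θ = 1/5 := le_antisymm (by linarith) (by linarith)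
                refine ⟨by linarith, Or.inl ⟨by linarith, hθe, by linarith⟩⟩
          · -- M = 3
            exfalso
            have hm : (M:ℝ) = 3 := by rw [hMv]; norm_num
            rw [hm] at h21 ha11 ha12 hMle hMgt
            norm_num at h21 ha11 ha12 hMle hMgt
            rcases hjmem with ⟨hx1, hx2⟩ | ⟨hx1, hx2⟩
            · have heq : θ + ν = 1 - γ := le_antisymm hsum (by linarith)
              linarith
            · have hjle : j ≤ 3 := by
                by_contra hc
                have h4j : (4:ℝ) ≤ (j:ℝ) := by exact_mod_cast (by omega : 4 ≤ j)
                linarith [mul_le_mul_of_nonneg_right h4j (le_of_lt hδ0)]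
              rcases (by omega : j = 1 ∨ j = 2 ∨ j = 3) with hjv | hjv | hjv
              · rw [hjv] at hx1 hx2; norm_num at hx1 hx2
                linarith
              · rw [hjv] at hx1 hx2; norm_num at hx1 hx2
                have h1 : θ + ν = 1 - γ := le_antisymm hsum (by linarith)
                linarith
              · rw [hjv] at hx1 hx2; norm_num at hx1 hx2
                linarith
      · -- a2 = 2
        subst he2
        norm_num at h21 h22
        exfalso
        rcases (by omega : M = 2 ∨ 3 ≤ M) with hMv | hM3
        · -- M = 2
          have hm : (M:ℝ) = 2 := by rw [hMv]; norm_num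
          rw [hm] at h21 h22 ha11 ha12 hMle hMgt
          norm_num at h21 h22 ha11 ha12 hMle hMgt
          -- h22 : 2 ≤ (θ+ν)*5
          obtain ⟨b, hbpos, hb1, hb2⟩ := getA 4 (by omega)
          push_cast at hb1 hb2
          have hbe : b = 1 := by
            by_contra hc
            have h2b : (2:ℝ) ≤ (b:ℝ) := by exact_mod_cast (by omega : 2 ≤ b)
            linarith
          subst hbe
          norm_num at hb1
          obtain ⟨j, hjpos, hjmem⟩ := hA2
          have hjR : (1:ℝ) ≤ (j:ℝ) := by exact_mod_cast hjpos
          have hj1 : (1-γ) ≤ (j:ℝ)*(1-γ) := by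
            linarith [mul_le_mul_of_nonneg_right hjR (le_of_lt hδ0)]
          rcases hjmem with ⟨hx1, hx2⟩ | ⟨hx1, hx2⟩
          · have heq : θ + ν = 1 - γ := le_antisymm hsum (by linarith)
            linarith
          · have hjle : j ≤ 2 := by
              by_contra hc
              have h3j : (3:ℝ) ≤ (j:ℝ) := by exact_mod_cast (by omega : 3 ≤ j)
              linarith [mul_le_mul_of_nonneg_right h3j (le_of_lt hδ0)]
            rcases (by omega : j = 1 ∨ j = 2) with hjv | hjv
            · rw [hjv] at hx1 hx2; norm_num at hx1 hx2
              linarith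
            · rw [hjv] at hx1 hx2; norm_num at hx1 hx2
              linarith
        · -- 3 ≤ M
          have hm3 : (3:ℝ) ≤ (M:ℝ) := by exact_mod_cast hM3
          obtain ⟨b, hbpos, hb1, hb2⟩ := getA (2*M) (by omega)
          push_cast at hb1 hb2
          have hble : b ≤ 2 := by
            by_contra hc
            have h3b : (3:ℝ) ≤ (b:ℝ) := by exact_mod_cast (by omega : 3 ≤ b)
            linarith [mul_le_mul_of_nonneg_right hsum (by linarith : (0:ℝ) ≤ 2*(M:ℝ))]
          rcases (by omega : b = 1 ∨ b = 2) with hbv | hbv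
          · subst hbv
            norm_num at hb1
            have p1 : 2*(2*(M:ℝ)) ≤ (θ+ν)*(2*(M:ℝ)+1)*(2*(M:ℝ)) := by
              linarith [mul_le_mul_of_nonneg_right h22 (by linarith : (0:ℝ) ≤ 2*(M:ℝ))]
            have p2 : θ*(2*(M:ℝ))*(2*(M:ℝ)+1) ≤ 2*(M:ℝ)+1 := by
              linarith [mul_le_mul_of_nonneg_right hb1 (by linarith : (0:ℝ) ≤ 2*(M:ℝ)+1)]
            have p3 : 2*(M:ℝ) - 1 ≤ ν*((2*(M:ℝ))*(2*(M:ℝ)+1)) := by linarith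
            have p4 : 3*(M:ℝ)*(ν*((2*(M:ℝ))*(2*(M:ℝ)+1))) ≤ (2*(M:ℝ))*(2*(M:ℝ)+1) := by
              linarith [mul_le_mul_of_nonneg_right hν3 (by positivity : (0:ℝ) ≤ (2*(M:ℝ))*(2*(M:ℝ)+1))]
            linarith [mul_le_mul_of_nonneg_left p3 (by linarith : (0:ℝ) ≤ 3*(M:ℝ)), p4,
              mul_nonneg (by linarith : (0:ℝ) ≤ (M:ℝ)-3) (by linarith : (0:ℝ) ≤ (M:ℝ))]
          · subst hbv
            norm_num at hb1 hb2
            have e2 : (M:ℝ)*(1-γ) = 1 := by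
              refine le_antisymm hMle ?_
              linarith [mul_le_mul_of_nonneg_right hsum (by linarith : (0:ℝ) ≤ 2*(M:ℝ))]
            have e1 : θ + ν = 1 - γ := by
              refine le_antisymm hsum ?_
              by_contra hcc
              push_neg at hcc
              linarith [mul_lt_mul_of_pos_right hcc (by linarith : (0:ℝ) < 2*(M:ℝ))]
            obtain ⟨c, hcpos, hc1, hc2⟩ := getA (2*M-1) (by omega)
            have hcst : ((2*M-1:ℕ):ℝ) = 2*(M:ℝ) - 1 := by
              have h1 : (1:ℕ) ≤ 2*M := by omega
              push_cast [h1]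
              ring
            rw [hcst] at hc1 hc2
            have hce : c = 1 := by
              by_contra hcc
              have h2c : (2:ℝ) ≤ (c:ℝ) := by exact_mod_cast (by omega : 2 ≤ c)
              have heq : (θ+ν)*(2*(M:ℝ)-1) = (1-γ)*(2*(M:ℝ)-1) := by rw [e1]
              linarith
            subst hce
            norm_num at hc1
            have hθ23 : 2*(1-γ) ≤ 3*θ := by linarith
            linarith [mul_le_mul_of_nonneg_left hθ23 (by linarith : (0:ℝ) ≤ (M:ℝ)),
              mul_nonneg (le_of_lt hθ) (by linarith : (0:ℝ) ≤ (M:ℝ)-3)]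
    · -- Case B : 1 - γ ≤ θ
      have hθδ : 1 - γ ≤ θ := by linarith
      rcases (by omega : M = 2 ∨ M = 3 ∨ M = 4 ∨ 5 ≤ M) with hMv | hMv | hMv | hM5
      · -- M = 2
        exfalso
        have hm : (M:ℝ) = 2 := by rw [hMv]; norm_num
        rw [hm] at hMle hMgt
        obtain ⟨b, hbpos, hb1, hb2⟩ := getA 3 (by omega)
        push_cast at hb1 hb2
        have hbe : b = 1 := by
          by_contra hc
          have h2b : (2:ℝ) ≤ (b:ℝ) := by exact_mod_cast (by omega : 2 ≤ b)
          linarith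
        subst hbe
        norm_num at hb1
        linarith
      · -- M = 3
        have hm : (M:ℝ) = 3 := by rw [hMv]; norm_num
        rw [hm] at hMle hMgt hν3
        norm_num at hν3
        obtain ⟨b, hbpos, hb1, hb2⟩ := getA 4 (by omega)
        push_cast at hb1 hb2
        have hbe : b = 2 := by
          have hu : b ≤ 2 := by
            by_contra hc
            have h3b : (3:ℝ) ≤ (b:ℝ) := by exact_mod_cast (by omega : 3 ≤ b)
            linarith
          have hl : 2 ≤ b := by
            by_contra hc
            have h1b : (b:ℝ) ≤ 1 := by exact_mod_cast (by omega : b ≤ 1)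
            linarith
          omega
        subst hbe
        norm_num at hb1 hb2
        have hE : θ + ν = 1/2 := le_antisymm hhalf (by linarith)
        obtain ⟨c, hcpos, hc1, hc2⟩ := getA 5 (by omega)
        push_cast at hc1 hc2
        have hce : c = 2 := by
          have hu : c ≤ 2 := by
            by_contra hc'
            have h3c : (3:ℝ) ≤ (c:ℝ) := by exact_mod_cast (by omega : 3 ≤ c)
            linarith
          have hl : 2 ≤ c := by
            by_contra hc'
            have h1c : (c:ℝ) ≤ 1 := by exact_mod_cast (by omega : c ≤ 1)
            linarith
          omega
        subst hce
        norm_num at hc1 hc2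
        obtain ⟨j, hjpos, hjmem⟩ := hA2
        have hlo : 1/2 - ν ≤ (j:ℝ)*(1-γ) ∧ (j:ℝ)*(1-γ) ≤ 1/2 + ν := by
          rcases hjmem with ⟨hx1, hx2⟩ | ⟨hx1, hx2⟩ <;> exact ⟨by linarith, by linarith⟩
        obtain ⟨hlo1, hlo2⟩ := hlo
        rcases (by omega : j = 1 ∨ j = 2 ∨ 3 ≤ j) with hjv | hjv | hjv
        · exfalso
          rw [hjv] at hlo1; norm_num at hlo1
          linarith
        · rw [hjv] at hlo1 hlo2; norm_num at hlo1 hlo2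
          have hγe : γ = 7/10 := by linarith
          refine ⟨by linarith, Or.inr ⟨hγe, by linarith, by linarith⟩⟩
        · exfalso
          have h3j : (3:ℝ) ≤ (j:ℝ) := by exact_mod_cast hjv
          linarith [mul_le_mul_of_nonneg_right h3j (le_of_lt hδ0)]
      · -- M = 4
        exfalso
        have hm : (M:ℝ) = 4 := by rw [hMv]; norm_num
        rw [hm] at hMle hMgt hν3
        norm_num at hν3
        obtain ⟨b, hbpos, hb1, hb2⟩ := getA 5 (by omega)
        push_cast at hb1 hb2
        have hbe : b = 2 := by
          have hu : b ≤ 2 := by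
            by_contra hc
            have h3b : (3:ℝ) ≤ (b:ℝ) := by exact_mod_cast (by omega : 3 ≤ b)
            linarith
          have hl : 2 ≤ b := by
            by_contra hc
            have h1b : (b:ℝ) ≤ 1 := by exact_mod_cast (by omega : b ≤ 1)
            linarith
          omega
        subst hbe
        norm_num at hb1 hb2
        obtain ⟨c, hcpos, hc1, hc2⟩ := getA 6 (by omega)
        push_cast at hc1 hc2
        have hce : c = 2 := by
          have hu : c ≤ 3 := by
            by_contra hc'
            have h4c : (4:ℝ) ≤ (c:ℝ) := by exact_mod_cast (by omega : 4 ≤ c)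
            linarith
          have hl : 2 ≤ c := by
            by_contra hc'
            have h1c : (c:ℝ) ≤ 1 := by exact_mod_cast (by omega : c ≤ 1)
            linarith
          have hne : c ≠ 3 := by
            intro he
            rw [he] at hc2
            norm_num at hc2
            linarith
          omega
        subst hce
        norm_num at hc1 hc2
        obtain ⟨d, hdpos, hd1, hd2⟩ := getA 7 (by omega)
        push_cast at hd1 hd2
        have hdu : d ≤ 2 := by
          by_contra hc'
          have h3d : (3:ℝ) ≤ (d:ℝ) := by exact_mod_cast (by omega : 3 ≤ d)
          linarith
        have hdl : 3 ≤ d := by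
          by_contra hc'
          have h2d : (d:ℝ) ≤ 2 := by exact_mod_cast (by omega : d ≤ 2)
          linarith
        omega
      · -- 5 ≤ M : chain argument
        exfalso
        have hm5 : (5:ℝ) ≤ (M:ℝ) := by exact_mod_cast hM5
        obtain ⟨a, hapos, haA, haB⟩ := getA (M+1) le_rfl
        push_cast at haA haB
        have ha2 : 2 ≤ a := by
          by_contra hc
          have h1a : (a:ℝ) ≤ 1 := by exact_mod_cast (by omega : a ≤ 1)
          have hp : ((M:ℝ)+1)*(1-γ) ≤ θ*((M:ℝ)+1) := by
            linarith [mul_le_mul_of_nonneg_right hθδ (by linarith : (0:ℝ) ≤ (M:ℝ)+1)]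
          linarith
        have haR : (2:ℝ) ≤ (a:ℝ) := by exact_mod_cast ha2
        have haMR : 2*(a:ℝ) ≤ (M:ℝ)+1 := by
          linarith [mul_le_mul_of_nonneg_right hhalf (by linarith : (0:ℝ) ≤ (M:ℝ)+1)]
        set N := 6*(M+1)/5 + 2 with hNdef
        have hN1 : 6*M + 12 ≤ 5*N := by omega
        have hN2 : 5*N ≤ 6*M + 16 := by omega
        have hNM : M + 1 ≤ N := by omega
        have chain : ∀ n : ℕ, M+1 ≤ n → n ≤ N →
            ∀ b : ℕ, θ*(n:ℝ) ≤ b → (b:ℝ) ≤ (θ+ν)*n → b = a := by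
          intro n hn
          induction n, hn using Nat.le_induction with
          | base =>
            intro _ b hb1 hb2
            push_cast at hb1 hb2
            have hd1 : (b:ℝ) - a ≤ ν*((M:ℝ)+1) := by linarith
            have hd2 : (a:ℝ) - b ≤ ν*((M:ℝ)+1) := by linarith
            have hs : ν*((M:ℝ)+1) < 1 := by
              linarith [mul_pos hν (by linarith : (0:ℝ) < 2*(M:ℝ)-1)]
            have e1 : (b:ℝ) < (a:ℝ) + 1 := by linarith
            have e2 : (a:ℝ) < (b:ℝ) + 1 := by linarith
            have f1 : b < a + 1 := by exact_mod_cast e1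
            have f2 : a < b + 1 := by exact_mod_cast e2
            omega
          | succ n hn ih =>
            intro hN' b hb1 hb2
            obtain ⟨c, hcpos, hc1, hc2⟩ := getA n hn
            have hceq : c = a := ih (by omega) c hc1 hc2
            rw [hceq] at hc1 hc2
            push_cast at hb1 hb2
            have hnR : (M:ℝ)+1 ≤ (n:ℝ) := by exact_mod_cast hn
            have hxn : 5*n ≤ 6*M + 11 := by omega
            have hnN : 5*(n:ℝ) ≤ 6*(M:ℝ) + 11 := by exact_mod_cast hxn
            have t0 : (0:ℝ) < (n:ℝ) := by
              have : (0:ℕ) < n := by omega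
              exact_mod_cast this
            have q1 : (a:ℝ)*((n:ℝ)+1) - (b:ℝ)*n ≤ ν*((n:ℝ)*((n:ℝ)+1)) := by
              linarith [mul_le_mul_of_nonneg_right hc2 (by linarith : (0:ℝ) ≤ (n:ℝ)+1),
                mul_le_mul_of_nonneg_right hb1 t0.le]
            have q2 : (b:ℝ)*n - (a:ℝ)*((n:ℝ)+1) ≤ ν*((n:ℝ)*((n:ℝ)+1)) := by
              linarith [mul_le_mul_of_nonneg_right hb2 t0.le,
                mul_le_mul_of_nonneg_right hc1 (by linarith : (0:ℝ) ≤ (n:ℝ)+1)]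
            have r3 : 3*(M:ℝ)*(ν*((n:ℝ)*((n:ℝ)+1))) ≤ (n:ℝ)*((n:ℝ)+1) := by
              linarith [mul_le_mul_of_nonneg_right hν3
                (by positivity : (0:ℝ) ≤ (n:ℝ)*((n:ℝ)+1))]
            have hu : (0:ℝ) ≤ (n:ℝ) - ((M:ℝ)+1) := by linarith
            have hv : (0:ℝ) ≤ 6*(M:ℝ) + 11 - 5*(n:ℝ) := by linarith
            have hw : (0:ℝ) ≤ (M:ℝ) - 5 := by linarith
            rcases (by omega : b + 1 ≤ a ∨ b = a ∨ b = a + 1 ∨ a + 2 ≤ b) with hc | hc | hc | hc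
            · exfalso
              have hba : (b:ℝ) + 1 ≤ (a:ℝ) := by exact_mod_cast hc
              have r1 : (n:ℝ) + 2 ≤ ν*((n:ℝ)*((n:ℝ)+1)) := by
                linarith [mul_nonneg (by linarith : (0:ℝ) ≤ (a:ℝ) - b - 1) t0.le]
              have r2 : 3*(M:ℝ)*((n:ℝ)+2) ≤ 3*(M:ℝ)*(ν*((n:ℝ)*((n:ℝ)+1))) :=
                mul_le_mul_of_nonneg_left r1 (by linarith)
              linarith [r2, r3, mul_le_mul_of_nonneg_right hnN t0.le,
                mul_nonneg hw t0.le]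
            · exact hc
            · exfalso
              have hba : (b:ℝ) = (a:ℝ) + 1 := by exact_mod_cast hc
              rw [hba] at q2
              have r0 : (n:ℝ) - a ≤ ν*((n:ℝ)*((n:ℝ)+1)) := by linarith
              have hf : 2*(n:ℝ)*((n:ℝ)+1) < 3*(M:ℝ)*(2*(n:ℝ) - (M:ℝ) - 1) := by
                linarith [mul_nonneg hu hv, mul_nonneg hu hw, sq_nonneg ((M:ℝ) - 5)]
              have r4 : 3*(M:ℝ)*((n:ℝ) - a) ≤ (n:ℝ)*((n:ℝ)+1) := by
                linarith [mul_le_mul_of_nonneg_left r0 (by linarith : (0:ℝ) ≤ 3*(M:ℝ)), r3]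
              linarith [hf, r4, mul_le_mul_of_nonneg_left haMR (by linarith : (0:ℝ) ≤ 3*(M:ℝ))]
            · exfalso
              have hba : (a:ℝ) + 2 ≤ (b:ℝ) := by exact_mod_cast hc
              have r0 : 2*(n:ℝ) - a ≤ ν*((n:ℝ)*((n:ℝ)+1)) := by
                linarith [mul_nonneg (by linarith : (0:ℝ) ≤ (b:ℝ) - a - 2) t0.le]
              have hg : 2*(n:ℝ)*((n:ℝ)+1) < 3*(M:ℝ)*(4*(n:ℝ) - (M:ℝ) - 1) := by
                linarith [mul_nonneg hu hv, mul_nonneg hu hw, sq_nonneg ((M:ℝ) - 5), hu]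
              have r4 : 3*(M:ℝ)*(2*(n:ℝ) - a) ≤ (n:ℝ)*((n:ℝ)+1) := by
                linarith [mul_le_mul_of_nonneg_left r0 (by linarith : (0:ℝ) ≤ 3*(M:ℝ)), r3]
              linarith [hg, r4, mul_le_mul_of_nonneg_left haMR (by linarith : (0:ℝ) ≤ 3*(M:ℝ))]
        obtain ⟨b, hbpos, hb1, hb2⟩ := getA N hNM
        have hbeq : b = a := chain N hNM le_rfl b hb1 hb2
        rw [hbeq] at hb1
        have hNR : 6*(M:ℝ)+12 ≤ 5*(N:ℝ) := by exact_mod_cast hN1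
        have hN0 : (0:ℝ) < (N:ℝ) := by
          have : (0:ℕ) < N := by omega
          exact_mod_cast this
        have s1 : (a:ℝ)*((N:ℝ) - ((M:ℝ)+1)) ≤ ν*(((M:ℝ)+1)*(N:ℝ)) := by
          linarith [mul_le_mul_of_nonneg_right haB hN0.le,
            mul_le_mul_of_nonneg_right hb1 (by linarith : (0:ℝ) ≤ (M:ℝ)+1)]
        have s2 : 2*((N:ℝ) - ((M:ℝ)+1)) ≤ (a:ℝ)*((N:ℝ) - ((M:ℝ)+1)) := by
          have hge : (0:ℝ) ≤ (N:ℝ) - ((M:ℝ)+1) := by linarith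
          exact mul_le_mul_of_nonneg_right haR hge
        have s3 : 3*(M:ℝ)*(ν*(((M:ℝ)+1)*(N:ℝ))) ≤ ((M:ℝ)+1)*(N:ℝ) := by
          linarith [mul_le_mul_of_nonneg_right hν3
            (by positivity : (0:ℝ) ≤ ((M:ℝ)+1)*(N:ℝ))]
        linarith [mul_le_mul_of_nonneg_left s1 (by linarith : (0:ℝ) ≤ 3*(M:ℝ)),
          mul_le_mul_of_nonneg_left s2 (by linarith : (0:ℝ) ≤ 3*(M:ℝ)), s3,
          mul_le_mul_of_nonneg_left hNR (by linarith : (0:ℝ) ≤ 5*(M:ℝ)-1)]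
  · -- symmetric case θ + ν = 1 - θ : contradiction
    exfalso
    set n₀ := if M % 2 = 0 then M + 1 else M + 2 with hn₀
    have hodd : n₀ % 2 = 1 := by rw [hn₀]; split <;> omega
    have hge : M + 1 ≤ n₀ := by rw [hn₀]; split <;> omega
    have hle : n₀ ≤ M + 2 := by rw [hn₀]; split <;> omega
    obtain ⟨a, ha, h1, h2⟩ := getA n₀ hge
    have hn0R : (0:ℝ) < n₀ := by
      have : 0 < n₀ := by omega
      exact_mod_cast this
    have hνeq : ν = 1 - 2*θ := by linarith
    have hν1 : 1 ≤ ν * n₀ := by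
      rw [hνeq]
      rcases le_or_gt (2*a) n₀ with hc | hc
      · have h2a : 2*a + 1 ≤ n₀ := by omega
        have hR : (2*(a:ℝ)+1) ≤ n₀ := by exact_mod_cast h2a
        nlinarith [h1]
      · have h2a : n₀ + 1 ≤ 2*a := by omega
        have hR : ((n₀:ℝ) + 1) ≤ 2*a := by exact_mod_cast h2a
        have hprod : (θ+ν) * (n₀:ℝ) = (1-θ) * n₀ := by rw [hsym]
        nlinarith [h2]
    have hcast : (n₀:ℝ) ≤ (M:ℝ) + 2 := by exact_mod_cast hle
    have h3 : (3:ℝ) ≤ (1-γ) * n₀ := by nlinarith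
    nlinarith [mul_le_mul_of_nonneg_left h3 (by linarith : (0:ℝ) ≤ (M:ℝ)),
      mul_le_mul_of_nonneg_right hMle (le_of_lt hn0R)]
end

section
/- Suppose P = (γ,θ,ν) ∈ 𝒬 with ν = 1/2 - θ (i.e., θ+ν = 1/2) and condition (A1) holds. Let M = ⌊1/(1-γ)⌋. Then ν ≥ 1/(2M+2) if M is even, and ν ≥ 1/(2M+4) if M is odd. -/
/-! With an odd denominator `n` no fraction equals `1/2`, so the largest fraction `a/n ≤ 1/2` is
`(n-1)/(2n) = 1/2 - 1/(2n)`. Hence (A1) at an odd `n > M` forces `θ ≤ 1/2 - 1/(2n)`, i.e.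
`ν ≥ 1/(2n)`; the smallest odd `n > M` is `M + 1` for even `M` and `M + 2` for odd `M`. -/

theorem Nat.div_le_half_sub_of_odd {a n : ℕ} (hn : Odd n) (h : (a : ℝ) / n ≤ 1 / 2) :
    (a : ℝ) / n ≤ 1 / 2 - 1 / (2 * n) := by
  have hn₀ : (0 : ℝ) < n := by exact_mod_cast hn.pos
  have h2a : 2 * a ≤ n := by
    rw [div_le_div_iff₀ hn₀ two_pos] at h
    exact_mod_cast (by push_cast; linarith : ((2 * a : ℕ) : ℝ) ≤ n)
  have h2a' : ((2 * a + 1 : ℕ) : ℝ) ≤ n := by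
    obtain ⟨k, rfl⟩ := hn
    exact_mod_cast (by omega : 2 * a + 1 ≤ 2 * k + 1)
  rw [show (1 : ℝ) / 2 - 1 / (2 * n) = (n - 1) / (2 * n) by field_simp,
    div_le_div_iff₀ hn₀ (by positivity)]
  push_cast at h2a'
  nlinarith

theorem nu_lower_bound_half_general (θ ν : ℝ) (M : ℕ)
    (hν : ν = 1 / 2 - θ)
    (hA1 : ∀ n : ℕ, M + 1 ≤ n →
        ∃ a : ℕ, 0 < a ∧ θ ≤ (a : ℝ) / n ∧ (a : ℝ) / n ≤ θ + ν) :
    (Even M → 1 / (2 * (M : ℝ) + 2) ≤ ν) ∧ (Odd M → 1 / (2 * (M : ℝ) + 4) ≤ ν) := by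
  have bound : ∀ n : ℕ, Odd n → M + 1 ≤ n → 1 / (2 * (n : ℝ)) ≤ ν := by
    intro n hn hMn
    obtain ⟨a, -, hθ, ha⟩ := hA1 n hMn
    rw [hν] at ha ⊢
    linarith [Nat.div_le_half_sub_of_odd hn (by linarith : (a : ℝ) / n ≤ 1 / 2)]
  constructor
  · intro hM
    convert bound (M + 1) hM.add_one le_rfl using 2
    push_cast
    ring
  · intro hM
    convert bound (M + 2) (hM.add_even even_two) (by omega) using 2
    push_cast
    ring

/-- Suppose `P = (γ,θ,ν) ∈ 𝒬` with `ν = 1/2 - θ` (i.e. `θ+ν = 1/2`)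
and condition (A1) holds, and let `M = ⌊1/(1-γ)⌋`.  Then `ν ≥ 1/(2M+2)` if `M` is even,
and `ν ≥ 1/(2M+4)` if `M` is odd. -/
theorem nu_lower_bound_half (γ θ ν : ℝ) (M : ℕ) (hM : M = ⌊1 / (1 - γ)⌋₊)
    (hQ1 : (1 / 2 ≤ γ ∧ γ ≤ 1 - θ - ν) ∨ (1 - θ ≤ γ ∧ γ < 1))
    (hQ2 : (0 ≤ θ ∧ θ < θ + ν ∧ θ + ν ≤ 1 / 2) ∨ (0 ≤ θ ∧ θ < 1 / 2 ∧ θ + ν = 1 - θ))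
    (hν : ν = 1 / 2 - θ)
    (hA1 : ∀ n : ℕ, M + 1 ≤ n →
        ∃ a : ℕ, 0 < a ∧ θ ≤ (a : ℝ) / n ∧ (a : ℝ) / n ≤ θ + ν) :
    (Even M → 1 / (2 * (M : ℝ) + 2) ≤ ν) ∧ (Odd M → 1 / (2 * (M : ℝ) + 4) ≤ ν) :=
  nu_lower_bound_half_general θ ν M hν hA1
end

section
/- Let P = (γ,θ,ν) ∈ 𝒬_1, and suppose ℛ(P) is nonempty. Then ℛ(P) contains a vector x which satisfies: all components of x lie in (0, 1-γ); any two distinct components x_i ≠ x_j satisfy x_i + x_j ≥ 1-γ; and for all i ≠ j, either x_i = x_j or |x_i - x_j| > ν. (That is, the 'symmetrized, coagulated' normal form exists within ℛ(P).) -/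
/-!
Two moves keep a vector in `ℛ` and strictly decrease a natural-number measure.

*Coagulation.* If two components sum to less than `1 - γ`, merge them into one: every proper
subsum of the merged vector is a proper subsum of the old one. This shortens the vector.

*Averaging.* If two values `a < b` of the vector satisfy `b - a ≤ ν`, replace every component
equal to `a` or `b` by their mean `μ`. A proper subsum using `c` of these components becomes
`Σ' + c μ`, which lies between two terms of the progression `Σ' + c a + s (b - a)`, `s` ranging
over the feasible numbers of `b`'s among `c` of them; these terms are old proper subsums, and a
progression of step `b - a ≤ ν` that avoids `[θ, θ + ν]` lies entirely on one side of it. This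
lowers the number of distinct values, and since `μ ≥ a` it keeps `x i + x j ≥ 1 - γ` for
distinct values.
-/

open Finset Function
open scoped BigOperators

lemma notMem_Icc_of_steps {θ ν C d T : ℝ} {s₁ s₂ : ℕ} (hs : s₁ ≤ s₂) (hdν : d ≤ ν)
    (h : ∀ s, s₁ ≤ s → s ≤ s₂ → C + s * d ∉ Set.Icc θ (θ + ν))
    (hT₁ : C + s₁ * d ≤ T) (hT₂ : T ≤ C + s₂ * d) : T ∉ Set.Icc θ (θ + ν) := by
  rintro ⟨hθT, hTν⟩
  have below : ∀ s, s₁ ≤ s → s ≤ s₂ → C + s * d < θ := by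
    intro s hs₁
    induction s, hs₁ using Nat.le_induction with
    | base =>
      intro hs₂
      by_contra! hle
      exact h s₁ le_rfl hs₂ ⟨hle, by linarith⟩
    | succ s hs₁ ih =>
      intro hs₂
      have hprev := ih (by omega)
      by_contra! hle
      exact h (s + 1) (by omega) hs₂ ⟨hle, by push_cast; linarith⟩
  linarith [below s₂ hs le_rfl]

variable {γ θ ν : ℝ} {n : ℕ}

lemma MemR.sum_notMem_of_card {y : Fin n → ℝ} (hy : MemR γ θ ν y) {B : Finset (Fin n)}
    (h₀ : 0 < #B) (hn : #B < n) : ∑ i ∈ B, y i ∉ Set.Icc θ (θ + ν) :=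
  hy.2.2 B (card_pos.1 h₀) ((card_lt_iff_ne_univ B).1 (by simpa using hn))

lemma MemR.sum_fiberwise {m : ℕ} {y : Fin n → ℝ} (hy : MemR γ θ ν y) {f : Fin n → Fin m}
    (hf : Surjective f) (hlt : ∀ k, ∑ i with f i = k, y i < 1 - γ) :
    MemR γ θ ν (fun k ↦ ∑ i with f i = k, y i) := by
  obtain ⟨hbounds, hsum, hsub⟩ := hy
  refine ⟨fun k ↦ ⟨?_, hlt k⟩, by rw [Finset.sum_fiberwise, hsum], fun A hA hAu ↦ ?_⟩
  · obtain ⟨i, rfl⟩ := hf k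
    exact sum_pos (fun j _ ↦ (hbounds j).1) ⟨i, by simp⟩
  · rw [sum_fiberwise_eq_sum_filter]
    obtain ⟨k, hk⟩ := hA
    obtain ⟨l, hl⟩ : ∃ l, l ∉ A := by simpa [eq_univ_iff_forall] using hAu
    obtain ⟨i, rfl⟩ := hf k
    obtain ⟨j, rfl⟩ := hf l
    exact hsub _ ⟨i, by simpa using hk⟩ fun h ↦ hl (by simpa using (eq_univ_iff_forall.1 h j))

lemma MemR.exists_shorter_of_add_lt {y : Fin n → ℝ} (hy : MemR γ θ ν y) {i j : Fin n}
    (hij : i ≠ j) (hlt : y i + y j < 1 - γ) : ∃ m < n, ∃ z : Fin m → ℝ, MemR γ θ ν z := by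
  let g : Fin n → {k // k ≠ j} := fun l ↦ if h : l = j then ⟨i, hij⟩ else ⟨l, h⟩
  have hfiber : ∀ k, ∑ l with g l = k, y l < 1 - γ := by
    rintro ⟨k, hk⟩
    by_cases hki : k = i
    · subst hki
      rwa [show ({l | g l = ⟨k, hk⟩} : Finset _) = {k, j} by
        ext l; by_cases hl : l = j <;> simp [g, hl], sum_pair hij]
    · rw [show ({l | g l = ⟨k, hk⟩} : Finset _) = {k} by
        ext l; by_cases hl : l = j <;> simp [g, hl, Ne.symm hki, Ne.symm hk], sum_singleton]
      exact (hy.1 k).2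
  let e := Fintype.equivFin {k // k ≠ j}
  refine ⟨_, by simpa using Fintype.card_subtype_lt (p := (· ≠ j)) (not_not.2 rfl), _,
    hy.sum_fiberwise (f := e ∘ g) (e.surjective.comp fun k ↦ ⟨k, dif_neg k.2⟩) ?_⟩
  intro q
  simpa [← e.eq_symm_apply] using hfiber (e.symm q)

theorem MemR.exists_coagulated {y : Fin n → ℝ} (hy : MemR γ θ ν y) :
    ∃ (m : ℕ) (x : Fin m → ℝ), MemR γ θ ν x ∧ ∀ i j, i ≠ j → 1 - γ ≤ x i + x j := by
  induction n using Nat.strong_induction_on with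
  | _ n ih =>
    by_cases h : ∀ i j, i ≠ j → 1 - γ ≤ y i + y j
    · exact ⟨n, y, hy, h⟩
    push Not at h
    obtain ⟨i, j, hij, hlt⟩ := h
    obtain ⟨m, hm, z, hz⟩ := hy.exists_shorter_of_add_lt hij hlt
    exact ih m hm hz

section Average

variable {ι : Type*}

lemma filter_not_eq_filter_of_two_values {S : Finset ι} {y : ι → ℝ} {a b : ℝ}
    (hS : ∀ k ∈ S, y k = a ∨ y k = b) (hab : a ≠ b) : {k ∈ S | ¬y k = a} = {k ∈ S | y k = b} :=
  filter_congr fun k hk ↦ by grind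

lemma card_filter_add_card_filter_of_two_values {S : Finset ι} {y : ι → ℝ} {a b : ℝ}
    (hS : ∀ k ∈ S, y k = a ∨ y k = b) (hab : a ≠ b) :
    #{k ∈ S | y k = a} + #{k ∈ S | y k = b} = #S := by
  rw [← filter_not_eq_filter_of_two_values hS hab, card_filter_add_card_filter_not]

lemma sum_eq_of_two_values {S : Finset ι} {y : ι → ℝ} {a b : ℝ}
    (hS : ∀ k ∈ S, y k = a ∨ y k = b) (hab : a ≠ b) :
    ∑ k ∈ S, y k = #{k ∈ S | y k = a} * a + #{k ∈ S | y k = b} * b := by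
  rw [← sum_filter_add_sum_filter_not S (fun k ↦ y k = a),
    filter_not_eq_filter_of_two_values hS hab, sum_congr rfl fun k hk ↦ (mem_filter.1 hk).2,
    sum_congr rfl fun k hk ↦ (mem_filter.1 hk).2, sum_const, sum_const, nsmul_eq_mul,
    nsmul_eq_mul]

variable [DecidableEq ι]

noncomputable def averageOn (S : Finset ι) (y : ι → ℝ) : ι → ℝ :=
  S.piecewise (fun _ ↦ 𝔼 i ∈ S, y i) y

lemma averageOn_mem_Ioo {S : Finset ι} {y : ι → ℝ} {lo hi : ℝ} (h : ∀ k, y k ∈ Set.Ioo lo hi)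
    (k : ι) : averageOn S y k ∈ Set.Ioo lo hi := by
  by_cases hk : k ∈ S
  · rw [averageOn, piecewise_eq_of_mem _ _ _ hk]
    exact ⟨lt_expect (fun i _ ↦ (h i).1.le) ⟨k, hk, (h k).1⟩,
      expect_lt (fun i _ ↦ (h i).2.le) ⟨k, hk, (h k).2⟩⟩
  · rw [averageOn, piecewise_eq_of_notMem _ _ _ hk]
    exact h k

lemma sum_averageOn (S A : Finset ι) (y : ι → ℝ) :
    ∑ k ∈ A, averageOn S y k = ∑ k ∈ A \ S, y k + #(A ∩ S) * 𝔼 i ∈ S, y i := by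
  rw [averageOn, sum_piecewise, sum_const, nsmul_eq_mul, add_comm]

lemma sum_averageOn_univ [Fintype ι] (S : Finset ι) (y : ι → ℝ) :
    ∑ k, averageOn S y k = ∑ k, y k := by
  rw [sum_averageOn, univ_inter, card_mul_expect, sum_sdiff (subset_univ S)]

lemma exists_subset_sum_eq_of_le_card {S : Finset ι} {y : ι → ℝ} {a b : ℝ} (hab : a ≠ b)
    {i j : ℕ} (hi : i ≤ #{k ∈ S | y k = a}) (hj : j ≤ #{k ∈ S | y k = b}) :
    ∃ R ⊆ S, #R = i + j ∧ ∑ k ∈ R, y k = i * a + j * b := by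
  obtain ⟨Ra, hRa, rfl⟩ := exists_subset_card_eq hi
  obtain ⟨Rb, hRb, rfl⟩ := exists_subset_card_eq hj
  have ha : ∀ k ∈ Ra, y k = a := fun k hk ↦ (mem_filter.1 (hRa hk)).2
  have hb : ∀ k ∈ Rb, y k = b := fun k hk ↦ (mem_filter.1 (hRb hk)).2
  have hdisj : Disjoint Ra Rb :=
    disjoint_left.2 fun k hka hkb ↦ hab ((ha k hka).symm.trans (hb k hkb))
  refine ⟨Ra ∪ Rb, union_subset (hRa.trans (filter_subset _ _)) (hRb.trans (filter_subset _ _)),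
    card_union_of_disjoint hdisj, ?_⟩
  rw [sum_union hdisj, sum_congr rfl ha, sum_congr rfl hb]
  simp

lemma averageOn_add_ge {y : ι → ℝ} {S : Finset ι} {L : ℝ}
    (hy : ∀ i j, y i ≠ y j → L ≤ y i + y j) (hS : ∀ k ∈ S, ∀ l ∉ S, y k ≠ y l) (i j : ι)
    (hij : averageOn S y i ≠ averageOn S y j) : L ≤ averageOn S y i + averageOn S y j := by
  have hmean : ∀ k ∈ S, ∀ l ∉ S, L ≤ (𝔼 i ∈ S, y i) + y l := fun k hk l hl ↦
    sub_le_iff_le_add.1 <| le_expect ⟨k, hk⟩ fun m hm ↦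
      sub_le_iff_le_add.2 (hy m l (hS m hm l hl))
  by_cases hi : i ∈ S <;> by_cases hj : j ∈ S <;>
    simp only [averageOn, piecewise_eq_of_mem, piecewise_eq_of_notMem, hi, hj,
      not_false_eq_true] at hij ⊢
  · exact absurd rfl hij
  · exact hmean i hi j hj
  · exact add_comm (y i) _ ▸ hmean j hj i hi
  · exact hy i j hij

lemma card_image_averageOn_lt [Fintype ι] {y : ι → ℝ} {i j : ι} (hij : y i ≠ y j) :
    #(univ.image (averageOn {k | y k = y i ∨ y k = y j} y)) < #(univ.image y) := by
  set S : Finset ι := {k | y k = y i ∨ y k = y j}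
  have hsub : univ.image (averageOn S y) ⊆ insert (𝔼 k ∈ S, y k) (univ.image y \ {y i, y j}) := by
    intro v hv
    obtain ⟨k, -, rfl⟩ := mem_image.1 hv
    by_cases hk : y k = y i ∨ y k = y j
    · simp [S, averageOn, hk]
    · simp only [not_or] at hk
      simp [S, averageOn, hk]
  have hpair : {y i, y j} ⊆ univ.image y := by simp [insert_subset_iff]
  have htwo : 2 ≤ #(univ.image y) := card_pair hij ▸ card_le_card hpair
  calc #(univ.image (averageOn S y))
      ≤ #(insert (𝔼 k ∈ S, y k) (univ.image y \ {y i, y j})) := card_le_card hsub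
    _ ≤ #(univ.image y \ {y i, y j}) + 1 := card_insert_le _ _
    _ = #(univ.image y) - 2 + 1 := by rw [card_sdiff_of_subset hpair, card_pair hij]
    _ < #(univ.image y) := by omega

end Average

lemma MemR.sum_sdiff_add_mix_notMem {y : Fin n → ℝ} (hy : MemR γ θ ν y) {S A : Finset (Fin n)}
    {a b : ℝ} (hab : a ≠ b) (hA : A.Nonempty) (hAu : A ≠ univ) {s : ℕ}
    (ha : #(A ∩ S) ≤ #{k ∈ S | y k = a} + s) (hb : s ≤ #{k ∈ S | y k = b})
    (hs : s ≤ #(A ∩ S)) :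
    ∑ k ∈ A \ S, y k + #(A ∩ S) * a + s * (b - a) ∉ Set.Icc θ (θ + ν) := by
  obtain ⟨R, hRS, hRcard, hRsum⟩ :=
    exists_subset_sum_eq_of_le_card (S := S) hab (i := #(A ∩ S) - s) (j := s) (by omega) hb
  have hdisj : Disjoint (A \ S) R := disjoint_of_subset_right hRS sdiff_disjoint
  have hcard : #(A \ S ∪ R) = #A := by
    rw [card_union_of_disjoint hdisj, hRcard, Nat.sub_add_cancel hs, add_comm,
      card_inter_add_card_sdiff]
  have := hy.sum_notMem_of_card (B := A \ S ∪ R) (hcard ▸ card_pos.2 hA)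
    (hcard ▸ by simpa using (card_lt_iff_ne_univ A).2 hAu)
  rw [sum_union hdisj, hRsum, Nat.cast_sub hs] at this
  convert this using 2
  ring

theorem MemR.averageOn {y : Fin n → ℝ} (hy : MemR γ θ ν y) {S : Finset (Fin n)} {a b : ℝ}
    (hS : ∀ k ∈ S, y k = a ∨ y k = b) (hab : a < b) (hbaν : b - a ≤ ν) :
    MemR γ θ ν (averageOn S y) := by
  refine ⟨averageOn_mem_Ioo hy.1, by rw [sum_averageOn_univ, hy.2.1], fun A hA hAu ↦ ?_⟩
  have hcardS := card_filter_add_card_filter_of_two_values hS hab.ne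
  have hsumS := sum_eq_of_two_values hS hab.ne
  rw [sum_averageOn]
  set p := #{k ∈ S | y k = a}
  set q := #{k ∈ S | y k = b}
  set c := #(A ∩ S)
  have hc : c ≤ p + q := hcardS ▸ card_le_card inter_subset_right
  have hmix : ∀ s, c - min c p ≤ s → s ≤ min c q →
      ∑ k ∈ A \ S, y k + c * a + s * (b - a) ∉ Set.Icc θ (θ + ν) := fun s hs₁ hs₂ ↦
    hy.sum_sdiff_add_mix_notMem hab.ne hA hAu (by omega) (by omega) (by omega)
  obtain hc0 | hcpos := Nat.eq_zero_or_pos c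
  · simpa [hc0] using hmix 0 (by omega) (by omega)
  -- the averaged subsum is the mix with `t = c q / (p + q)` values `b`, between two actual mixes
  have hpq : (0 : ℝ) < p + q := by exact_mod_cast hcpos.trans_le hc
  have hc' : (c : ℝ) ≤ p + q := by exact_mod_cast hc
  set t : ℝ := c * q / (p + q)
  have hT : ∑ k ∈ A \ S, y k + c * 𝔼 i ∈ S, y i = ∑ k ∈ A \ S, y k + c * a + t * (b - a) := by
    rw [expect_eq_sum_div_card, hsumS, ← hcardS]
    simp only [t]
    push_cast
    field_simp
    ring
  have ht₁ : ((c - min c p : ℕ) : ℝ) ≤ t := by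
    have : (c - p : ℝ) ≤ t := (le_div_iff₀ hpq).2 (by nlinarith)
    rw [Nat.cast_sub (min_le_left _ _), Nat.cast_min, sub_le_comm, le_min_iff]
    exact ⟨sub_le_self _ (by positivity), by linarith⟩
  have ht₂ : t ≤ (min c q : ℕ) := by
    rw [Nat.cast_min, le_min_iff]
    exact ⟨(div_le_iff₀ hpq).2 (by nlinarith), (div_le_iff₀ hpq).2 (by nlinarith)⟩
  have hba : 0 ≤ b - a := by linarith
  rw [hT]
  exact notMem_Icc_of_steps (by omega) hbaν hmix (by gcongr) (by gcongr)

theorem MemR.exists_normalForm {y : Fin n → ℝ} (hy : MemR γ θ ν y)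
    (hpair : ∀ i j, y i ≠ y j → 1 - γ ≤ y i + y j) :
    ∃ x : Fin n → ℝ, MemR γ θ ν x ∧ (∀ i j, x i ≠ x j → 1 - γ ≤ x i + x j) ∧
      (∀ i j, i ≠ j → x i = x j ∨ ν < |x i - x j|) := by
  induction hk : #(univ.image y) using Nat.strong_induction_on generalizing y with
  | _ k ih =>
    by_cases hgap : ∀ i j, i ≠ j → y i = y j ∨ ν < |y i - y j|
    · exact ⟨y, hy, hpair, hgap⟩
    push Not at hgap
    obtain ⟨i, j, -, hne, hle⟩ := hgap
    wlog hlt : y i < y j generalizing i j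
    · exact this j i hne.symm (abs_sub_comm (y i) (y j) ▸ hle)
        (lt_of_le_of_ne (not_lt.1 hlt) hne.symm)
    have hS : ∀ k ∈ ({k | y k = y i ∨ y k = y j} : Finset _), y k = y i ∨ y k = y j := by
      simp
    refine ih _ (hk ▸ card_image_averageOn_lt hne)
      (hy.averageOn hS hlt (by rwa [abs_sub_comm, abs_of_pos (sub_pos.2 hlt)] at hle))
      (averageOn_add_ge hpair ?_) rfl
    intro k hk l hl
    simp only [mem_filter, mem_univ, true_and] at hk hl
    grind

theorem R_normal_form_general (γ θ ν : ℝ)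
    (hne : ∃ (n : ℕ) (y : Fin n → ℝ), MemR γ θ ν y) :
    ∃ (n : ℕ) (x : Fin n → ℝ), MemR γ θ ν x ∧
      (∀ i j, x i ≠ x j → 1 - γ ≤ x i + x j) ∧
      (∀ i j, i ≠ j → x i = x j ∨ ν < |x i - x j|) := by
  obtain ⟨n, y, hy⟩ := hne
  obtain ⟨m, x, hx, hpair⟩ := hy.exists_coagulated
  exact ⟨m, hx.exists_normalForm fun i j hij ↦ hpair i j (ne_of_apply_ne x hij)⟩

/-- Let `P = (γ,θ,ν) ∈ 𝒬₁` and suppose `ℛ(P)` is nonempty.  Then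
`ℛ(P)` contains a vector `x` in "normal form": all components in `(0, 1-γ)` (part of
membership), any two distinct components `x i ≠ x j` satisfy `x i + x j ≥ 1-γ`, and for
all `i ≠ j` either `x i = x j` or `|x i - x j| > ν`. -/
theorem R_normal_form (γ θ ν : ℝ)
    (hQ1 : (1 / 2 ≤ γ ∧ γ < 1 - θ - ν) ∨ (1 - θ ≤ γ ∧ γ < 1))
    (hθ : 0 ≤ θ) (hθ2 : θ < 1 / 2)
    (hν : (0 ≤ ν ∧ ν < 1 / 2 - θ) ∨ ν = 1 - 2 * θ)
    (hne : ∃ (n : ℕ) (y : Fin n → ℝ), MemR γ θ ν y) :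
    ∃ (n : ℕ) (x : Fin n → ℝ), MemR γ θ ν x ∧
      (∀ i j, x i ≠ x j → 1 - γ ≤ x i + x j) ∧
      (∀ i j, i ≠ j → x i = x j ∨ ν < |x i - x j|) :=
  R_normal_form_general γ θ ν hne
end

section
/- Let T = T_{2,k}(P_ε; 𝒲) be the polytope of vectors x ∈ ℛ_cl(P_ε) ∩ ℝ^k with |x_W| ≤ θ+ε for all W ∈ 𝒲 and |x_W| ≥ θ+ν-ε for all W ⊆ [k] with W ∉ 𝒲. Suppose x ∈ T and J ⊆ [k] is nonempty such that the numbers x_j for j ∈ J all lie in an open interval of length ν-2ε. Define x' by x'_i = x_i for i ∉ J and x'_i = (1/|J|)·Σ_{j∈J} x_j for i ∈ J. Then x' ∈ T. -/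
open scoped Classical

/-- Membership in `ℛ_cl(P_ε)` for `P_ε = (γ-ε, θ+ε, ν-2ε)`: a `k`-dimensional vector with
all components in `[0, 1-γ+ε]`, components summing to `1`, and no subsum in the open
interval `(θ+ε, θ+ν-ε)`. -/
def MemRcl (γ θ ν ε : ℝ) {k : ℕ} (x : Fin k → ℝ) : Prop :=
  (∀ i, 0 ≤ x i ∧ x i ≤ 1 - γ + ε) ∧ (∑ i, x i = 1) ∧
    ∀ A : Finset (Fin k), (∑ i ∈ A, x i) ∉ Set.Ioo (θ + ε) (θ + ν - ε)

/-- Membership in the polytope `T_{2,k}(P_ε; 𝒲)`: vectors of `ℛ_cl(P_ε) ∩ ℝ^k` with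
`|x_W| ≤ θ+ε` for all `W ∈ 𝒲` and `|x_W| ≥ θ+ν-ε` for all `W ∉ 𝒲`. -/
def MemT (γ θ ν ε : ℝ) {k : ℕ} (𝒲 : Set (Finset (Fin k))) (x : Fin k → ℝ) : Prop :=
  MemRcl γ θ ν ε x ∧
    (∀ W ∈ 𝒲, (∑ i ∈ W, x i) ≤ θ + ε) ∧
    (∀ W : Finset (Fin k), W ∉ 𝒲 → θ + ν - ε ≤ ∑ i ∈ W, x i)

/-- Among the `m`-element subsets of `J` there is one whose `x`-sum is (proportionally)
at least the average, i.e. `m·Σ_J x ≤ |J|·Σ_K x`. -/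
lemma exists_subset_mul_sum_le {k : ℕ} (x : Fin k → ℝ) (J : Finset (Fin k)) (m : ℕ)
    (hm : m ≤ J.card) :
    ∃ K, K ⊆ J ∧ K.card = m ∧
      (m : ℝ) * ∑ j ∈ J, x j ≤ (J.card : ℝ) * ∑ j ∈ K, x j := by
  obtain ⟨K, hKP, hKmax⟩ := Finset.exists_max_image (J.powersetCard m)
    (fun K => ∑ j ∈ K, x j) (Finset.powersetCard_nonempty.2 hm)
  obtain ⟨hKJ, hKm⟩ := Finset.mem_powersetCard.1 hKP
  refine ⟨K, hKJ, hKm, ?_⟩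
  have key : ∀ j ∈ J \ K, ∀ i ∈ K, x j ≤ x i := by
    intro j hj i hi
    have hjK : j ∉ K := (Finset.mem_sdiff.1 hj).2
    have hjJ : j ∈ J := (Finset.mem_sdiff.1 hj).1
    have hje : j ∉ K.erase i := fun h => hjK (Finset.erase_subset _ _ h)
    have hK' : insert j (K.erase i) ∈ J.powersetCard m := by
      rw [Finset.mem_powersetCard]
      constructor
      · intro a ha
        rcases Finset.mem_insert.1 ha with rfl | ha
        · exact hjJ
        · exact hKJ (Finset.erase_subset _ _ ha)
      · rw [Finset.card_insert_of_notMem hje, Finset.card_erase_of_mem hi, hKm]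
        have : 1 ≤ m := by
          rw [← hKm]; exact Finset.card_pos.2 ⟨i, hi⟩
        omega
    have h := hKmax _ hK'
    rw [Finset.sum_insert hje, Finset.sum_erase_eq_sub hi] at h
    linarith
  have h2 : (m : ℝ) * ∑ j ∈ J \ K, x j ≤ ((J \ K).card : ℝ) * ∑ i ∈ K, x i := by
    calc (m : ℝ) * ∑ j ∈ J \ K, x j = ∑ j ∈ J \ K, ∑ _i ∈ K, x j := by
          simp only [Finset.sum_const, hKm, nsmul_eq_mul, Finset.mul_sum]
      _ ≤ ∑ j ∈ J \ K, ∑ i ∈ K, x i :=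
          Finset.sum_le_sum fun j hj => Finset.sum_le_sum fun i hi => key j hj i hi
      _ = ((J \ K).card : ℝ) * ∑ i ∈ K, x i := by
          rw [Finset.sum_const, nsmul_eq_mul]
  have hsplit : ∑ j ∈ J \ K, x j + ∑ j ∈ K, x j = ∑ j ∈ J, x j := Finset.sum_sdiff hKJ
  have hcard : ((J.card : ℝ)) = ((J \ K).card : ℝ) + m := by
    have := Finset.card_sdiff_add_card_eq_card hKJ
    rw [hKm] at this
    exact_mod_cast this.symm
  have e1 : (m : ℝ) * ∑ j ∈ J, x j
      = (m : ℝ) * ∑ j ∈ J \ K, x j + (m : ℝ) * ∑ j ∈ K, x j := by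
    rw [← hsplit]; ring
  have e2 : (J.card : ℝ) * ∑ j ∈ K, x j
      = ((J \ K).card : ℝ) * ∑ j ∈ K, x j + (m : ℝ) * ∑ j ∈ K, x j := by
    rw [hcard]; ring
  linarith

/-- The dual statement: a subset of proportionally small sum. -/
lemma exists_subset_mul_sum_ge {k : ℕ} (x : Fin k → ℝ) (J : Finset (Fin k)) (m : ℕ)
    (hm : m ≤ J.card) :
    ∃ K, K ⊆ J ∧ K.card = m ∧
      (J.card : ℝ) * ∑ j ∈ K, x j ≤ (m : ℝ) * ∑ j ∈ J, x j := by
  obtain ⟨K, h1, h2, h3⟩ := exists_subset_mul_sum_le (fun i => -x i) J m hm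
  refine ⟨K, h1, h2, ?_⟩
  simp only [Finset.sum_neg_distrib, mul_neg, neg_le_neg_iff] at h3
  exact h3

/-- Exchanging elements of `J` one at a time preserves membership in `𝒲`, since
each exchange changes the subsum by less than the width `ν - 2ε` of the forbidden gap. -/
lemma exchange_mem {k : ℕ} (θ ν ε : ℝ) (𝒲 : Set (Finset (Fin k))) (x : Fin k → ℝ)
    (hW : ∀ W ∈ 𝒲, (∑ i ∈ W, x i) ≤ θ + ε)
    (hWc : ∀ W : Finset (Fin k), W ∉ 𝒲 → θ + ν - ε ≤ ∑ i ∈ W, x i)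
    (J : Finset (Fin k)) (t : ℝ)
    (hint : ∀ j ∈ J, t < x j ∧ x j < t + (ν - 2 * ε))
    (D : Finset (Fin k)) (hD : Disjoint D J) :
    ∀ r : ℕ, ∀ K K' : Finset (Fin k), K ⊆ J → K' ⊆ J → K.card = K'.card →
      (K \ K').card = r → ((D ∪ K ∈ 𝒲) ↔ (D ∪ K' ∈ 𝒲)) := by
  have same_side : ∀ B C : Finset (Fin k),
      |(∑ i ∈ B, x i) - ∑ i ∈ C, x i| < ν - 2 * ε → (B ∈ 𝒲 ↔ C ∈ 𝒲) := by
    intro B C h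
    rw [abs_lt] at h
    constructor
    · intro hB
      by_contra hC
      have h1 := hW B hB
      have h2 := hWc C hC
      linarith
    · intro hC
      by_contra hB
      have h1 := hW C hC
      have h2 := hWc B hB
      linarith
  intro r
  induction r using Nat.strong_induction_on with
  | _ r ih =>
    intro K K' hK hK' hcard hr
    rcases Nat.eq_zero_or_pos r with rfl | hrpos
    · have hsub : K ⊆ K' := by
        rw [← Finset.sdiff_eq_empty_iff_subset]
        exact Finset.card_eq_zero.1 hr
      have : K = K' := Finset.eq_of_subset_of_card_le hsub (le_of_eq hcard.symm)
      rw [this]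
    · have hKK' : (K \ K').Nonempty := Finset.card_pos.1 (hr ▸ hrpos)
      have hK'K : (K' \ K).Nonempty := by
        rw [← Finset.card_pos, ← Finset.card_sdiff_comm hcard]
        exact hr ▸ hrpos
      obtain ⟨j, hj⟩ := hKK'
      obtain ⟨j', hj'⟩ := hK'K
      have hjK : j ∈ K := (Finset.mem_sdiff.1 hj).1
      have hjK' : j ∉ K' := (Finset.mem_sdiff.1 hj).2
      have hj'K' : j' ∈ K' := (Finset.mem_sdiff.1 hj').1
      have hj'K : j' ∉ K := (Finset.mem_sdiff.1 hj').2
      have hj'e : j' ∉ K.erase j := fun h => hj'K (Finset.erase_subset _ _ h)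
      set K'' : Finset (Fin k) := insert j' (K.erase j) with hK''def
      have hK''J : K'' ⊆ J := by
        intro a ha
        rcases Finset.mem_insert.1 ha with rfl | ha
        · exact hK' hj'K'
        · exact hK (Finset.erase_subset _ _ ha)
      have hK''card : K''.card = K'.card := by
        rw [hK''def, Finset.card_insert_of_notMem hj'e, Finset.card_erase_of_mem hjK,
          ← hcard]
        have : 1 ≤ K.card := Finset.card_pos.2 ⟨j, hjK⟩
        omega
      have hK''sd : (K'' \ K').card = r - 1 := by
        rw [hK''def, Finset.insert_sdiff_of_mem _ hj'K', Finset.erase_sdiff_comm,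
          Finset.card_erase_of_mem hj, hr]
      have hsumK : ∑ i ∈ D ∪ K, x i = ∑ i ∈ D, x i + ∑ i ∈ K, x i :=
        Finset.sum_union (hD.mono_right hK)
      have hsumK'' : ∑ i ∈ D ∪ K'', x i
          = ∑ i ∈ D, x i + (x j' + (∑ i ∈ K, x i - x j)) := by
        rw [Finset.sum_union (hD.mono_right hK''J), hK''def, Finset.sum_insert hj'e,
          Finset.sum_erase_eq_sub hjK]
      have hxj := hint j (hK hjK)
      have hxj' := hint j' (hK' hj'K')
      have step : (D ∪ K ∈ 𝒲) ↔ (D ∪ K'' ∈ 𝒲) := by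
        apply same_side
        rw [hsumK, hsumK'', abs_lt]
        constructor <;> [linarith [hxj.1, hxj'.2]; linarith [hxj.2, hxj'.1]]
      rw [step]
      exact ih (r - 1) (by omega) K'' K' hK''J hK' hK''card hK''sd

/-- Suppose `x ∈ T = T_{2,k}(P_ε; 𝒲)` and `J ⊆ [k]` is nonempty such
that the numbers `x j`, `j ∈ J`, all lie in an open interval of length `ν - 2ε`.  Then
the vector `x'` obtained by replacing each `x j`, `j ∈ J`, by the average
`(Σ_{j∈J} x j)/|J|` again lies in `T`. -/
theorem averaging_preserves_polytope (γ θ ν ε : ℝ) (k : ℕ)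
    (𝒲 : Set (Finset (Fin k))) (x : Fin k → ℝ)
    (hx : MemT γ θ ν ε 𝒲 x)
    (J : Finset (Fin k)) (hJ : J.Nonempty)
    (hint : ∃ t : ℝ, ∀ j ∈ J, t < x j ∧ x j < t + (ν - 2 * ε)) :
    MemT γ θ ν ε 𝒲
      (fun i => if i ∈ J then (∑ j ∈ J, x j) / (J.card : ℝ) else x i) := by
  obtain ⟨t, hintt⟩ := hint
  obtain ⟨⟨hbd, hsum, _hgap⟩, hW, hWc⟩ := hx
  set x' : Fin k → ℝ := fun i => if i ∈ J then (∑ j ∈ J, x j) / (J.card : ℝ) else x i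
    with hx'def
  set a : ℝ := (∑ j ∈ J, x j) / (J.card : ℝ) with ha
  have hn0 : 0 < J.card := Finset.card_pos.2 hJ
  have hnR : (0 : ℝ) < (J.card : ℝ) := by exact_mod_cast hn0
  -- the sum of `x'` over any set
  have hsum' : ∀ A : Finset (Fin k),
      ∑ i ∈ A, x' i = ∑ i ∈ A \ J, x i + ((A ∩ J).card : ℝ) * a := by
    intro A
    rw [← Finset.sum_inter_add_sum_sdiff A J x']
    have h1 : ∑ i ∈ A ∩ J, x' i = ((A ∩ J).card : ℝ) * a := by
      calc ∑ i ∈ A ∩ J, x' i = ∑ _i ∈ A ∩ J, a := by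
            refine Finset.sum_congr rfl fun i hi => ?_
            simp only [hx'def, ha]
            rw [if_pos (Finset.mem_inter.1 hi).2]
        _ = ((A ∩ J).card : ℝ) * a := by rw [Finset.sum_const, nsmul_eq_mul]
    have h2 : ∑ i ∈ A \ J, x' i = ∑ i ∈ A \ J, x i := by
      refine Finset.sum_congr rfl fun i hi => ?_
      simp only [hx'def]
      rw [if_neg (Finset.mem_sdiff.1 hi).2]
    rw [h1, h2]; ring
  -- the key classification: `x'`-subsums satisfy the same side constraints
  have main : ∀ A : Finset (Fin k),
      (A ∈ 𝒲 → ∑ i ∈ A, x' i ≤ θ + ε) ∧ (A ∉ 𝒲 → θ + ν - ε ≤ ∑ i ∈ A, x' i) := by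
    intro A
    have hm : (A ∩ J).card ≤ J.card :=
      Finset.card_le_card Finset.inter_subset_right
    have hAs := hsum' A
    have hA_decomp : A \ J ∪ (A ∩ J) = A := by
      ext i; simp only [Finset.mem_union, Finset.mem_sdiff, Finset.mem_inter]; tauto
    have hDdisj : Disjoint (A \ J) J := Finset.sdiff_disjoint
    have hexch := exchange_mem θ ν ε 𝒲 x hW hWc J t hintt (A \ J) hDdisj
    constructor
    · intro hA
      obtain ⟨K, hKJ, hKm, hKle⟩ := exists_subset_mul_sum_le x J (A ∩ J).card hm
      have hma : ((A ∩ J).card : ℝ) * a ≤ ∑ j ∈ K, x j := by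
        rw [ha, ← mul_div_assoc, div_le_iff₀ hnR]
        calc ((A ∩ J).card : ℝ) * ∑ j ∈ J, x j ≤ (J.card : ℝ) * ∑ j ∈ K, x j := hKle
          _ = (∑ j ∈ K, x j) * (J.card : ℝ) := mul_comm _ _
      have hmem : A \ J ∪ K ∈ 𝒲 := by
        have h := hexch (((A ∩ J)) \ K).card (A ∩ J) K Finset.inter_subset_right hKJ
          (by rw [hKm]) rfl
        rw [hA_decomp] at h
        exact h.1 hA
      have hle := hW _ hmem
      rw [Finset.sum_union (hDdisj.mono_right hKJ)] at hle
      linarith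
    · intro hA
      obtain ⟨K, hKJ, hKm, hKle⟩ := exists_subset_mul_sum_ge x J (A ∩ J).card hm
      have hma : ∑ j ∈ K, x j ≤ ((A ∩ J).card : ℝ) * a := by
        rw [ha, ← mul_div_assoc, le_div_iff₀ hnR]
        calc (∑ j ∈ K, x j) * (J.card : ℝ) = (J.card : ℝ) * ∑ j ∈ K, x j := mul_comm _ _
          _ ≤ ((A ∩ J).card : ℝ) * ∑ j ∈ J, x j := hKle
      have hmem : A \ J ∪ K ∉ 𝒲 := by
        have h := hexch (((A ∩ J)) \ K).card (A ∩ J) K Finset.inter_subset_right hKJ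
          (by rw [hKm]) rfl
        rw [hA_decomp] at h
        exact fun hc => hA (h.2 hc)
      have hle := hWc _ hmem
      rw [Finset.sum_union (hDdisj.mono_right hKJ)] at hle
      linarith
  refine ⟨⟨?_, ?_, ?_⟩, fun W hWmem => (main W).1 hWmem, fun W hWmem => (main W).2 hWmem⟩
  · -- component bounds
    intro i
    by_cases hi : i ∈ J
    · have h0 : 0 ≤ ∑ j ∈ J, x j := Finset.sum_nonneg fun j _ => (hbd j).1
      have h1 : ∑ j ∈ J, x j ≤ (J.card : ℝ) * (1 - γ + ε) := by
        calc ∑ j ∈ J, x j ≤ ∑ _j ∈ J, (1 - γ + ε) :=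
              Finset.sum_le_sum fun j _ => (hbd j).2
          _ = (J.card : ℝ) * (1 - γ + ε) := by rw [Finset.sum_const, nsmul_eq_mul]
      have haa : 0 ≤ a ∧ a ≤ 1 - γ + ε := by
        constructor
        · rw [ha]; exact div_nonneg h0 hnR.le
        · rw [ha, div_le_iff₀ hnR]
          calc ∑ j ∈ J, x j ≤ (J.card : ℝ) * (1 - γ + ε) := h1
            _ = (1 - γ + ε) * (J.card : ℝ) := mul_comm _ _
      simp only [hx'def]
      rw [if_pos hi]
      exact haa
    · simp only [hx'def]
      rw [if_neg hi]
      exact hbd i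
  · -- total sum is 1
    have h := hsum' Finset.univ
    have hcap : Finset.univ ∩ J = J := by
      ext i; simp
    rw [hcap] at h
    have hna : (J.card : ℝ) * a = ∑ j ∈ J, x j := by
      rw [ha, mul_div_cancel₀ _ hnR.ne']
    show ∑ i, x' i = 1
    rw [h, hna]
    rw [← hsum]
    have : ∑ i ∈ Finset.univ \ J, x i + ∑ i ∈ J, x i = ∑ i, x i :=
      Finset.sum_sdiff (Finset.subset_univ J)
    linarith
  · -- no subsum in the gap
    intro A
    simp only [Set.mem_Ioo, not_and, not_lt]
    intro hgt
    by_cases hA : A ∈ 𝒲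
    · exact absurd ((main A).1 hA) (by linarith)
    · exact (main A).2 hA
end

section
/- For 1/4 < θ ≤ 2/7, the identity ∫∫_{1-3θ ≤ β₁ ≤ β₂ ≤ θ, β₁+β₂ ≥ 1/2} dβ₁dβ₂ / (β₁β₂(1-β₁-β₂)) = ∫_{1-2θ}^{1/2} log(θ/(1-θ-α)) / (α(1-α)) dα holds. -/
/-!
Substitute `α = 1 - β₁ - β₂` for `β₂`: the shear `(x, α) ↦ (x, 1 - x - α)` preserves Lebesgue
measure and turns the integrand into `1 / (x (1 - α - x) α)`. For fixed `α` the region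
becomes the interval `1 - α - θ ≤ x ≤ (1 - α) / 2`, nonempty exactly for `1 - 2θ ≤ α ≤ 1/2`
(the constraint `1 - 3θ ≤ β₁` is implied once `θ ≥ 1/4`), and partial fractions
`1 / (x (s - x)) = (1/x + 1/(s - x)) / s` integrate it to `log (θ / (1 - θ - α)) / (α (1 - α))`.
For `θ < 1/2` the integrand is continuous on the compact region, so Fubini applies.
-/

open MeasureTheory Set Real

theorem integral_inv_mul_sub {a b s : ℝ} (ha : 0 < a) (hab : a ≤ b) (hbs : b < s) :
    ∫ x in a..b, (x * (s - x))⁻¹ = (log b - log (s - b) - (log a - log (s - a))) / s := by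
  have hs : s ≠ 0 := by linarith
  rw [sub_div]
  refine intervalIntegral.integral_eq_sub_of_hasDerivAt
    (f := fun x => (log x - log (s - x)) / s) (fun x hx => ?_) ?_
  · rw [uIcc_of_le hab] at hx
    have hx0 : x ≠ 0 := by linarith [hx.1]
    have hsx : s - x ≠ 0 := by linarith [hx.2]
    have hF : HasDerivAt (fun x => (log x - log (s - x)) / s) ((x⁻¹ - -1 / (s - x)) / s) x :=
      ((hasDerivAt_log hx0).sub (((hasDerivAt_id' x).const_sub s).log hsx)).div_const s
    rwa [show (x⁻¹ - -1 / (s - x)) / s = (x * (s - x))⁻¹ by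
      rw [div_eq_iff hs]; field_simp; ring] at hF
  · refine ContinuousOn.intervalIntegrable (ContinuousOn.inv₀ (by fun_prop) fun x hx => ?_)
    rw [uIcc_of_le hab] at hx
    exact mul_ne_zero (by linarith [hx.1]) (by linarith [hx.2])

theorem measurePreserving_shear (c : ℝ) :
    MeasurePreserving (fun q : ℝ × ℝ => (q.1, c - q.1 - q.2)) := by
  rw [Measure.volume_eq_prod]
  exact (MeasurePreserving.id volume).skew_product (g := fun x α => c - x - α)
    (by fun_prop)
    (.of_forall fun x => (Measure.measurePreserving_sub_left volume (c - x)).map_eq)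

theorem integral_eq_integral_integral_shear {g : ℝ × ℝ → ℝ} (hg : Integrable g) (c : ℝ) :
    ∫ p, g p = ∫ α, ∫ x, g (x, c - x - α) := by
  have hshear := measurePreserving_shear c
  calc ∫ p, g p = ∫ q : ℝ × ℝ, g (q.1, c - q.1 - q.2) := by
        conv_lhs => rw [← hshear.map_eq]
        exact integral_map hshear.measurable.aemeasurable
          (by rw [hshear.map_eq]; exact hg.aestronglyMeasurable)
    _ = ∫ α, ∫ x, g (x, c - x - α) := by
        rw [Measure.volume_eq_prod]
        exact integral_prod_symm _
          (Measure.volume_eq_prod ℝ ℝ ▸ hshear.integrable_comp_of_integrable hg)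

def betaRegion (θ : ℝ) : Set (ℝ × ℝ) :=
  {p | 1 - 3 * θ ≤ p.1 ∧ p.1 ≤ p.2 ∧ p.2 ≤ θ ∧ 1 / 2 ≤ p.1 + p.2}

theorem isClosed_betaRegion (θ : ℝ) : IsClosed (betaRegion θ) :=
  (isClosed_le continuous_const continuous_fst).inter <|
    (isClosed_le continuous_fst continuous_snd).inter <|
    (isClosed_le continuous_snd continuous_const).inter <|
    isClosed_le continuous_const (continuous_fst.add continuous_snd)

theorem isCompact_betaRegion (θ : ℝ) : IsCompact (betaRegion θ) :=
  (isCompact_Icc (a := (1 - 3 * θ, 1 - 3 * θ)) (b := (θ, θ))).of_isClosed_subset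
    (isClosed_betaRegion θ) fun _ ⟨h₁, h₂, h₃, _⟩ =>
      ⟨⟨h₁, by linarith⟩, ⟨by linarith, h₃⟩⟩

theorem integrableOn_betaRegion {θ : ℝ} (hθ : θ < 1 / 2) :
    IntegrableOn (fun p : ℝ × ℝ => (p.1 * p.2 * (1 - p.1 - p.2))⁻¹) (betaRegion θ) := by
  refine ContinuousOn.integrableOn_compact (isCompact_betaRegion θ)
    (ContinuousOn.inv₀ (by fun_prop) fun p ⟨_, h₂, h₃, h₄⟩ => ?_)
  have : 0 < p.1 := by linarith
  exact (mul_pos (mul_pos this (by linarith)) (by linarith)).ne'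

theorem shear_mem_betaRegion_iff {θ : ℝ} (hθ : 1 / 4 ≤ θ) {x α : ℝ} :
    (x, 1 - x - α) ∈ betaRegion θ ↔
      α ∈ Icc (1 - 2 * θ) (1 / 2) ∧ x ∈ Icc (1 - α - θ) ((1 - α) / 2) := by
  simp only [betaRegion, mem_ofPred_eq, mem_Icc]
  constructor
  · rintro ⟨_, h₂, h₃, h₄⟩
    exact ⟨⟨by linarith, by linarith⟩, by linarith, by linarith⟩
  · rintro ⟨⟨_, h₂⟩, h₃, h₄⟩
    exact ⟨by linarith, by linarith, by linarith, by linarith⟩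

theorem integral_indicator_betaRegion_shear {θ : ℝ} (h₁ : 1 / 4 ≤ θ) (h₂ : θ < 1 / 2) (α : ℝ) :
    ∫ x, (betaRegion θ).indicator
        (fun p : ℝ × ℝ => (p.1 * p.2 * (1 - p.1 - p.2))⁻¹) (x, 1 - x - α) =
      (Icc (1 - 2 * θ) (1 / 2)).indicator
        (fun α => log (θ / (1 - θ - α)) / (α * (1 - α))) α := by
  by_cases hα : α ∈ Icc (1 - 2 * θ) (1 / 2)
  · have hslice : (fun x => (betaRegion θ).indicator
        (fun p : ℝ × ℝ => (p.1 * p.2 * (1 - p.1 - p.2))⁻¹) (x, 1 - x - α)) =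
        (Icc (1 - α - θ) ((1 - α) / 2)).indicator (fun x => (x * (1 - α - x))⁻¹ / α) := by
      funext x
      by_cases hx : x ∈ Icc (1 - α - θ) ((1 - α) / 2)
      · rw [indicator_of_mem ((shear_mem_betaRegion_iff h₁).2 ⟨hα, hx⟩), indicator_of_mem hx,
          show 1 - x - (1 - x - α) = α by ring, show 1 - x - α = 1 - α - x by ring, mul_inv,
          div_eq_mul_inv]
      · rw [indicator_of_notMem fun h => hx ((shear_mem_betaRegion_iff h₁).1 h).2,
          indicator_of_notMem hx]
    have hθα : 0 < 1 - α - θ := by linarith [hα.2]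
    rw [hslice, integral_indicator measurableSet_Icc, integral_Icc_eq_integral_Ioc,
      ← intervalIntegral.integral_of_le (by linarith [hα.1]), intervalIntegral.integral_div,
      integral_inv_mul_sub hθα (by linarith [hα.1]) (by linarith [hα.2]), indicator_of_mem hα,
      show 1 - α - (1 - α) / 2 = (1 - α) / 2 by ring, show 1 - α - (1 - α - θ) = θ by ring,
      show 1 - θ - α = 1 - α - θ by ring, log_div (by linarith) hθα.ne']
    field_simp
    ring
  · rw [indicator_of_notMem hα]
    have hout (x : ℝ) : (x, 1 - x - α) ∉ betaRegion θ :=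
      fun h => hα ((shear_mem_betaRegion_iff h₁).1 h).1
    simp only [indicator_of_notMem (hout _), integral_zero]

/-- For `1/4 < θ ≤ 2/7`, the double integral of
`1/(β₁β₂(1-β₁-β₂))` over `{(β₁,β₂) : 1-3θ ≤ β₁ ≤ β₂ ≤ θ, β₁+β₂ ≥ 1/2}` equals
`∫_{1-2θ}^{1/2} log(θ/(1-θ-α))/(α(1-α)) dα`. -/
theorem double_integral_identity (θ : ℝ) (h1 : 1 / 4 < θ) (h2 : θ ≤ 2 / 7) :
    (∫ p in {p : ℝ × ℝ |
        1 - 3 * θ ≤ p.1 ∧ p.1 ≤ p.2 ∧ p.2 ≤ θ ∧ 1 / 2 ≤ p.1 + p.2},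
      (p.1 * p.2 * (1 - p.1 - p.2))⁻¹) =
    ∫ α in (1 - 2 * θ)..(1 / 2), Real.log (θ / (1 - θ - α)) / (α * (1 - α)) := by
  have hθ : θ < 1 / 2 := by linarith
  have hmeas := (isClosed_betaRegion θ).measurableSet
  change ∫ p in betaRegion θ, _ = _
  rw [← integral_indicator hmeas,
    integral_eq_integral_integral_shear
      ((integrableOn_betaRegion hθ).integrable_indicator hmeas) 1,
    intervalIntegral.integral_of_le (by linarith), ← integral_Icc_eq_integral_Ioc,
    ← integral_indicator measurableSet_Icc]
  exact integral_congr_ae (.of_forall (integral_indicator_betaRegion_shear h1.le hθ))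
end
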